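/- arXiv:2507.13596 — 7 statements merged into one kernel-verified Lean document; each statement's English description precedes it below -/
import Mathlib

section
/- The correspondence L ↦ F_L between λ-admissible chains of order ideals of P and nonempty sets F_L is injective: if L and L' are λ-admissible chains with F_L = F_{L'} ≠ ∅, then L = L'. -/
set_option linter.unusedSectionVars false
set_option linter.unusedVariables false



open Classical

variable {P : Type} [Fintype P] [DecidableEq P] [PartialOrder P]

/-- An order ideal (downward-closed subset) of a finite poset. -/
def IsIdeal (I : Finset P) : Prop := ∀ x ∈ I, ∀ y, y ≤ x → y ∈ I

/-- A chain of order ideals of `P` containing `∅` and `P`, viewed as the finite set of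
its members. -/
structure IdealChain (P : Type) [Fintype P] [DecidableEq P] [PartialOrder P] where
  ideals : Finset (Finset P)
  isIdeal : ∀ I ∈ ideals, IsIdeal I
  chain : ∀ I ∈ ideals, ∀ J ∈ ideals, I ⊆ J ∨ J ⊆ I
  empty_mem : ∅ ∈ ideals
  univ_mem : Finset.univ ∈ ideals

/-- `I` and `J` are consecutive members of the chain `L`. -/
def Consec (L : IdealChain P) (I J : Finset P) : Prop :=
  I ∈ L.ideals ∧ J ∈ L.ideals ∧ I ⊂ J ∧ ∀ K ∈ L.ideals, ¬ (I ⊂ K ∧ K ⊂ J)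

/-- λ-admissibility of a chain of ideals: on each consecutive difference the marked
elements have a common λ-value, and these values strictly increase along the chain. -/
def Admissible (Pstar : Finset P) (lam : P → ℝ) (L : IdealChain P) : Prop :=
  (∀ I J, Consec L I J → ∀ a ∈ (J \ I) ∩ Pstar, ∀ b ∈ (J \ I) ∩ Pstar, lam a = lam b) ∧
  (∀ I J I' J', Consec L I J → Consec L I' J' → J ⊆ I' →
    ∀ a ∈ (J \ I) ∩ Pstar, ∀ b ∈ (J' \ I') ∩ Pstar, lam a < lam b)

/-- The set `F_L ⊆ ℝ^P`: functions extending `lam`, constant on consecutive differences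
of `L`, with weakly increasing values along the chain. -/
def FL (Pstar : Finset P) (lam : P → ℝ) (L : IdealChain P) : Set (P → ℝ) :=
  {x | (∀ a ∈ Pstar, x a = lam a) ∧
       (∀ I J, Consec L I J → ∀ p ∈ J \ I, ∀ q ∈ J \ I, x p = x q) ∧
       (∀ I J I' J', Consec L I J → Consec L I' J' → J ⊆ I' →
         ∀ p ∈ J \ I, ∀ q ∈ J' \ I', x p ≤ x q)}

/-- The marked order polytope `O(P, λ)`. -/
def MOP (Pstar : Finset P) (lam : P → ℝ) : Set (P → ℝ) :=
  {x | (∀ p q : P, p ≤ q → x p ≤ x q) ∧ ∀ a ∈ Pstar, x a = lam a}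

/-- `p` is an extremal (minimal or maximal) element of the poset. -/
def IsExtremalElt (p : P) : Prop := (∀ q, q ≤ p → q = p) ∨ (∀ q, p ≤ q → q = p)

/-- `lam` is order-preserving on the marked elements. -/
def LamMono (Pstar : Finset P) (lam : P → ℝ) : Prop :=
  ∀ a ∈ Pstar, ∀ b ∈ Pstar, a ≤ b → lam a ≤ lam b

/- ############ auxiliary development ############ -/

theorem exists_minIdl (M : IdealChain P) (p : P) :
    ∃ J, (J ∈ M.ideals ∧ p ∈ J) ∧ ∀ K ∈ M.ideals, p ∈ K → J ⊆ K := by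
  obtain ⟨J, hJ, hmin⟩ := Finset.exists_min_image (M.ideals.filter (fun J => p ∈ J))
    Finset.card ⟨Finset.univ, by simp [M.univ_mem]⟩
  rw [Finset.mem_filter] at hJ
  refine ⟨J, hJ, fun K hK hpK => ?_⟩
  rcases M.chain J hJ.1 K hK with h | h
  · exact h
  · have hc := hmin K (Finset.mem_filter.mpr ⟨hK, hpK⟩)
    exact le_of_eq (Finset.eq_of_subset_of_card_le h hc).symm

theorem exists_maxIdl (M : IdealChain P) (p : P) :
    ∃ I, (I ∈ M.ideals ∧ p ∉ I) ∧ ∀ K ∈ M.ideals, p ∉ K → K ⊆ I := by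
  obtain ⟨I, hI, hmax⟩ := Finset.exists_max_image (M.ideals.filter (fun J => p ∉ J))
    Finset.card ⟨∅, by simp [M.empty_mem]⟩
  rw [Finset.mem_filter] at hI
  refine ⟨I, hI, fun K hK hpK => ?_⟩
  rcases M.chain K hK I hI.1 with h | h
  · exact h
  · have hc := hmax K (Finset.mem_filter.mpr ⟨hK, hpK⟩)
    exact le_of_eq (Finset.eq_of_subset_of_card_le h hc).symm

noncomputable def minIdl (M : IdealChain P) (p : P) : Finset P := (exists_minIdl M p).choose
noncomputable def maxIdl (M : IdealChain P) (p : P) : Finset P := (exists_maxIdl M p).choose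

theorem minIdl_mem (M : IdealChain P) (p : P) : minIdl M p ∈ M.ideals :=
  (exists_minIdl M p).choose_spec.1.1
theorem mem_minIdl (M : IdealChain P) (p : P) : p ∈ minIdl M p :=
  (exists_minIdl M p).choose_spec.1.2
theorem minIdl_min (M : IdealChain P) (p : P) {K : Finset P} (hK : K ∈ M.ideals) (hp : p ∈ K) :
    minIdl M p ⊆ K := (exists_minIdl M p).choose_spec.2 K hK hp
theorem maxIdl_mem (M : IdealChain P) (p : P) : maxIdl M p ∈ M.ideals :=
  (exists_maxIdl M p).choose_spec.1.1
theorem not_mem_maxIdl (M : IdealChain P) (p : P) : p ∉ maxIdl M p :=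
  (exists_maxIdl M p).choose_spec.1.2
theorem maxIdl_max (M : IdealChain P) (p : P) {K : Finset P} (hK : K ∈ M.ideals) (hp : p ∉ K) :
    K ⊆ maxIdl M p := (exists_maxIdl M p).choose_spec.2 K hK hp

theorem consec_minmax (M : IdealChain P) (p : P) : Consec M (maxIdl M p) (minIdl M p) := by
  have hsub : maxIdl M p ⊆ minIdl M p := by
    rcases M.chain (maxIdl M p) (maxIdl_mem M p) (minIdl M p) (minIdl_mem M p) with h | h
    · exact h
    · exact absurd (h (mem_minIdl M p)) (not_mem_maxIdl M p)
  refine ⟨maxIdl_mem M p, minIdl_mem M p, Finset.ssubset_def.mpr ⟨hsub, fun h =>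
    (not_mem_maxIdl M p) (h (mem_minIdl M p))⟩, fun K hK ⟨h1, h2⟩ => ?_⟩
  by_cases hp : p ∈ K
  · exact absurd (minIdl_min M p hK hp) (fun hc => h2.2 hc)
  · exact absurd (maxIdl_max M p hK hp) (fun hc => h1.2 hc)

theorem mem_block (M : IdealChain P) (p : P) : p ∈ minIdl M p \ maxIdl M p :=
  Finset.mem_sdiff.mpr ⟨mem_minIdl M p, not_mem_maxIdl M p⟩

theorem block_eq (M : IdealChain P) {I J : Finset P} (h : Consec M I J) {p : P}
    (hp : p ∈ J \ I) : minIdl M p = J ∧ maxIdl M p = I := by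
  rw [Finset.mem_sdiff] at hp
  have hminJ : minIdl M p ⊆ J := minIdl_min M p h.2.1 hp.1
  have hImin : I ⊆ minIdl M p := by
    rcases M.chain I h.1 (minIdl M p) (minIdl_mem M p) with hh | hh
    · exact hh
    · exact absurd (hh (mem_minIdl M p)) hp.2
  have hmin : minIdl M p = J := by
    by_contra hne
    exact h.2.2.2 (minIdl M p) (minIdl_mem M p)
      ⟨Finset.ssubset_def.mpr ⟨hImin, fun hc => hp.2 (hc (mem_minIdl M p))⟩,
       Finset.ssubset_def.mpr ⟨hminJ, fun hc => hne (Finset.Subset.antisymm hminJ hc)⟩⟩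
  have hImax : I ⊆ maxIdl M p := maxIdl_max M p h.1 hp.2
  have hmaxJ : maxIdl M p ⊆ J := by
    rcases M.chain (maxIdl M p) (maxIdl_mem M p) J h.2.1 with hh | hh
    · exact hh
    · exact absurd (hh hp.1) (not_mem_maxIdl M p)
  have hmax : maxIdl M p = I := by
    by_contra hne
    exact h.2.2.2 (maxIdl M p) (maxIdl_mem M p)
      ⟨Finset.ssubset_def.mpr ⟨hImax, fun hc => hne (Finset.Subset.antisymm hc hImax)⟩,
       Finset.ssubset_def.mpr ⟨hmaxJ, fun hc => (not_mem_maxIdl M p) (hc hp.1)⟩⟩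
  exact ⟨hmin, hmax⟩

/- values -/

noncomputable def M0 (Pstar : Finset P) (lam : P → ℝ) : ℝ :=
  if h : Pstar.Nonempty then (Pstar.image lam).min' (h.image lam) - 1 else 0

noncomputable def Wv (Pstar : Finset P) (lam : P → ℝ) : Finset ℝ :=
  insert (M0 Pstar lam) (Pstar.image lam)

noncomputable def gap (Pstar : Finset P) (lam : P → ℝ) : ℝ :=
  if h : (((Wv Pstar lam ×ˢ Wv Pstar lam).filter (fun q => q.1 < q.2)).image
      (fun q => q.2 - q.1)).Nonempty then
    (((Wv Pstar lam ×ˢ Wv Pstar lam).filter (fun q => q.1 < q.2)).image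
      (fun q => q.2 - q.1)).min' h
  else 1

theorem gap_pos (Pstar : Finset P) (lam : P → ℝ) : 0 < gap Pstar lam := by
  unfold gap
  split_ifs with h
  · obtain ⟨q, hq, hval⟩ := Finset.mem_image.mp (Finset.min'_mem _ h)
    rw [Finset.mem_filter] at hq
    linarith [hq.2, hval.symm.le, hval.le]
  · norm_num

theorem gap_le (Pstar : Finset P) (lam : P → ℝ) {s t : ℝ} (hs : s ∈ Wv Pstar lam)
    (ht : t ∈ Wv Pstar lam) (hst : s < t) : gap Pstar lam ≤ t - s := by
  have hmem : t - s ∈ ((Wv Pstar lam ×ˢ Wv Pstar lam).filter (fun q => q.1 < q.2)).image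
      (fun q => q.2 - q.1) :=
    Finset.mem_image.mpr ⟨(s, t), Finset.mem_filter.mpr ⟨Finset.mem_product.mpr ⟨hs, ht⟩, hst⟩, rfl⟩
  unfold gap
  rw [dif_pos ⟨_, hmem⟩]
  exact Finset.min'_le _ _ hmem

theorem M0_lt (Pstar : Finset P) (lam : P → ℝ) {a : P} (ha : a ∈ Pstar) :
    M0 Pstar lam < lam a := by
  unfold M0
  rw [dif_pos ⟨a, ha⟩]
  have := Finset.min'_le (Pstar.image lam) (lam a) (Finset.mem_image_of_mem lam ha)
  linarith

noncomputable def eps (Pstar : Finset P) (lam : P → ℝ) : ℝ :=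
  gap Pstar lam / (2 * (Fintype.card P + 1))

theorem eps_pos (Pstar : Finset P) (lam : P → ℝ) : 0 < eps Pstar lam := by
  have := gap_pos Pstar lam
  have h2 : (0:ℝ) < 2 * (Fintype.card P + 1) := by positivity
  exact div_pos this h2

theorem eps_card_lt (Pstar : Finset P) (lam : P → ℝ) (J : Finset P) :
    eps Pstar lam * J.card < gap Pstar lam := by
  have h1 : (J.card : ℝ) < 2 * (Fintype.card P + 1) := by
    have := Finset.card_le_univ J
    push_cast
    have : (J.card : ℝ) ≤ Fintype.card P := by exact_mod_cast this
    linarith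
  calc eps Pstar lam * J.card < eps Pstar lam * (2 * (Fintype.card P + 1)) := by
        rcases Nat.eq_zero_or_pos J.card with h | h
        · rw [h]; push_cast; rw [mul_zero]; exact mul_pos (eps_pos Pstar lam) (by positivity)
        · exact mul_lt_mul_of_pos_left h1 (eps_pos Pstar lam)
    _ = gap Pstar lam := by
        unfold eps; field_simp

/- block value -/

noncomputable def bval (Pstar : Finset P) (lam : P → ℝ) (I J : Finset P) : ℝ :=
  if h : ((J \ I) ∩ Pstar).Nonempty then lam h.choose
  else (if h2 : (I ∩ Pstar).Nonempty then ((I ∩ Pstar).image lam).max' (h2.image lam)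
        else M0 Pstar lam) + eps Pstar lam * J.card

noncomputable def floorv (Pstar : Finset P) (lam : P → ℝ) (I : Finset P) : ℝ :=
  if h2 : (I ∩ Pstar).Nonempty then ((I ∩ Pstar).image lam).max' (h2.image lam)
  else M0 Pstar lam

theorem bval_unmarked (Pstar : Finset P) (lam : P → ℝ) (I J : Finset P)
    (h : ¬ ((J \ I) ∩ Pstar).Nonempty) :
    bval Pstar lam I J = floorv Pstar lam I + eps Pstar lam * J.card := by
  unfold bval floorv
  rw [dif_neg h]

theorem floorv_mem_Wv (Pstar : Finset P) (lam : P → ℝ) (I : Finset P) :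
    floorv Pstar lam I ∈ Wv Pstar lam := by
  unfold floorv
  split_ifs with h2
  · have := Finset.max'_mem ((I ∩ Pstar).image lam) (h2.image lam)
    obtain ⟨a, ha, hval⟩ := Finset.mem_image.mp this
    rw [Finset.mem_inter] at ha
    exact Finset.mem_insert.mpr (Or.inr (hval ▸ Finset.mem_image_of_mem lam ha.2))
  · exact Finset.mem_insert_self _ _

theorem floorv_mono (Pstar : Finset P) (lam : P → ℝ) {I I' : Finset P} (h : I ⊆ I') :
    floorv Pstar lam I ≤ floorv Pstar lam I' := by
  unfold floorv
  split_ifs with h1 h2 h3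
  · exact Finset.max'_subset _ (Finset.image_subset_image (Finset.inter_subset_inter h (Finset.Subset.refl _)))
  · exact absurd (h1.mono (Finset.inter_subset_inter h (Finset.Subset.refl _))) h2
  · obtain ⟨a, ha⟩ := h3
    rw [Finset.mem_inter] at ha
    have h4 := Finset.le_max' ((I' ∩ Pstar).image lam) (lam a)
      (Finset.mem_image_of_mem lam (Finset.mem_inter.mpr ha))
    have := M0_lt Pstar lam ha.2
    linarith
  · exact le_refl _

theorem floorv_ge (Pstar : Finset P) (lam : P → ℝ) {I : Finset P} {a : P}
    (ha : a ∈ I ∩ Pstar) : lam a ≤ floorv Pstar lam I := by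
  unfold floorv
  rw [dif_pos ⟨a, ha⟩]
  exact Finset.le_max' _ _ (Finset.mem_image_of_mem lam ha)

/- Key strict inequality -/

theorem bval_strict (Pstar : Finset P) (lam : P → ℝ) {M : IdealChain P}
    (hM : Admissible Pstar lam M) {I J I' J' : Finset P}
    (h1 : Consec M I J) (h2 : Consec M I' J') (hJI' : J ⊆ I') :
    bval Pstar lam I J < bval Pstar lam I' J' := by
  have hJ'pos : (0:ℝ) < J'.card := by
    obtain ⟨x, hx⟩ := Finset.exists_of_ssubset h2.2.2.1
    have : 0 < J'.card := Finset.card_pos.mpr ⟨x, hx.1⟩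
    exact_mod_cast this
  by_cases hm : ((J \ I) ∩ Pstar).Nonempty
  · by_cases hm' : ((J' \ I') ∩ Pstar).Nonempty
    · -- marked / marked
      unfold bval
      rw [dif_pos hm, dif_pos hm']
      exact hM.2 I J I' J' h1 h2 hJI' _ hm.choose_spec _ hm'.choose_spec
    · -- marked / unmarked
      unfold bval
      rw [dif_pos hm, dif_neg hm']
      have ha := hm.choose_spec
      rw [Finset.mem_inter, Finset.mem_sdiff] at ha
      have hfl : lam hm.choose ≤ floorv Pstar lam I' :=
        floorv_ge Pstar lam (Finset.mem_inter.mpr ⟨hJI' ha.1.1, ha.2⟩)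
      have heps : 0 < eps Pstar lam * J'.card := mul_pos (eps_pos Pstar lam) hJ'pos
      unfold floorv at hfl
      linarith
  · by_cases hm' : ((J' \ I') ∩ Pstar).Nonempty
    · -- unmarked / marked
      rw [bval_unmarked Pstar lam I J hm]
      unfold bval
      rw [dif_pos hm']
      have hb := hm'.choose_spec
      have hflt : floorv Pstar lam I < lam hm'.choose := by
        unfold floorv
        split_ifs with hI
        · obtain ⟨a0, ha0, hval⟩ := Finset.mem_image.mp
            (Finset.max'_mem ((I ∩ Pstar).image lam) (hI.image lam))
          rw [← hval]
          rw [Finset.mem_inter] at ha0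
          have hma : minIdl M a0 ⊆ I' := minIdl_min M a0 h2.1 (hJI' (h1.2.2.1.1 ha0.1))
          exact hM.2 _ _ _ _ (consec_minmax M a0) h2 hma a0
            (Finset.mem_inter.mpr ⟨mem_block M a0, ha0.2⟩) _ hb
        · have hbP : hm'.choose ∈ Pstar := (Finset.mem_inter.mp hb).2
          exact M0_lt Pstar lam hbP
      have hWf : floorv Pstar lam I ∈ Wv Pstar lam := floorv_mem_Wv Pstar lam I
      have hWb : lam hm'.choose ∈ Wv Pstar lam :=
        Finset.mem_insert.mpr (Or.inr (Finset.mem_image_of_mem lam (Finset.mem_inter.mp hb).2))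
      have hgap := gap_le Pstar lam hWf hWb hflt
      have hec := eps_card_lt Pstar lam J
      unfold floorv at hflt hgap ⊢
      linarith
    · -- unmarked / unmarked
      rw [bval_unmarked Pstar lam I J hm, bval_unmarked Pstar lam I' J' hm']
      have hflo : floorv Pstar lam I ≤ floorv Pstar lam I' :=
        floorv_mono Pstar lam (h1.2.2.1.1.trans hJI')
      have hcard : (J.card : ℝ) < J'.card := by
        exact_mod_cast Finset.card_lt_card (lt_of_le_of_lt (le_of_eq rfl)
          (lt_of_le_of_lt (show J ≤ I' from hJI') h2.2.2.1))
      have := mul_lt_mul_of_pos_left hcard (eps_pos Pstar lam)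
      linarith

/- generic point -/

noncomputable def gp (Pstar : Finset P) (lam : P → ℝ) (M : IdealChain P) (p : P) : ℝ :=
  bval Pstar lam (maxIdl M p) (minIdl M p)

theorem gp_block (Pstar : Finset P) (lam : P → ℝ) (M : IdealChain P) {I J : Finset P}
    (h : Consec M I J) {p : P} (hp : p ∈ J \ I) :
    gp Pstar lam M p = bval Pstar lam I J := by
  obtain ⟨h1, h2⟩ := block_eq M h hp
  unfold gp
  rw [h1, h2]

theorem gp_mem (Pstar : Finset P) (lam : P → ℝ) {M : IdealChain P}
    (hM : Admissible Pstar lam M) : gp Pstar lam M ∈ FL Pstar lam M := by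
  refine ⟨?_, ?_, ?_⟩
  · intro a ha
    unfold gp bval
    have hne : ((minIdl M a \ maxIdl M a) ∩ Pstar).Nonempty :=
      ⟨a, Finset.mem_inter.mpr ⟨mem_block M a, ha⟩⟩
    rw [dif_pos hne]
    exact hM.1 _ _ (consec_minmax M a) _ hne.choose_spec _
      (Finset.mem_inter.mpr ⟨mem_block M a, ha⟩)
  · intro I J h p hp q hq
    rw [gp_block Pstar lam M h hp, gp_block Pstar lam M h hq]
  · intro I J I' J' h1 h2 hJI' p hp q hq
    rw [gp_block Pstar lam M h1 hp, gp_block Pstar lam M h2 hq]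
    exact (bval_strict Pstar lam hM h1 h2 hJI').le

theorem gp_strict (Pstar : Finset P) (lam : P → ℝ) {M : IdealChain P}
    (hM : Admissible Pstar lam M) {I : Finset P} (hI : I ∈ M.ideals) {p q : P}
    (hp : p ∈ I) (hq : q ∉ I) : gp Pstar lam M p < gp Pstar lam M q := by
  have h1 : minIdl M p ⊆ I := minIdl_min M p hI hp
  have h2 : I ⊆ maxIdl M q := maxIdl_max M q hI hq
  exact bval_strict Pstar lam hM (consec_minmax M p) (consec_minmax M q) (h1.trans h2)

/- the key inclusion -/

theorem ideals_subset (Pstar : Finset P) (lam : P → ℝ) {L L' : IdealChain P}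
    (hL : Admissible Pstar lam L)
    (hy : gp Pstar lam L ∈ FL Pstar lam L') : L.ideals ⊆ L'.ideals := by
  intro I hI
  set y := gp Pstar lam L with hy_def
  -- I' := maximal element of L'.ideals contained in I
  obtain ⟨I', hI'f, hmax⟩ := Finset.exists_max_image (L'.ideals.filter (fun K => K ⊆ I))
    Finset.card ⟨∅, by simp [L'.empty_mem]⟩
  rw [Finset.mem_filter] at hI'f
  have hI'max : ∀ K ∈ L'.ideals, K ⊆ I → K ⊆ I' := by
    intro K hK hKI
    rcases L'.chain K hK I' hI'f.1 with h | h
    · exact h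
    · have hc := hmax K (Finset.mem_filter.mpr ⟨hK, hKI⟩)
      exact le_of_eq (Finset.eq_of_subset_of_card_le h hc).symm
  suffices h : I' = I by exact h ▸ hI'f.1
  by_contra hne
  have hss : I' ⊂ I := Finset.ssubset_def.mpr ⟨hI'f.2, fun hc => hne (Finset.Subset.antisymm hI'f.2 hc)⟩
  obtain ⟨p, hpI, hpI'⟩ := Finset.exists_of_ssubset hss
  -- the minimal L'-ideal containing p is not contained in I
  have hJp : ¬ minIdl L' p ⊆ I := by
    intro hc
    exact hpI' (hI'max _ (minIdl_mem L' p) hc (mem_minIdl L' p))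
  obtain ⟨q, hqJ, hqI⟩ := Finset.not_subset.mp hJp
  -- y q ≤ y p  in L'
  have hyqp : y q ≤ y p := by
    by_cases hqK : q ∈ maxIdl L' p
    · have := hy.2.2 (maxIdl L' q) (minIdl L' q) (maxIdl L' p) (minIdl L' p)
        (consec_minmax L' q) (consec_minmax L' p)
        ((minIdl_min L' q (maxIdl_mem L' p) hqK))
        q (mem_block L' q) p (mem_block L' p)
      exact this
    · have := hy.2.1 (maxIdl L' p) (minIdl L' p) (consec_minmax L' p)
        q (Finset.mem_sdiff.mpr ⟨hqJ, hqK⟩) p (mem_block L' p)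
      exact this.le
  -- y p < y q  in L
  have hypq : y p < y q := gp_strict Pstar lam hL hI hpI hqI
  linarith


/-- The correspondence `L ↦ F_L` between λ-admissible chains and nonempty sets `F_L`
is injective. -/
theorem FL_injective (Pstar : Finset P) (lam : P → ℝ)
    (hext : ∀ p : P, IsExtremalElt p → p ∈ Pstar) (hlam : LamMono Pstar lam)
    (L L' : IdealChain P) (hL : Admissible Pstar lam L) (hL' : Admissible Pstar lam L')
    (heq : FL Pstar lam L = FL Pstar lam L') (hne : (FL Pstar lam L).Nonempty) :
    L = L' := by
  have h1 : L.ideals ⊆ L'.ideals :=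
    ideals_subset Pstar lam hL (heq ▸ gp_mem Pstar lam hL)
  have h2 : L'.ideals ⊆ L.ideals :=
    ideals_subset Pstar lam hL' (heq ▸ gp_mem Pstar lam hL')
  have h3 : L.ideals = L'.ideals := Finset.Subset.antisymm h1 h2
  cases L; cases L'
  simp only at h3
  subst h3
  rfl
end

section
/- If L and L' are λ-admissible chains of order ideals of P whose intersection L ∩ L' is also λ-admissible, then F_L ∩ F_{L'} = F_{L∩L'}. -/
open Classical

variable {P : Type} [Fintype P] [DecidableEq P] [PartialOrder P]

/-- The intersection of two chains of ideals. -/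
def interChain (L L' : IdealChain P) : IdealChain P where
  ideals := L.ideals ∩ L'.ideals
  isIdeal := fun I hI => L.isIdeal I (Finset.mem_inter.mp hI).1
  chain := fun I hI J hJ => L.chain I (Finset.mem_inter.mp hI).1 J (Finset.mem_inter.mp hJ).1
  empty_mem := Finset.mem_inter.mpr ⟨L.empty_mem, L'.empty_mem⟩
  univ_mem := Finset.mem_inter.mpr ⟨L.univ_mem, L'.univ_mem⟩

section Helpers

lemma IdealChain.exists_max (L : IdealChain P) {S : Finset (Finset P)}
    (hS : ∀ A ∈ S, A ∈ L.ideals) (hne : S.Nonempty) :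
    ∃ A ∈ S, ∀ B ∈ S, B ⊆ A := by
  obtain ⟨A, hA, hmax⟩ := S.exists_maximal hne
  refine ⟨A, hA, fun B hB => ?_⟩
  rcases L.chain B (hS _ hB) A (hS _ hA) with h | h
  · exact h
  · by_contra hc
    exact hc (hmax hB h)

lemma IdealChain.exists_min (L : IdealChain P) {S : Finset (Finset P)}
    (hS : ∀ A ∈ S, A ∈ L.ideals) (hne : S.Nonempty) :
    ∃ A ∈ S, ∀ B ∈ S, A ⊆ B := by
  obtain ⟨A, hA, hmin⟩ := S.exists_minimal hne
  refine ⟨A, hA, fun B hB => ?_⟩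
  rcases L.chain A (hS _ hA) B (hS _ hB) with h | h
  · exact h
  · by_contra hc
    exact hc (hmin hB h)

/-- Around any element `p` of `J \ I` (with `I ⊆ J` members of the chain `L`) there is
a consecutive pair `A ⊂ B` of `L` with `I ⊆ A`, `B ⊆ J` and `p ∈ B \ A`. -/
lemma exists_consec_between (L : IdealChain P) {I J : Finset P}
    (hI : I ∈ L.ideals) (hJ : J ∈ L.ideals) (hIJ : I ⊆ J) {p : P}
    (hpJ : p ∈ J) (hpI : p ∉ I) :
    ∃ A B, Consec L A B ∧ I ⊆ A ∧ B ⊆ J ∧ p ∈ B ∧ p ∉ A := by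
  classical
  set S := L.ideals.filter (fun K => I ⊆ K ∧ K ⊆ J ∧ p ∉ K) with hSdef
  set T := L.ideals.filter (fun K => K ⊆ J ∧ p ∈ K) with hTdef
  have hSne : S.Nonempty := ⟨I, by simp [hSdef, hI, hIJ, hpI]⟩
  have hTne : T.Nonempty := ⟨J, by simp [hTdef, hJ, hpJ]⟩
  obtain ⟨A, hAS, hAmax⟩ := L.exists_max (fun K hK => (Finset.mem_filter.mp hK).1) hSne
  obtain ⟨B, hBT, hBmin⟩ := L.exists_min (fun K hK => (Finset.mem_filter.mp hK).1) hTne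
  obtain ⟨hAL, hIA, hAJ, hpA⟩ := Finset.mem_filter.mp hAS
  obtain ⟨hBL, hBJ, hpB⟩ := Finset.mem_filter.mp hBT
  have hAB : A ⊆ B := by
    rcases L.chain A hAL B hBL with h | h
    · exact h
    · exact absurd (h hpB) hpA
  have hABs : A ⊂ B := Finset.ssubset_iff_subset_ne.mpr
    ⟨hAB, fun he => hpA (he ▸ hpB)⟩
  refine ⟨A, B, ⟨hAL, hBL, hABs, ?_⟩, hIA, hBJ, hpB, hpA⟩
  rintro K hK ⟨h1, h2⟩
  by_cases hpK : p ∈ K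
  · have : K ∈ T := Finset.mem_filter.mpr ⟨hK, h2.subset.trans hBJ, hpK⟩
    exact (Finset.ssubset_iff_subset_ne.mp h2).2
      (Finset.Subset.antisymm h2.subset (hBmin K this))
  · have : K ∈ S := Finset.mem_filter.mpr
      ⟨hK, hIA.trans h1.subset, h2.subset.trans hBJ, hpK⟩
    exact (Finset.ssubset_iff_subset_ne.mp h1).2
      (Finset.Subset.antisymm (hAmax K this) h1.subset).symm

/-- Around a consecutive pair `A ⊂ B` of a chain `L`, a subchain `M` has a consecutive
pair `I ⊂ J` with `I ⊆ A` and `B ⊆ J`, where `I` and `J` are extremal such. -/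
lemma exists_consec_around (M L : IdealChain P) (hsub : M.ideals ⊆ L.ideals)
    {A B : Finset P} (hAB : Consec L A B) :
    ∃ I J, Consec M I J ∧ I ⊆ A ∧ B ⊆ J ∧
      (∀ K ∈ M.ideals, K ⊆ A → K ⊆ I) ∧ (∀ K ∈ M.ideals, B ⊆ K → J ⊆ K) := by
  classical
  set S := M.ideals.filter (fun K => K ⊆ A) with hSdef
  set T := M.ideals.filter (fun K => B ⊆ K) with hTdef
  have hSne : S.Nonempty := ⟨∅, by simp [hSdef, M.empty_mem]⟩
  have hTne : T.Nonempty := ⟨Finset.univ, by simp [hTdef, M.univ_mem]⟩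
  obtain ⟨I, hIS, hImax⟩ := M.exists_max (fun K hK => (Finset.mem_filter.mp hK).1) hSne
  obtain ⟨J, hJT, hJmin⟩ := M.exists_min (fun K hK => (Finset.mem_filter.mp hK).1) hTne
  obtain ⟨hIM, hIA⟩ := Finset.mem_filter.mp hIS
  obtain ⟨hJM, hBJ⟩ := Finset.mem_filter.mp hJT
  have hImax' : ∀ K ∈ M.ideals, K ⊆ A → K ⊆ I := fun K hK h =>
    hImax K (Finset.mem_filter.mpr ⟨hK, h⟩)
  have hJmin' : ∀ K ∈ M.ideals, B ⊆ K → J ⊆ K := fun K hK h =>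
    hJmin K (Finset.mem_filter.mpr ⟨hK, h⟩)
  have hIJ : I ⊆ J := hIA.trans (hAB.2.2.1.subset.trans hBJ)
  have hIJs : I ⊂ J := Finset.ssubset_iff_subset_ne.mpr
    ⟨hIJ, fun he => by
      have : B ⊆ A := hBJ.trans (he ▸ hIA)
      exact (Finset.ssubset_iff_subset_ne.mp hAB.2.2.1).2
        (Finset.Subset.antisymm hAB.2.2.1.subset this)⟩
  refine ⟨I, J, ⟨hIM, hJM, hIJs, ?_⟩, hIA, hBJ, hImax', hJmin'⟩
  rintro K hK ⟨h1, h2⟩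
  have hKL : K ∈ L.ideals := hsub hK
  have hnKA : ¬ K ⊆ A := fun h =>
    (Finset.ssubset_iff_subset_ne.mp h1).2
      (Finset.Subset.antisymm (hImax' K hK h) h1.subset).symm
  have hnBK : ¬ B ⊆ K := fun h =>
    (Finset.ssubset_iff_subset_ne.mp h2).2
      (Finset.Subset.antisymm h2.subset (hJmin' K hK h))
  have hAK : A ⊆ K := (L.chain K hKL A hAB.1).resolve_left hnKA
  have hKB : K ⊆ B := (L.chain K hKL B hAB.2.1).resolve_right hnBK
  exact hAB.2.2.2 K hKL
    ⟨Finset.ssubset_iff_subset_ne.mpr ⟨hAK, fun he => hnKA (he ▸ Finset.Subset.refl K)⟩,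
     Finset.ssubset_iff_subset_ne.mpr ⟨hKB, fun he => hnBK (he ▸ Finset.Subset.refl K)⟩⟩

/-- `F_M ⊆ F_L` whenever `M` is a subchain of `L`. -/
lemma FL_subchain (Pstar : Finset P) (lam : P → ℝ) (M L : IdealChain P)
    (hsub : M.ideals ⊆ L.ideals) : FL Pstar lam M ⊆ FL Pstar lam L := by
  rintro x ⟨hlamx, hconst, hmono⟩
  refine ⟨hlamx, ?_, ?_⟩
  · intro A B hAB p hp q hq
    obtain ⟨I, J, hIJ, hIA, hBJ, -, -⟩ := exists_consec_around M L hsub hAB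
    rw [Finset.mem_sdiff] at hp hq
    exact hconst I J hIJ p (Finset.mem_sdiff.mpr ⟨hBJ hp.1, fun h => hp.2 (hIA h)⟩)
      q (Finset.mem_sdiff.mpr ⟨hBJ hq.1, fun h => hq.2 (hIA h)⟩)
  · intro A B A' B' hAB hA'B' hBA' p hp q hq
    obtain ⟨I, J, hIJ, hIA, hBJ, hImax, hJmin⟩ := exists_consec_around M L hsub hAB
    obtain ⟨I', J', hIJ', hIA', hBJ', hImax', hJmin'⟩ :=
      exists_consec_around M L hsub hA'B'
    rw [Finset.mem_sdiff] at hp hq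
    have hpJI : p ∈ J \ I := Finset.mem_sdiff.mpr ⟨hBJ hp.1, fun h => hp.2 (hIA h)⟩
    have hqJI' : q ∈ J' \ I' := Finset.mem_sdiff.mpr ⟨hBJ' hq.1, fun h => hq.2 (hIA' h)⟩
    by_cases h : J ⊆ I'
    · exact hmono I J I' J' hIJ hIJ' h p hpJI q hqJI'
    · -- then I = I' and J = J', so p and q lie in the same consecutive difference of M
      have hnBI' : ¬ B ⊆ I' := fun hb => h (hJmin I' hIJ'.1 hb)
      have hI'B : I' ⊆ B := (L.chain I' (hsub hIJ'.1) B hAB.2.1).resolve_right hnBI'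
      have hI'A : I' ⊆ A := by
        rcases L.chain I' (hsub hIJ'.1) A hAB.1 with h1 | h1
        · exact h1
        · by_cases he : A = I'
          · exact he ▸ Finset.Subset.refl A
          · exact absurd (hAB.2.2.2 I' (hsub hIJ'.1)
              ⟨Finset.ssubset_iff_subset_ne.mpr ⟨h1, he⟩,
               Finset.ssubset_iff_subset_ne.mpr ⟨hI'B, fun hb => hnBI' (hb ▸ hI'B)⟩⟩) id
      have hI'I : I' ⊆ I := hImax I' hIJ'.1 hI'A
      have hBJ'2 : B ⊆ J' := hBA'.trans (hA'B'.2.2.1.subset.trans hBJ')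
      have hJJ' : J ⊆ J' := hJmin J' hIJ'.2.1 hBJ'2
      have hII' : I = I' := by
        by_contra hne
        exact hIJ'.2.2.2 I hIJ.1
          ⟨Finset.ssubset_iff_subset_ne.mpr ⟨hI'I, fun he => hne he.symm⟩,
           lt_of_lt_of_le hIJ.2.2.1 hJJ'⟩
      have hJeq : J = J' := by
        by_contra hne
        exact hIJ'.2.2.2 J hIJ.2.1
          ⟨hII' ▸ hIJ.2.2.1, Finset.ssubset_iff_subset_ne.mpr ⟨hJJ', hne⟩⟩
      have := hconst I J hIJ p hpJI q (by rw [hII', hJeq]; exact hqJI')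
      exact le_of_eq this

/-- The subset of `J` consisting of `I` together with the elements of `J \ I` with
`x`-value `< c` is again a member of the chain, for `x ∈ F_L`. -/
lemma prefix_mem_ideals (Pstar : Finset P) (lam : P → ℝ) (L : IdealChain P)
    {x : P → ℝ} (hx : x ∈ FL Pstar lam L) {I J : Finset P}
    (hI : I ∈ L.ideals) (hJ : J ∈ L.ideals) (hIJ : I ⊆ J) (c : ℝ) :
    I ∪ (J \ I).filter (fun r => x r < c) ∈ L.ideals := by
  classical
  obtain ⟨-, hconst, hmono⟩ := hx
  set S := L.ideals.filter (fun Z => I ⊆ Z ∧ Z ⊆ J ∧ ∀ r ∈ Z, r ∉ I → x r < c) with hSdef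
  have hSne : S.Nonempty := ⟨I, by
    refine Finset.mem_filter.mpr ⟨hI, Finset.Subset.refl I, hIJ, ?_⟩
    intro r hr hr'; exact absurd hr hr'⟩
  obtain ⟨A, hAS, hAmax⟩ := L.exists_max (fun K hK => (Finset.mem_filter.mp hK).1) hSne
  obtain ⟨hAL, hIA, hAJ, hAlt⟩ := Finset.mem_filter.mp hAS
  have key : A = I ∪ (J \ I).filter (fun r => x r < c) := by
    apply Finset.Subset.antisymm
    · intro r hr
      by_cases hrI : r ∈ I
      · exact Finset.mem_union_left _ hrI
      · exact Finset.mem_union_right _ (Finset.mem_filter.mpr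
          ⟨Finset.mem_sdiff.mpr ⟨hAJ hr, hrI⟩, hAlt r hr hrI⟩)
    · intro r hr
      rcases Finset.mem_union.mp hr with hrI | hrf
      · exact hIA hrI
      · obtain ⟨hrJI, hrc⟩ := Finset.mem_filter.mp hrf
        obtain ⟨hrJ, hrI⟩ := Finset.mem_sdiff.mp hrJI
        by_contra hrA
        obtain ⟨A', B', hcons, hAA', hB'J, hrB', hrA'⟩ :=
          exists_consec_between L hAL hJ hAJ hrJ hrA
        have hB'S : B' ∈ S := by
          refine Finset.mem_filter.mpr ⟨hcons.2.1,
            hIA.trans (hAA'.trans hcons.2.2.1.subset), hB'J, ?_⟩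
          intro s hsB' hsI
          by_cases hsA' : s ∈ A'
          · obtain ⟨C, D, hcd, hIC, hDA', hsD, hsC⟩ :=
              exists_consec_between L hI hcons.1 (hIA.trans hAA') hsA' hsI
            have := hmono C D A' B' hcd hcons hDA' s
              (Finset.mem_sdiff.mpr ⟨hsD, hsC⟩) r (Finset.mem_sdiff.mpr ⟨hrB', hrA'⟩)
            exact lt_of_le_of_lt this hrc
          · have := hconst A' B' hcons s (Finset.mem_sdiff.mpr ⟨hsB', hsA'⟩)
              r (Finset.mem_sdiff.mpr ⟨hrB', hrA'⟩)
            exact this ▸ hrc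
        exact hrA (hAmax B' hB'S hrB')
  exact key ▸ hAL

/-- `x ∈ F_L ∩ F_{L'}` is constant on consecutive differences of the intersection. -/
lemma const_on_inter_diff (Pstar : Finset P) (lam : P → ℝ) (L L' : IdealChain P)
    {x : P → ℝ} (hx : x ∈ FL Pstar lam L) (hx' : x ∈ FL Pstar lam L')
    {I J : Finset P} (hIJ : Consec (interChain L L') I J) :
    ∀ p ∈ J \ I, ∀ q ∈ J \ I, x p = x q := by
  classical
  have hImem := Finset.mem_inter.mp hIJ.1
  have hJmem := Finset.mem_inter.mp hIJ.2.1
  have key : ∀ p ∈ J \ I, ∀ q ∈ J \ I, ¬ x p < x q := by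
    intro p hp q hq hlt
    obtain ⟨hpJ, hpI⟩ := Finset.mem_sdiff.mp hp
    obtain ⟨hqJ, hqI⟩ := Finset.mem_sdiff.mp hq
    set K := I ∪ (J \ I).filter (fun r => x r < x q) with hKdef
    have hK : K ∈ (interChain L L').ideals := Finset.mem_inter.mpr
      ⟨prefix_mem_ideals Pstar lam L hx hImem.1 hJmem.1 hIJ.2.2.1.subset _,
       prefix_mem_ideals Pstar lam L' hx' hImem.2 hJmem.2 hIJ.2.2.1.subset _⟩
    have hpK : p ∈ K := Finset.mem_union_right _ (Finset.mem_filter.mpr ⟨hp, hlt⟩)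
    have hqK : q ∉ K := by
      intro h
      rcases Finset.mem_union.mp h with h' | h'
      · exact hqI h'
      · exact lt_irrefl _ (Finset.mem_filter.mp h').2
    have hKJ : K ⊆ J := by
      intro r hr
      rcases Finset.mem_union.mp hr with h' | h'
      · exact hIJ.2.2.1.subset h'
      · exact (Finset.mem_sdiff.mp (Finset.mem_filter.mp h').1).1
    exact hIJ.2.2.2 K hK
      ⟨Finset.ssubset_iff_subset_ne.mpr
         ⟨Finset.subset_union_left, fun he => hpI (he ▸ hpK)⟩,
       Finset.ssubset_iff_subset_ne.mpr ⟨hKJ, fun he => hqK (he ▸ hqJ)⟩⟩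
  intro p hp q hq
  exact le_antisymm (not_lt.mp (key q hq p hp)) (not_lt.mp (key p hp q hq))

lemma mem_FL_inter (Pstar : Finset P) (lam : P → ℝ) (L L' : IdealChain P)
    {x : P → ℝ} (hx : x ∈ FL Pstar lam L) (hx' : x ∈ FL Pstar lam L') :
    x ∈ FL Pstar lam (interChain L L') := by
  refine ⟨hx.1, fun I J hIJ => const_on_inter_diff Pstar lam L L' hx hx' hIJ, ?_⟩
  intro I J I' J' hIJ hIJ' hJI' p hp q hq
  obtain ⟨hpJ, hpI⟩ := Finset.mem_sdiff.mp hp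
  obtain ⟨hqJ', hqI'⟩ := Finset.mem_sdiff.mp hq
  obtain ⟨A, B, hcons, hIA, hBJ, hpB, hpA⟩ :=
    exists_consec_between L (Finset.mem_inter.mp hIJ.1).1 (Finset.mem_inter.mp hIJ.2.1).1
      hIJ.2.2.1.subset hpJ hpI
  obtain ⟨A', B', hcons', hIA', hB'J', hqB', hqA'⟩ :=
    exists_consec_between L (Finset.mem_inter.mp hIJ'.1).1 (Finset.mem_inter.mp hIJ'.2.1).1
      hIJ'.2.2.1.subset hqJ' hqI'
  exact hx.2.2 A B A' B' hcons hcons' (hBJ.trans (hJI'.trans hIA'))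
    p (Finset.mem_sdiff.mpr ⟨hpB, hpA⟩) q (Finset.mem_sdiff.mpr ⟨hqB', hqA'⟩)

end Helpers

/-- If the intersection of two λ-admissible chains is λ-admissible, then
`F_L ∩ F_{L'} = F_{L ∩ L'}`. -/
theorem FL_inter_of_admissible (Pstar : Finset P) (lam : P → ℝ)
    (hext : ∀ p : P, IsExtremalElt p → p ∈ Pstar) (hlam : LamMono Pstar lam)
    (L L' : IdealChain P) (hL : Admissible Pstar lam L) (hL' : Admissible Pstar lam L')
    (hinter : Admissible Pstar lam (interChain L L')) :
    FL Pstar lam L ∩ FL Pstar lam L' = FL Pstar lam (interChain L L') := by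
  ext x
  constructor
  · rintro ⟨hx, hx'⟩
    exact mem_FL_inter Pstar lam L L' hx hx'
  · intro hx
    exact ⟨FL_subchain Pstar lam (interChain L L') L Finset.inter_subset_left hx,
           FL_subchain Pstar lam (interChain L L') L' Finset.inter_subset_right hx⟩
end

section
/- If L and L' are λ-admissible chains of order ideals of P whose intersection L ∩ L' is NOT λ-admissible, then F_L ∩ F_{L'} = ∅. -/
open Classical

variable {P : Type} [Fintype P] [DecidableEq P] [PartialOrder P]

section Aux

variable {P : Type} [Fintype P] [DecidableEq P] [PartialOrder P]

/-- Every element lies in some consecutive difference of the chain. -/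
lemma exists_consec_mem (L : IdealChain P) (p : P) :
    ∃ I J, Consec L I J ∧ p ∈ J \ I := by
  obtain ⟨J, hJmem, hJmin⟩ : ∃ J ∈ L.ideals.filter (fun I => p ∈ I),
      ∀ x ∈ L.ideals.filter (fun I => p ∈ I), ¬ x < J := by
    obtain ⟨J, hJ⟩ := Finset.exists_minimal (s := L.ideals.filter (fun I => p ∈ I))
      ⟨Finset.univ, Finset.mem_filter.mpr ⟨L.univ_mem, Finset.mem_univ p⟩⟩
    exact ⟨J, hJ.1, fun x hx hlt => absurd (hJ.2 hx hlt.le) (fun h => hlt.ne (le_antisymm hlt.le h))⟩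
  rw [Finset.mem_filter] at hJmem
  obtain ⟨hJ, hpJ⟩ := hJmem
  obtain ⟨I, hImem, hImax⟩ : ∃ I ∈ L.ideals.filter (fun K => K ⊂ J),
      ∀ x ∈ L.ideals.filter (fun K => K ⊂ J), ¬ I < x := by
    obtain ⟨I, hI⟩ := Finset.exists_maximal (s := L.ideals.filter (fun K => K ⊂ J))
      ⟨∅, Finset.mem_filter.mpr ⟨L.empty_mem, Finset.empty_ssubset.mpr ⟨p, hpJ⟩⟩⟩
    exact ⟨I, hI.1, fun x hx hlt => absurd (hI.2 hx hlt.le) (fun h => hlt.ne (le_antisymm hlt.le h))⟩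
  rw [Finset.mem_filter] at hImem
  obtain ⟨hI, hIJ⟩ := hImem
  have hpI : p ∉ I := fun hpI =>
    hJmin I (Finset.mem_filter.mpr ⟨hI, hpI⟩) hIJ
  refine ⟨I, J, ⟨hI, hJ, hIJ, ?_⟩, Finset.mem_sdiff.mpr ⟨hpJ, hpI⟩⟩
  rintro K hK ⟨h1, h2⟩
  exact hImax K (Finset.mem_filter.mpr ⟨hK, h2⟩) h1

/-- Any member of the chain is above or below a consecutive pair. -/
lemma consec_dichotomy (L : IdealChain P) {I J K : Finset P} (h : Consec L I J)
    (hK : K ∈ L.ideals) : J ⊆ K ∨ K ⊆ I := by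
  obtain ⟨hI, hJ, _, hmax⟩ := h
  rcases L.chain J hJ K hK with h1 | h1
  · exact Or.inl h1
  rcases L.chain K hK I hI with h2 | h2
  · exact Or.inr h2
  by_cases hKJ : K = J
  · exact Or.inl hKJ.ge
  by_cases hIK : I = K
  · exact Or.inr hIK.ge
  exact absurd ⟨Finset.ssubset_iff_subset_ne.mpr ⟨h2, hIK⟩,
    Finset.ssubset_iff_subset_ne.mpr ⟨h1, hKJ⟩⟩ (hmax K hK)

/-- A point of `F_L` is weakly separated by any member of the chain. -/
lemma FL_le_of_sep (Pstar : Finset P) (lam : P → ℝ) (L : IdealChain P) {x : P → ℝ}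
    (hx : x ∈ FL Pstar lam L) {K : Finset P} (hK : K ∈ L.ideals) {p q : P}
    (hp : p ∈ K) (hq : q ∉ K) : x p ≤ x q := by
  obtain ⟨I, J, hc, hpm⟩ := exists_consec_mem L p
  obtain ⟨I', J', hc', hqm⟩ := exists_consec_mem L q
  rw [Finset.mem_sdiff] at hpm hqm
  have h1 : J ⊆ K := by
    rcases consec_dichotomy L hc hK with h | h
    · exact h
    · exact absurd (h hp) hpm.2
  have h2 : K ⊆ I' := by
    rcases consec_dichotomy L hc' hK with h | h
    · exact absurd (h hqm.1) hq
    · exact h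
  exact hx.2.2 I J I' J' hc hc' (h1.trans h2) p (Finset.mem_sdiff.mpr hpm) q
    (Finset.mem_sdiff.mpr hqm)

open Classical in
/-- Sublevel sets of a point of `F_L` are members of the chain. -/
lemma sublevel_mem (Pstar : Finset P) (lam : P → ℝ) (L : IdealChain P) {x : P → ℝ}
    (hx : x ∈ FL Pstar lam L) (t : ℝ) :
    Finset.univ.filter (fun p => x p ≤ t) ∈ L.ideals := by
  set S := Finset.univ.filter (fun p => x p ≤ t) with hSdef
  obtain ⟨K, hKmem, hKmax⟩ : ∃ K ∈ L.ideals.filter (fun K => K ⊆ S),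
      ∀ x ∈ L.ideals.filter (fun K => K ⊆ S), ¬ K < x := by
    obtain ⟨K, hK⟩ := Finset.exists_maximal (s := L.ideals.filter (fun K => K ⊆ S))
      ⟨∅, Finset.mem_filter.mpr ⟨L.empty_mem, Finset.empty_subset _⟩⟩
    exact ⟨K, hK.1, fun x hx hlt => absurd (hK.2 hx hlt.le) (fun h => hlt.ne (le_antisymm hlt.le h))⟩
  rw [Finset.mem_filter] at hKmem
  suffices h : S = K by rw [h]; exact hKmem.1
  refine Finset.Subset.antisymm ?_ hKmem.2
  intro p hp
  by_contra hpK
  have hpt : x p ≤ t := by simpa [hSdef] using hp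
  obtain ⟨I, J, hc, hpm⟩ := exists_consec_mem L p
  rw [Finset.mem_sdiff] at hpm
  have hJS : J ⊆ S := by
    intro q hq
    by_cases hqI : q ∈ I
    · have := FL_le_of_sep Pstar lam L hx hc.1 hqI hpm.2
      simp only [hSdef, Finset.mem_filter, Finset.mem_univ, true_and]
      linarith
    · have := hx.2.1 I J hc p (Finset.mem_sdiff.mpr hpm) q (Finset.mem_sdiff.mpr ⟨hq, hqI⟩)
      simp only [hSdef, Finset.mem_filter, Finset.mem_univ, true_and]
      linarith
  have hKJ : K ⊆ J := by
    rcases L.chain K hKmem.1 J hc.2.1 with h | h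
    · exact h
    · exact absurd (h hpm.1) hpK
  exact hKmax J (Finset.mem_filter.mpr ⟨hc.2.1, hJS⟩)
    (Finset.ssubset_iff_subset_ne.mpr ⟨hKJ, fun h => hpK (h ▸ hpm.1)⟩)

/-- Two consecutive pairs are either equal or ordered. -/
lemma consec_trichotomy (L : IdealChain P) {A B A' B' : Finset P}
    (h : Consec L A B) (h' : Consec L A' B') :
    (A = A' ∧ B = B') ∨ B ⊆ A' ∨ B' ⊆ A := by
  rcases consec_dichotomy L h' h.2.1 with hB'B | hBA'
  · rcases consec_dichotomy L h h'.2.1 with hBB' | hB'A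
    · -- B ⊆ B' and B' ⊆ B
      have hBB : B = B' := Finset.Subset.antisymm hBB' hB'B
      rcases consec_dichotomy L h h'.1 with hBA' | hA'A
      · exact Or.inr (Or.inl hBA')
      · rcases consec_dichotomy L h' h.1 with hB'A | hAA'
        · exact Or.inr (Or.inr hB'A)
        · exact Or.inl ⟨Finset.Subset.antisymm hAA' hA'A, hBB⟩
    · exact Or.inr (Or.inr hB'A)
  · exact Or.inr (Or.inl hBA')

end Aux

/-- If the intersection of two λ-admissible chains is not λ-admissible, then
`F_L ∩ F_{L'} = ∅`. -/
theorem FL_inter_empty_of_not_admissible (Pstar : Finset P) (lam : P → ℝ)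
    (hext : ∀ p : P, IsExtremalElt p → p ∈ Pstar) (hlam : LamMono Pstar lam)
    (L L' : IdealChain P) (hL : Admissible Pstar lam L) (hL' : Admissible Pstar lam L')
    (hinter : ¬ Admissible Pstar lam (interChain L L')) :
    FL Pstar lam L ∩ FL Pstar lam L' = ∅ := by

  rw [Set.eq_empty_iff_forall_notMem]
  intro x hx
  obtain ⟨hx1, hx2⟩ := hx
  apply hinter
  have hmemL : ∀ {K : Finset P}, K ∈ (interChain L L').ideals → K ∈ L.ideals :=
    fun hK => (Finset.mem_inter.mp hK).1
  have hmemL' : ∀ {K : Finset P}, K ∈ (interChain L L').ideals → K ∈ L'.ideals :=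
    fun hK => (Finset.mem_inter.mp hK).2
  -- key: no strict increase within a consecutive difference of the intersection chain
  have key : ∀ I J, Consec (interChain L L') I J → ∀ a ∈ (J \ I) ∩ Pstar,
      ∀ b ∈ (J \ I) ∩ Pstar, ¬ lam a < lam b := by
    intro I J hc a ha b hb hab
    rw [Finset.mem_inter, Finset.mem_sdiff] at ha hb
    have hxa : x a = lam a := hx1.1 a ha.2
    have hxb : x b = lam b := hx2.1 b hb.2
    set S := Finset.univ.filter (fun p => x p ≤ lam a) with hSdef
    have hSL : S ∈ L.ideals := sublevel_mem Pstar lam L hx1 (lam a)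
    have hSL' : S ∈ L'.ideals := sublevel_mem Pstar lam L' hx2 (lam a)
    have haS : a ∈ S := by simp [hSdef, hxa]
    have hbS : b ∉ S := by simp [hSdef, hxb]; linarith
    have hIS : I ⊆ S := by
      intro p hp
      have := FL_le_of_sep Pstar lam L hx1 (hmemL hc.1) hp ha.1.2
      simp only [hSdef, Finset.mem_filter, Finset.mem_univ, true_and]
      linarith
    have hSJ : S ⊆ J := by
      rcases L.chain S hSL J (hmemL hc.2.1) with h | h
      · exact h
      · exact absurd (h hb.1.1) hbS
    exact hc.2.2.2 S (Finset.mem_inter.mpr ⟨hSL, hSL'⟩)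
      ⟨Finset.ssubset_iff_subset_ne.mpr ⟨hIS, fun h => ha.1.2 (h ▸ haS)⟩,
       Finset.ssubset_iff_subset_ne.mpr ⟨hSJ, fun h => hbS (h ▸ hb.1.1)⟩⟩
  constructor
  · intro I J hc a ha b hb
    exact le_antisymm (not_lt.mp (key I J hc b hb a ha)) (not_lt.mp (key I J hc a ha b hb))
  · intro I J I' J' hc hc' hJI' a ha b hb
    rw [Finset.mem_inter, Finset.mem_sdiff] at ha hb
    have hxa : x a = lam a := hx1.1 a ha.2
    have hxb : x b = lam b := hx2.1 b hb.2
    have haI' : a ∈ I' := hJI' ha.1.1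
    have hle : lam a ≤ lam b := by
      have := FL_le_of_sep Pstar lam L hx1 (hmemL hc'.1) haI' hb.1.2
      linarith
    rcases lt_or_eq_of_le hle with h | heq
    · exact h
    exfalso
    -- consecutive pairs of a and b within L
    obtain ⟨A₀, B₀, hca, hma⟩ := exists_consec_mem L a
    obtain ⟨A, B, hcb, hmb⟩ := exists_consec_mem L b
    rw [Finset.mem_sdiff] at hma hmb
    rcases consec_trichotomy L hca hcb with ⟨hA, hB⟩ | hord | hord
    · -- a, b in the same consecutive difference of L, but I' separates them
      rcases consec_dichotomy L hcb (hmemL hc'.1) with h | h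
      · exact hb.1.2 (h hmb.1)
      · rw [← hA] at h
        exact hma.2 (h haI')
    · -- a's difference strictly before b's: lam a < lam b in L
      have := hL.2 A₀ B₀ A B hca hcb hord a
        (Finset.mem_inter.mpr ⟨Finset.mem_sdiff.mpr hma, ha.2⟩) b
        (Finset.mem_inter.mpr ⟨Finset.mem_sdiff.mpr hmb, hb.2⟩)
      linarith
    · -- b's difference strictly before a's: lam b < lam a in L
      have := hL.2 A B A₀ B₀ hcb hca hord b
        (Finset.mem_inter.mpr ⟨Finset.mem_sdiff.mpr hmb, hb.2⟩) a
        (Finset.mem_inter.mpr ⟨Finset.mem_sdiff.mpr hma, ha.2⟩)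
      linarith
end

section
/- For λ-admissible chains L and L', the polytope F_L is a face of F_{L'} if and only if L ⊆ L' (i.e., L is obtained from L' by deleting some ideals). -/
open Classical

variable {P : Type} [Fintype P] [DecidableEq P] [PartialOrder P]

section Helpers

variable {L : IdealChain P}

lemma exists_cover (L : IdealChain P) (p : P) :
    ∃ A B, Consec L A B ∧ p ∈ B \ A := by
  classical
  have hS : (L.ideals.filter (fun K => p ∈ K)).Nonempty :=
    ⟨Finset.univ, Finset.mem_filter.2 ⟨L.univ_mem, Finset.mem_univ p⟩⟩
  obtain ⟨B, hB, hBmin⟩ := Finset.exists_min_image _ (fun K => K.card) hS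
  rw [Finset.mem_filter] at hB
  obtain ⟨hBL, hpB⟩ := hB
  have hT : (L.ideals.filter (fun K => K ⊂ B)).Nonempty :=
    ⟨∅, Finset.mem_filter.2 ⟨L.empty_mem, Finset.empty_ssubset.2 ⟨p, hpB⟩⟩⟩
  obtain ⟨A, hA, hAmax⟩ := Finset.exists_max_image _ (fun K => K.card) hT
  rw [Finset.mem_filter] at hA
  obtain ⟨hAL, hAB⟩ := hA
  have hpA : p ∉ A := by
    intro hpA
    have h1 : B.card ≤ A.card := hBmin A (Finset.mem_filter.2 ⟨hAL, hpA⟩)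
    have h2 : A.card < B.card := Finset.card_lt_card hAB
    omega
  refine ⟨A, B, ⟨hAL, hBL, hAB, ?_⟩, Finset.mem_sdiff.2 ⟨hpB, hpA⟩⟩
  rintro K hK ⟨h1, h2⟩
  have := hAmax K (Finset.mem_filter.2 ⟨hK, h2⟩)
  have := Finset.card_lt_card h1
  omega

lemma cover_below {A B : Finset P} (h : Consec L A B) {p : P} (hp : p ∈ B \ A)
    {K : Finset P} (hK : K ∈ L.ideals) (hpK : p ∈ K) : B ⊆ K := by
  obtain ⟨hA, hB, hAB, hcon⟩ := h
  rw [Finset.mem_sdiff] at hp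
  rcases L.chain B hB K hK with h1 | h1
  · exact h1
  · rcases L.chain K hK A hA with h2 | h2
    · exact absurd (h2 hpK) hp.2
    · by_cases heq : K = B
      · exact heq ▸ subset_rfl
      · by_cases heq2 : A = K
        · exact absurd (heq2 ▸ hpK) hp.2
        · exact absurd ⟨Finset.ssubset_iff_subset_ne.2 ⟨h2, heq2⟩,
            Finset.ssubset_iff_subset_ne.2 ⟨h1, heq⟩⟩ (hcon K hK)

lemma cover_above {A B : Finset P} (h : Consec L A B) {p : P} (hp : p ∈ B \ A)
    {K : Finset P} (hK : K ∈ L.ideals) (hpK : p ∉ K) : K ⊆ A := by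
  obtain ⟨hA, hB, hAB, hcon⟩ := h
  rw [Finset.mem_sdiff] at hp
  rcases L.chain K hK A hA with h1 | h1
  · exact h1
  · rcases L.chain B hB K hK with h2 | h2
    · exact absurd (h2 hp.1) hpK
    · by_cases heq : K = B
      · exact absurd (heq ▸ hp.1) hpK
      · by_cases heq2 : A = K
        · exact heq2 ▸ subset_rfl
        · exact absurd ⟨Finset.ssubset_iff_subset_ne.2 ⟨h1, heq2⟩,
            Finset.ssubset_iff_subset_ne.2 ⟨h2, heq⟩⟩ (hcon K hK)

lemma consec_left_eq {A A' B : Finset P} (h1 : Consec L A B) (h2 : Consec L A' B) :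
    A = A' := by
  rcases L.chain A h1.1 A' h2.1 with h | h
  · by_contra hne
    exact h2.2.2.2 A h1.1 ⟨Finset.ssubset_iff_subset_ne.2 ⟨h, hne⟩ |> fun hs =>
      (absurd hs (by intro hss; exact h1.2.2.2 A' h2.1 ⟨hss, h2.2.2.1⟩)), h1.2.2.1⟩
  · by_contra hne
    exact h2.2.2.2 A h1.1 ⟨Finset.ssubset_iff_subset_ne.2 ⟨h, fun h' => hne h'.symm⟩, h1.2.2.1⟩

lemma cover_order {A₁ B₁ A₂ B₂ : Finset P} (h1 : Consec L A₁ B₁) (h2 : Consec L A₂ B₂) :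
    (A₁ = A₂ ∧ B₁ = B₂) ∨ B₁ ⊆ A₂ ∨ B₂ ⊆ A₁ := by
  by_cases hB : B₁ = B₂
  · exact Or.inl ⟨consec_left_eq h1 (hB ▸ h2), hB⟩
  · rcases L.chain B₁ h1.2.1 B₂ h2.2.1 with h | h
    · refine Or.inr (Or.inl ?_)
      rcases L.chain B₁ h1.2.1 A₂ h2.1 with h' | h'
      · exact h'
      · by_cases heq : A₂ = B₁
        · exact heq ▸ subset_rfl
        · exact absurd ⟨Finset.ssubset_iff_subset_ne.2 ⟨h', heq⟩,
            Finset.ssubset_iff_subset_ne.2 ⟨h, hB⟩⟩ (h2.2.2.2 B₁ h1.2.1)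
    · refine Or.inr (Or.inr ?_)
      rcases L.chain B₂ h2.2.1 A₁ h1.1 with h' | h'
      · exact h'
      · by_cases heq : A₁ = B₂
        · exact heq ▸ subset_rfl
        · exact absurd ⟨Finset.ssubset_iff_subset_ne.2 ⟨h', heq⟩,
            Finset.ssubset_iff_subset_ne.2 ⟨h, fun h'' => hB h''.symm⟩⟩ (h1.2.2.2 B₂ h2.2.1)

lemma exists_marked_before {Pstar : Finset P}
    (hext : ∀ p : P, IsExtremalElt p → p ∈ Pstar) (L : IdealChain P) (p : P) :
    ∃ a ∈ Pstar, ∀ K ∈ L.ideals, p ∈ K → a ∈ K := by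
  classical
  obtain ⟨m, hm, hmin⟩ := Finset.exists_minimal (s := Finset.univ.filter (fun q => q ≤ p))
    ⟨p, Finset.mem_filter.2 ⟨Finset.mem_univ p, le_refl p⟩⟩
  have hmp : m ≤ p := (Finset.mem_filter.1 hm).2
  have hmin' : ∀ q, q ≤ m → q = m := by
    intro q hq
    by_contra hne
    exact hne (le_antisymm hq (hmin (Finset.mem_filter.2 ⟨Finset.mem_univ q, hq.trans hmp⟩) hq))
  exact ⟨m, hext m (Or.inl hmin'), fun K hK hpK => L.isIdeal K hK p hpK m hmp⟩

lemma exists_marked_after {Pstar : Finset P}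
    (hext : ∀ p : P, IsExtremalElt p → p ∈ Pstar) (L : IdealChain P) (p : P) :
    ∃ b ∈ Pstar, ∀ K ∈ L.ideals, b ∈ K → p ∈ K := by
  classical
  obtain ⟨m, hm, hmax⟩ := Finset.exists_maximal (s := Finset.univ.filter (fun q => p ≤ q))
    ⟨p, Finset.mem_filter.2 ⟨Finset.mem_univ p, le_refl p⟩⟩
  have hmp : p ≤ m := (Finset.mem_filter.1 hm).2
  have hmax' : ∀ q, m ≤ q → q = m := by
    intro q hq
    by_contra hne
    exact hne (le_antisymm (hmax (Finset.mem_filter.2 ⟨Finset.mem_univ q, hmp.trans hq⟩) hq) hq)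
  exact ⟨m, hext m (Or.inr hmax'), fun K hK hmK => L.isIdeal K hK m hmK p hmp⟩

lemma lam_le_of_before {Pstar : Finset P} {lam : P → ℝ}
    (hL : Admissible Pstar lam L) {a b : P} (ha : a ∈ Pstar) (hb : b ∈ Pstar)
    (hab : ∀ K ∈ L.ideals, b ∈ K → a ∈ K) : lam a ≤ lam b := by
  obtain ⟨A₁, B₁, h1, hpa⟩ := exists_cover L a
  obtain ⟨A₂, B₂, h2, hpb⟩ := exists_cover L b
  rcases cover_order h1 h2 with ⟨hA, hB⟩ | h | h
  · subst hA; subst hB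
    exact le_of_eq (hL.1 A₁ B₁ h1 a (Finset.mem_inter.2 ⟨hpa, ha⟩) b (Finset.mem_inter.2 ⟨hpb, hb⟩))
  · exact (hL.2 A₁ B₁ A₂ B₂ h1 h2 h a (Finset.mem_inter.2 ⟨hpa, ha⟩)
      b (Finset.mem_inter.2 ⟨hpb, hb⟩)).le
  · have hbA₁ : b ∈ A₁ := h (Finset.mem_sdiff.1 hpb).1
    exact absurd (hab A₁ h1.1 hbA₁) (Finset.mem_sdiff.1 hpa).2

lemma lam_lt_of_cut {Pstar : Finset P} {lam : P → ℝ}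
    (hL : Admissible Pstar lam L) {I : Finset P} (hI : I ∈ L.ideals) {a b : P}
    (ha : a ∈ Pstar) (haI : a ∈ I) (hb : b ∈ Pstar) (hbI : b ∉ I) : lam a < lam b := by
  obtain ⟨A₁, B₁, h1, hpa⟩ := exists_cover L a
  obtain ⟨A₂, B₂, h2, hpb⟩ := exists_cover L b
  have hBI : B₁ ⊆ I := cover_below h1 hpa hI haI
  have hIA : I ⊆ A₂ := cover_above h2 hpb hI hbI
  exact hL.2 A₁ B₁ A₂ B₂ h1 h2 (hBI.trans hIA) a (Finset.mem_inter.2 ⟨hpa, ha⟩)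
    b (Finset.mem_inter.2 ⟨hpb, hb⟩)

lemma exists_sep (Pstar : Finset P) (lam : P → ℝ)
    (hext : ∀ p : P, IsExtremalElt p → p ∈ Pstar)
    (L : IdealChain P) (hL : Admissible Pstar lam L) {I : Finset P} (hI : I ∈ L.ideals) :
    ∃ x ∈ FL Pstar lam L, ∀ p ∈ I, ∀ q, q ∉ I → x p < x q := by
  classical
  have hSbne : ∀ p : P,
      (Pstar.filter (fun a => ∀ K ∈ L.ideals, p ∈ K → a ∈ K)).Nonempty := by
    intro p
    obtain ⟨a, ha, h⟩ := exists_marked_before hext L p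
    exact ⟨a, Finset.mem_filter.2 ⟨ha, h⟩⟩
  have hSane : ∀ p : P,
      (Pstar.filter (fun b => ∀ K ∈ L.ideals, b ∈ K → p ∈ K)).Nonempty := by
    intro p
    obtain ⟨b, hb, h⟩ := exists_marked_after hext L p
    exact ⟨b, Finset.mem_filter.2 ⟨hb, h⟩⟩
  set z : P → ℝ :=
    fun p => (Pstar.filter (fun a => ∀ K ∈ L.ideals, p ∈ K → a ∈ K)).sup' (hSbne p) lam with hz
  set y : P → ℝ :=
    fun p => (Pstar.filter (fun b => ∀ K ∈ L.ideals, b ∈ K → p ∈ K)).inf' (hSane p) lam with hy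
  set x : P → ℝ := fun p => if p ∈ I then z p else y p with hxdef
  have hxI : ∀ p, p ∈ I → x p = z p := by
    intro p hp; rw [hxdef]; exact if_pos hp
  have hxnI : ∀ p, p ∉ I → x p = y p := by
    intro p hp; rw [hxdef]; exact if_neg hp
  have hzpin : ∀ a ∈ Pstar, z a = lam a := by
    intro a ha
    refine le_antisymm (Finset.sup'_le _ _ ?_) (Finset.le_sup' lam ?_)
    · intro b hb
      rw [Finset.mem_filter] at hb
      exact lam_le_of_before hL hb.1 ha hb.2
    · exact Finset.mem_filter.2 ⟨ha, fun K _ h => h⟩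
  have hypin : ∀ a ∈ Pstar, y a = lam a := by
    intro a ha
    refine le_antisymm (Finset.inf'_le lam ?_) (Finset.le_inf' _ _ ?_)
    · exact Finset.mem_filter.2 ⟨ha, fun K _ h => h⟩
    · intro b hb
      rw [Finset.mem_filter] at hb
      exact lam_le_of_before hL ha hb.1 hb.2
  have hcut : ∀ p ∈ I, ∀ q, q ∉ I → z p < y q := by
    intro p hp q hq
    obtain ⟨a, haS, hza⟩ := Finset.exists_mem_eq_sup' (hSbne p) lam
    obtain ⟨b, hbS, hyb⟩ := Finset.exists_mem_eq_inf' (hSane q) lam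
    rw [Finset.mem_filter] at haS hbS
    have haI : a ∈ I := haS.2 I hI hp
    have hbI : b ∉ I := fun h => hq (hbS.2 I hI h)
    have hab : lam a < lam b := lam_lt_of_cut hL hI haS.1 haI hbS.1 hbI
    calc z p = lam a := hza
    _ < lam b := hab
    _ = y q := hyb.symm
  have hzmono : ∀ p q : P, (∀ K ∈ L.ideals, q ∈ K → p ∈ K) → z p ≤ z q := by
    intro p q hpq
    refine Finset.sup'_le _ _ ?_
    intro a ha
    rw [Finset.mem_filter] at ha
    exact Finset.le_sup' lam (Finset.mem_filter.2 ⟨ha.1, fun K hK h => ha.2 K hK (hpq K hK h)⟩)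
  have hymono : ∀ p q : P, (∀ K ∈ L.ideals, q ∈ K → p ∈ K) → y p ≤ y q := by
    intro p q hpq
    refine Finset.le_inf' _ _ ?_
    intro b hb
    rw [Finset.mem_filter] at hb
    exact Finset.inf'_le lam (Finset.mem_filter.2 ⟨hb.1, fun K hK h => hpq K hK (hb.2 K hK h)⟩)
  have hsep : ∀ p ∈ I, ∀ q, q ∉ I → x p < x q := by
    intro p hp q hq
    rw [hxI p hp, hxnI q hq]
    exact hcut p hp q hq
  refine ⟨x, ⟨?_, ?_, ?_⟩, hsep⟩
  · intro a ha
    by_cases h : a ∈ I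
    · rw [hxI a h]; exact hzpin a ha
    · rw [hxnI a h]; exact hypin a ha
  · -- constancy on consecutive differences
    intro C D hCD p hp q hq
    have hiff : ∀ K ∈ L.ideals, (p ∈ K ↔ q ∈ K) := by
      intro K hK
      constructor
      · intro h; exact cover_below hCD hp hK h (Finset.mem_sdiff.1 hq).1
      · intro h; exact cover_below hCD hq hK h (Finset.mem_sdiff.1 hp).1
    have hz_eq : z p = z q :=
      le_antisymm (hzmono p q (fun K hK h => (hiff K hK).2 h))
        (hzmono q p (fun K hK h => (hiff K hK).1 h))
    have hy_eq : y p = y q :=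
      le_antisymm (hymono p q (fun K hK h => (hiff K hK).2 h))
        (hymono q p (fun K hK h => (hiff K hK).1 h))
    by_cases h : p ∈ I
    · rw [hxI p h, hxI q ((hiff I hI).1 h)]; exact hz_eq
    · rw [hxnI p h, hxnI q (fun hqI => h ((hiff I hI).2 hqI))]; exact hy_eq
  · -- weak monotonicity
    intro C D C' D' hCD hC'D' hDC' p hp q hq
    have hpq : ∀ K ∈ L.ideals, q ∈ K → p ∈ K := by
      intro K hK h
      exact cover_below hC'D' hq hK h
        (hC'D'.2.2.1.subset (hDC' (Finset.mem_sdiff.1 hp).1))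
    by_cases hpI : p ∈ I
    · by_cases hqI : q ∈ I
      · rw [hxI p hpI, hxI q hqI]; exact hzmono p q hpq
      · exact (hsep p hpI q hqI).le
    · by_cases hqI : q ∈ I
      · exact absurd (hpq I hI hqI) hpI
      · rw [hxnI p hpI, hxnI q hqI]; exact hymono p q hpq

lemma mem_of_sep (L' : IdealChain P) {x : P → ℝ}
    (hconst : ∀ A B, Consec L' A B → ∀ p ∈ B \ A, ∀ q ∈ B \ A, x p = x q)
    (hmono : ∀ A B A' B', Consec L' A B → Consec L' A' B' → B ⊆ A' →
      ∀ p ∈ B \ A, ∀ q ∈ B' \ A', x p ≤ x q)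
    {I : Finset P} (hsep : ∀ p ∈ I, ∀ q, q ∉ I → x p < x q) : I ∈ L'.ideals := by
  classical
  have hS : (L'.ideals.filter (fun K => K ⊆ I)).Nonempty :=
    ⟨∅, Finset.mem_filter.2 ⟨L'.empty_mem, Finset.empty_subset I⟩⟩
  obtain ⟨J, hJ, hJmax⟩ := Finset.exists_max_image _ (fun K => K.card) hS
  rw [Finset.mem_filter] at hJ
  suffices h : I ⊆ J by
    have : I = J := le_antisymm h hJ.2
    exact this ▸ hJ.1
  intro p hp
  obtain ⟨A, B, hAB, hpB⟩ := exists_cover L' p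
  have hBI : B ⊆ I := by
    intro r hr
    by_contra hrI
    have h1 : x p < x r := hsep p hp r hrI
    by_cases hrA : r ∈ A
    · obtain ⟨A₂, B₂, h2, hr2⟩ := exists_cover L' r
      have hB₂A : B₂ ⊆ A := cover_below h2 hr2 hAB.1 hrA
      exact absurd (hmono A₂ B₂ A B h2 hAB hB₂A r hr2 p hpB) (not_le.2 h1)
    · exact absurd (hconst A B hAB p hpB r (Finset.mem_sdiff.2 ⟨hr, hrA⟩)) h1.ne
  have hBJ : B ⊆ J := by
    rcases L'.chain B hAB.2.1 J hJ.1 with h | h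
    · exact h
    · have hc : B.card ≤ J.card := hJmax B (Finset.mem_filter.2 ⟨hAB.2.1, hBI⟩)
      exact le_of_eq (Finset.eq_of_subset_of_card_le h hc).symm
  exact hBJ (Finset.mem_sdiff.1 hpB).1

lemma FL_subset_of_subchain {Pstar : Finset P} {lam : P → ℝ} {L L' : IdealChain P}
    (hsub : L.ideals ⊆ L'.ideals) : FL Pstar lam L ⊆ FL Pstar lam L' := by
  intro x hx
  obtain ⟨h1, h2, h3⟩ := hx
  have key : ∀ A B, Consec L' A B → ∃ C D, Consec L C D ∧ B \ A ⊆ D \ C := by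
    intro A B hAB
    obtain ⟨p, hpB, hpA⟩ := Finset.exists_of_ssubset hAB.2.2.1
    have hp : p ∈ B \ A := Finset.mem_sdiff.2 ⟨hpB, hpA⟩
    obtain ⟨C, D, hCD, hpCD⟩ := exists_cover L p
    refine ⟨C, D, hCD, ?_⟩
    have hCA : C ⊆ A := cover_above hAB hp (hsub hCD.1) (Finset.mem_sdiff.1 hpCD).2
    have hBD : B ⊆ D := cover_below hAB hp (hsub hCD.2.1) (Finset.mem_sdiff.1 hpCD).1
    intro q hq
    rw [Finset.mem_sdiff] at hq ⊢
    exact ⟨hBD hq.1, fun h => hq.2 (hCA h)⟩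
  refine ⟨h1, ?_, ?_⟩
  · intro A B hAB p hp q hq
    obtain ⟨C, D, hCD, hs⟩ := key A B hAB
    exact h2 C D hCD p (hs hp) q (hs hq)
  · intro A B A' B' hAB hA'B' hBA' p hp q hq
    obtain ⟨C, D, hCD, hs1⟩ := key A B hAB
    obtain ⟨C', D', hC'D', hs2⟩ := key A' B' hA'B'
    rcases cover_order hCD hC'D' with ⟨hC, hD⟩ | h | h
    · subst hC; subst hD
      exact le_of_eq (h2 C D hCD p (hs1 hp) q (hs2 hq))
    · exact h3 C D C' D' hCD hC'D' h p (hs1 hp) q (hs2 hq)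
    · -- D' ⊆ C : impossible
      have hCA : C ⊆ A := cover_above hAB hp (hsub hCD.1) (Finset.mem_sdiff.1 (hs1 hp)).2
      have hqC : q ∈ C := h (Finset.mem_sdiff.1 (hs2 hq)).1
      have : q ∈ A' := hBA' (hAB.2.2.1.subset (hCA hqC))
      exact absurd this (Finset.mem_sdiff.1 hq).2

lemma extreme_aux {Pstar : Finset P} {lam : P → ℝ} {L L' : IdealChain P}
    (hsub : L.ideals ⊆ L'.ideals) {x1 x2 : P → ℝ}
    (hx1 : x1 ∈ FL Pstar lam L') (hx2 : x2 ∈ FL Pstar lam L')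
    {a b : ℝ} (ha : 0 < a) (hb : 0 < b)
    (hxL : a • x1 + b • x2 ∈ FL Pstar lam L) : x1 ∈ FL Pstar lam L := by
  obtain ⟨g1, g2, g3⟩ := hxL
  obtain ⟨f1, f2, f3⟩ := hx1
  obtain ⟨e1, e2, e3⟩ := hx2
  refine ⟨f1, ?_, ?_⟩
  · intro C D hCD p hp q hq
    obtain ⟨A₁, B₁, h1, hp1⟩ := exists_cover L' p
    obtain ⟨A₂, B₂, h2, hq2⟩ := exists_cover L' q
    have hx_pq : a * x1 p + b * x2 p = a * x1 q + b * x2 q := by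
      have := g2 C D hCD p hp q hq
      simpa [Pi.add_apply, Pi.smul_apply, smul_eq_mul] using this
    rcases cover_order h1 h2 with ⟨hA, hB⟩ | h | h
    · subst hA; subst hB
      exact f2 A₁ B₁ h1 p hp1 q hq2
    · have l1 := f3 A₁ B₁ A₂ B₂ h1 h2 h p hp1 q hq2
      have l2 := e3 A₁ B₁ A₂ B₂ h1 h2 h p hp1 q hq2
      nlinarith
    · have l1 := f3 A₂ B₂ A₁ B₁ h2 h1 h q hq2 p hp1
      have l2 := e3 A₂ B₂ A₁ B₁ h2 h1 h q hq2 p hp1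
      nlinarith
  · intro C D C' D' hCD hC'D' hDC' p hp q hq
    obtain ⟨A₁, B₁, h1, hp1⟩ := exists_cover L' p
    obtain ⟨A₂, B₂, h2, hq2⟩ := exists_cover L' q
    have hB₁ : B₁ ⊆ D := cover_below h1 hp1 (hsub hCD.2.1) (Finset.mem_sdiff.1 hp).1
    have hA₂ : C' ⊆ A₂ := cover_above h2 hq2 (hsub hC'D'.1) (Finset.mem_sdiff.1 hq).2
    exact f3 A₁ B₁ A₂ B₂ h1 h2 (hB₁.trans (hDC'.trans hA₂)) p hp1 q hq2

end Helpers

/-- `F_L` is a face of `F_{L'}` if and only if the chain `L` is contained in the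
chain `L'`. -/
theorem FL_face_iff_subchain (Pstar : Finset P) (lam : P → ℝ)
    (hext : ∀ p : P, IsExtremalElt p → p ∈ Pstar) (hlam : LamMono Pstar lam)
    (L L' : IdealChain P) (hL : Admissible Pstar lam L) (hL' : Admissible Pstar lam L') :
    IsExtreme ℝ (FL Pstar lam L') (FL Pstar lam L) ↔ L.ideals ⊆ L'.ideals := by
  constructor
  · intro h I hI
    obtain ⟨x, hxL, hsep⟩ := exists_sep Pstar lam hext L hL hI
    have hx' := h.1 hxL
    exact mem_of_sep L' hx'.2.1 hx'.2.2 hsep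
  · intro hsub
    refine ⟨FL_subset_of_subchain hsub, ?_⟩
    rintro x1 hx1 x2 hx2 x hxL ⟨a, b, ha, hb, hab, rfl⟩
    exact extreme_aux hsub hx1 hx2 ha hb hxL
end

section
/- The marked order polytope O(P,λ) equals the union over all λ-compatible linear extensions σ of P of the marked order polytopes O(P_σ, λ). -/
open Classical

variable {P : Type} [Fintype P] [DecidableEq P] [PartialOrder P]

/-- `σ` encodes a linear extension of the poset `P`. -/
def LinExt (σ : P ≃ Fin (Fintype.card P)) : Prop := ∀ p q : P, p ≤ q → σ p ≤ σ q

/-- The linear extension `σ` is λ-compatible: `lam` preserves the linear order `≼_σ`. -/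
def LamCompat (Pstar : Finset P) (lam : P → ℝ) (σ : P ≃ Fin (Fintype.card P)) : Prop :=
  ∀ a ∈ Pstar, ∀ b ∈ Pstar, σ a ≤ σ b → lam a ≤ lam b

/-- The marked order polytope `O(P_σ, λ)` of the linear extension `σ`. -/
def MOPsigma (Pstar : Finset P) (lam : P → ℝ) (σ : P ≃ Fin (Fintype.card P)) :
    Set (P → ℝ) :=
  {x | (∀ p q : P, σ p ≤ σ q → x p ≤ x q) ∧ ∀ a ∈ Pstar, x a = lam a}

/-- The marked order polytope equals the union of the marked order polytopes of all
λ-compatible linear extensions of `P`. -/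
theorem MOP_eq_union_linext (Pstar : Finset P) (lam : P → ℝ)
    (hext : ∀ p : P, IsExtremalElt p → p ∈ Pstar) (hlam : LamMono Pstar lam) :
    MOP Pstar lam =
      ⋃ σ ∈ {σ : P ≃ Fin (Fintype.card P) | LinExt σ ∧ LamCompat Pstar lam σ},
        MOPsigma Pstar lam σ := by
  ext x
  simp only [Set.mem_iUnion, Set.mem_setOf_eq]
  constructor
  · rintro ⟨hmono, hmark⟩
    set f : P → Lex (ℝ × LinearExtension P) :=
      fun p => toLex (x p, toLinearExtension p) with hf
    have hinj : Function.Injective f := by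
      intro p q h
      have := congrArg (fun y => (ofLex y).2) h
      exact this
    have hfle : ∀ p q : P, p ≤ q → f p ≤ f q := by
      intro p q hpq
      rcases eq_or_lt_of_le hpq with rfl | hpq
      · exact le_refl _
      · have h1 : x p ≤ x q := hmono _ _ hpq.le
        rcases lt_or_eq_of_le h1 with h1 | h1
        · exact le_of_lt (Prod.Lex.lt_iff.mpr (Or.inl h1))
        · refine le_of_lt (Prod.Lex.lt_iff.mpr (Or.inr ⟨h1, ?_⟩))
          have hle := toLinearExtension.monotone' hpq.le
          exact lt_of_le_of_ne hle (fun h => hpq.ne h)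
    have hxle : ∀ p q : P, f p ≤ f q → x p ≤ x q := by
      intro p q h
      rcases Prod.Lex.le_iff.mp h with h | h
      · exact h.le
      · exact h.1.le
    set s : Finset (Lex (ℝ × LinearExtension P)) := Finset.univ.image f with hs
    have hcard : s.card = Fintype.card P := by
      rw [hs, Finset.card_image_of_injective _ hinj, Finset.card_univ]
    have hgmem : ∀ p : P, f p ∈ s := fun p =>
      Finset.mem_image_of_mem f (Finset.mem_univ p)
    set g : P → s := fun p => ⟨f p, hgmem p⟩ with hg
    have hgbij : Function.Bijective g := by
      have hcard2 : Fintype.card P = Fintype.card s := by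
        rw [Fintype.card_coe, hcard]
      rw [Fintype.bijective_iff_injective_and_card]
      exact ⟨fun a b h => hinj (congrArg Subtype.val h), hcard2⟩
    set iso := s.orderIsoOfFin hcard with hiso
    set σ : P ≃ Fin (Fintype.card P) :=
      (Equiv.ofBijective g hgbij).trans iso.symm.toEquiv with hσ
    have key : ∀ p q : P, σ p ≤ σ q ↔ f p ≤ f q := by
      intro p q
      rw [hσ]
      simp only [Equiv.trans_apply]
      rw [show (iso.symm.toEquiv (Equiv.ofBijective g hgbij p) ≤
          iso.symm.toEquiv (Equiv.ofBijective g hgbij q)) ↔ _ from iso.symm.le_iff_le]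
      rfl
    have hσmono : ∀ p q : P, σ p ≤ σ q → x p ≤ x q :=
      fun p q h => hxle p q ((key p q).mp h)
    refine ⟨σ, ⟨fun p q h => (key p q).mpr (hfle p q h), ?_⟩, hσmono, hmark⟩
    intro a ha b hb hab
    rw [← hmark a ha, ← hmark b hb]
    exact hσmono a b hab
  · rintro ⟨σ, ⟨hlin, _⟩, hσmono, hmark⟩
    exact ⟨fun p q h => hσmono p q (hlin p q h), hmark⟩
end

section
/- Each maximal-dimension cell of K_{P,λ} is itself a marked order polytope: for every λ-compatible linear extension P_σ of P, the polytope F_{L̃_σ} equals O(P_σ, λ), and it is a product of simplices; hence K_{P,λ} is a cubosimplicial subdivision of O(P,λ). -/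
open Classical

variable {P : Type} [Fintype P] [DecidableEq P] [PartialOrder P]

/-- The chain of order ideals `σ⁻¹({1,...,i})` associated to a linear extension `σ`. -/
noncomputable def maxChainIdeals (σ : P ≃ Fin (Fintype.card P)) : Finset (Finset P) :=
  (Finset.range (Fintype.card P + 1)).image
    (fun i => Finset.univ.filter (fun p => ((σ p : ℕ) < i)))

/-- `S` is a product of simplices: the image of a product of standard simplices
under an affine map injective on that product. -/
def IsProdOfSimplices {P : Type} [Fintype P] (S : Set (P → ℝ)) : Prop :=
  ∃ (k : ℕ) (d : Fin k → ℕ)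
    (e : ((i : Fin k) → (Fin (d i + 1) → ℝ)) →ᵃ[ℝ] (P → ℝ)),
    Set.InjOn e {x | ∀ i, x i ∈ stdSimplex ℝ (Fin (d i + 1))} ∧
    e '' {x | ∀ i, x i ∈ stdSimplex ℝ (Fin (d i + 1))} = S

section ChainFacts
variable {P : Type} [Fintype P] [DecidableEq P] [PartialOrder P]

/-- minimal ideal of the chain containing p -/
lemma exists_Jmin (L : IdealChain P) (p : P) :
    ∃ J ∈ L.ideals, p ∈ J ∧ ∀ K ∈ L.ideals, p ∈ K → J ⊆ K := by
  classical
  have hne : ((L.ideals.filter (fun I => p ∈ I))).Nonempty :=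
    ⟨Finset.univ, by simp [L.univ_mem]⟩
  obtain ⟨J, hJmem, hJcard⟩ := Finset.exists_min_image _ (fun I => I.card) hne
  simp only [Finset.mem_filter] at hJmem
  refine ⟨J, hJmem.1, hJmem.2, ?_⟩
  intro K hK hpK
  have hcard := hJcard K (by simp [hK, hpK])
  rcases L.chain J hJmem.1 K hK with h | h
  · exact h
  · exact le_of_eq (Finset.eq_of_subset_of_card_le h hcard).symm

lemma exists_Imax (L : IdealChain P) (p : P) :
    ∃ I ∈ L.ideals, p ∉ I ∧ ∀ K ∈ L.ideals, p ∉ K → K ⊆ I := by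
  classical
  have hne : ((L.ideals.filter (fun I => p ∉ I))).Nonempty :=
    ⟨∅, by simp [L.empty_mem]⟩
  obtain ⟨I, hImem, hIcard⟩ := Finset.exists_max_image _ (fun I => I.card) hne
  simp only [Finset.mem_filter] at hImem
  refine ⟨I, hImem.1, hImem.2, ?_⟩
  intro K hK hpK
  have hcard := hIcard K (by simp [hK, hpK])
  rcases L.chain K hK I hImem.1 with h | h
  · exact h
  · exact (Finset.eq_of_subset_of_card_le h hcard) ▸ (le_refl _)

noncomputable def Jmin (L : IdealChain P) (p : P) : Finset P := (exists_Jmin L p).choose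

noncomputable def Imax (L : IdealChain P) (p : P) : Finset P := (exists_Imax L p).choose

lemma Jmin_spec (L : IdealChain P) (p : P) :
    Jmin L p ∈ L.ideals ∧ p ∈ Jmin L p ∧ ∀ K ∈ L.ideals, p ∈ K → Jmin L p ⊆ K := by
  have h := (exists_Jmin L p).choose_spec
  exact ⟨h.1, h.2.1, h.2.2⟩

lemma Imax_spec (L : IdealChain P) (p : P) :
    Imax L p ∈ L.ideals ∧ p ∉ Imax L p ∧ ∀ K ∈ L.ideals, p ∉ K → K ⊆ Imax L p := by
  have h := (exists_Imax L p).choose_spec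
  exact ⟨h.1, h.2.1, h.2.2⟩

lemma consec_Imax_Jmin (L : IdealChain P) (p : P) :
    Consec L (Imax L p) (Jmin L p) ∧ p ∈ Jmin L p \ Imax L p := by
  obtain ⟨hJm, hpJ, hJmin⟩ := Jmin_spec L p
  obtain ⟨hIm, hpI, hImax⟩ := Imax_spec L p
  have hIJ : Imax L p ⊂ Jmin L p := by
    rcases L.chain _ hIm _ hJm with h | h
    · exact Finset.ssubset_iff_of_subset h |>.mpr ⟨p, hpJ, hpI⟩
    · exact absurd (h hpJ) hpI
  refine ⟨⟨hIm, hJm, hIJ, ?_⟩, Finset.mem_sdiff.mpr ⟨hpJ, hpI⟩⟩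
  rintro K hK ⟨h1, h2⟩
  by_cases hpK : p ∈ K
  · exact (not_subset_of_ssubset h2) (hJmin K hK hpK)
  · exact (not_subset_of_ssubset h1) (hImax K hK hpK)

lemma consec_unique (L : IdealChain P) {I J : Finset P} {p : P}
    (hC : Consec L I J) (hp : p ∈ J \ I) : I = Imax L p ∧ J = Jmin L p := by
  obtain ⟨hIm, hJm, hIJ, hmax⟩ := hC
  rw [Finset.mem_sdiff] at hp
  obtain ⟨hJm', hpJ', hJmin⟩ := Jmin_spec L p
  obtain ⟨hIm', hpI', hImax⟩ := Imax_spec L p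
  have hJsub : Jmin L p ⊆ J := hJmin J hJm hp.1
  have hIsub : I ⊆ Imax L p := hImax I hIm hp.2
  have hIJp : I ⊂ Jmin L p := by
    rcases L.chain I hIm _ hJm' with h | h
    · exact Finset.ssubset_iff_of_subset h |>.mpr ⟨p, hpJ', hp.2⟩
    · exact absurd (h hpJ') hp.2
  have hJ : J = Jmin L p := by
    by_contra hne
    exact hmax _ hJm' ⟨hIJp, Finset.ssubset_iff_subset_ne.mpr ⟨hJsub, fun e => hne e.symm⟩⟩
  have hIpJ : Imax L p ⊂ J := by
    rcases L.chain _ hIm' J hJm with h | h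
    · exact Finset.ssubset_iff_of_subset h |>.mpr ⟨p, hp.1, hpI'⟩
    · exact absurd (h hp.1) hpI'
  have hI : I = Imax L p := by
    by_contra hne
    exact hmax _ hIm' ⟨Finset.ssubset_iff_subset_ne.mpr ⟨hIsub, hne⟩, hIpJ⟩
  exact ⟨hI, hJ⟩

/-- block index of p -/
noncomputable def bIdx (L : IdealChain P) (p : P) : ℕ := (Jmin L p).card

lemma Jmin_eq_of_bIdx_eq (L : IdealChain P) {p q : P} (h : bIdx L p = bIdx L q) :
    Jmin L p = Jmin L q := by
  unfold bIdx at h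
  rcases L.chain _ (Jmin_spec L p).1 _ (Jmin_spec L q).1 with hs | hs
  · exact Finset.eq_of_subset_of_card_le hs (le_of_eq h.symm)
  · exact (Finset.eq_of_subset_of_card_le hs (le_of_eq h)).symm

lemma Imax_eq_of_Jmin_eq (L : IdealChain P) {p q : P} (h : Jmin L p = Jmin L q) :
    Imax L p = Imax L q := by
  obtain ⟨hCp, _⟩ := consec_Imax_Jmin L p
  obtain ⟨hCq, hq⟩ := consec_Imax_Jmin L q
  rw [← h] at hCq hq
  rcases L.chain _ (Imax_spec L p).1 _ (Imax_spec L q).1 with hs | hs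
  · by_contra hne
    exact hCp.2.2.2 _ (Imax_spec L q).1 ⟨Finset.ssubset_iff_subset_ne.mpr ⟨hs, hne⟩, hCq.2.2.1⟩
  · by_contra hne
    exact hCq.2.2.2 _ (Imax_spec L p).1 ⟨Finset.ssubset_iff_subset_ne.mpr ⟨hs, fun e => hne e.symm⟩, hCp.2.2.1⟩

lemma sameBlock_of_bIdx_eq (L : IdealChain P) {p q : P} (h : bIdx L p = bIdx L q) :
    q ∈ Jmin L p \ Imax L p := by
  have hJ := Jmin_eq_of_bIdx_eq L h
  have hI := Imax_eq_of_Jmin_eq L hJ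
  have := (consec_Imax_Jmin L q).2
  rw [← hJ, ← hI] at this
  exact this

lemma Jmin_subset_Imax_of_lt (L : IdealChain P) {p q : P} (h : bIdx L p < bIdx L q) :
    Jmin L p ⊆ Imax L q := by
  unfold bIdx at h
  have hJJ : Jmin L p ⊂ Jmin L q := by
    rcases L.chain _ (Jmin_spec L p).1 _ (Jmin_spec L q).1 with hs | hs
    · exact Finset.ssubset_iff_subset_ne.mpr ⟨hs, fun he => absurd (congrArg Finset.card he) (Nat.ne_of_lt h)⟩
    · exact absurd (Finset.card_le_card hs) (by omega)
  rcases L.chain _ (Jmin_spec L p).1 _ (Imax_spec L q).1 with hs | hs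
  · exact hs
  · -- Imax q ⊆ Jmin p; then Imax q ⊂ Jmin p ⊂ Jmin q contradicts Consec, unless Imax q = Jmin p
    by_cases he : Imax L q = Jmin L p
    · exact he ▸ subset_rfl
    · exact absurd ⟨Finset.ssubset_iff_subset_ne.mpr ⟨hs, he⟩, hJJ⟩
        ((consec_Imax_Jmin L q).1.2.2.2 _ (Jmin_spec L p).1)

lemma bIdx_lt_of_Jmin_subset_Imax (L : IdealChain P) {p q : P} (h : Jmin L p ⊆ Imax L q) :
    bIdx L p < bIdx L q := by
  have h2 : Imax L q ⊂ Jmin L q := (consec_Imax_Jmin L q).1.2.2.1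
  calc bIdx L p ≤ (Imax L q).card := Finset.card_le_card h
  _ < (Jmin L q).card := Finset.card_lt_card h2

/-- FL membership in terms of block indices -/
lemma mem_FL_iff (Pstar : Finset P) (lam : P → ℝ) (L : IdealChain P) (x : P → ℝ) :
    x ∈ FL Pstar lam L ↔ (∀ a ∈ Pstar, x a = lam a) ∧
      (∀ p q : P, bIdx L p = bIdx L q → x p = x q) ∧
      (∀ p q : P, bIdx L p < bIdx L q → x p ≤ x q) := by
  constructor
  · rintro ⟨h1, h2, h3⟩
    refine ⟨h1, ?_, ?_⟩
    · intro p q h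
      exact h2 _ _ (consec_Imax_Jmin L p).1 p (consec_Imax_Jmin L p).2 q (sameBlock_of_bIdx_eq L h)
    · intro p q h
      exact h3 _ _ _ _ (consec_Imax_Jmin L p).1 (consec_Imax_Jmin L q).1
        (Jmin_subset_Imax_of_lt L h) p (consec_Imax_Jmin L p).2 q (consec_Imax_Jmin L q).2
  · rintro ⟨h1, h2, h3⟩
    refine ⟨h1, ?_, ?_⟩
    · intro I J hC p hp q hq
      obtain ⟨hIp, hJp⟩ := consec_unique L hC hp
      obtain ⟨hIq, hJq⟩ := consec_unique L hC hq
      exact h2 p q (by unfold bIdx; rw [← hJp, ← hJq])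
    · intro I J I' J' hC hC' hsub p hp q hq
      obtain ⟨hIp, hJp⟩ := consec_unique L hC hp
      obtain ⟨hIq, hJq⟩ := consec_unique L hC' hq
      exact h3 p q (bIdx_lt_of_Jmin_subset_Imax L (by rw [← hJp, ← hIq]; exact hsub))

lemma exists_min_below (p : P) : ∃ m : P, m ≤ p ∧ ∀ q, q ≤ m → q = m := by
  classical
  obtain ⟨m, hm, hmin⟩ : ∃ m ∈ Finset.univ.filter (fun q => q ≤ p),
      ∀ x ∈ Finset.univ.filter (fun q => q ≤ p), ¬ x < m := by
    obtain ⟨m, hm⟩ := Finset.exists_minimal (s := Finset.univ.filter (fun q => q ≤ p)) ⟨p, by simp⟩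
    exact ⟨m, hm.1, fun x hx hlt => hlt.not_ge (hm.2 hx hlt.le)⟩
  simp only [Finset.mem_filter] at hm
  refine ⟨m, hm.2, fun q hq => ?_⟩
  by_contra hne
  exact hmin q (by simp [le_trans hq hm.2]) (lt_of_le_of_ne hq hne)

lemma exists_max_above (p : P) : ∃ m : P, p ≤ m ∧ ∀ q, m ≤ q → q = m := by
  classical
  obtain ⟨m, hm, hmax⟩ : ∃ m ∈ Finset.univ.filter (fun q => p ≤ q),
      ∀ x ∈ Finset.univ.filter (fun q => p ≤ q), ¬ m < x := by
    obtain ⟨m, hm⟩ := Finset.exists_maximal (s := Finset.univ.filter (fun q => p ≤ q)) ⟨p, by simp⟩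
    exact ⟨m, hm.1, fun x hx hlt => hlt.not_ge (hm.2 hx hlt.le)⟩
  simp only [Finset.mem_filter] at hm
  refine ⟨m, hm.2, fun q hq => ?_⟩
  by_contra hne
  exact hmax q (by simp [le_trans hm.2 hq]) (lt_of_le_of_ne hq (fun e => hne e.symm))

variable {Pstar : Finset P} {lam : P → ℝ} {L : IdealChain P}

/-- the first block contains a marked element -/
lemma exists_marked_bot (hext : ∀ p : P, IsExtremalElt p → p ∈ Pstar) (p : P)
    (hmin : ∀ q : P, bIdx L p ≤ bIdx L q) : ∃ a ∈ Pstar, bIdx L a = bIdx L p := by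
  -- Imax L p = ∅
  have hIe : Imax L p = ∅ := by
    by_contra hne
    obtain ⟨q, hq⟩ := Finset.nonempty_iff_ne_empty.mpr hne
    have h1 : Jmin L q ⊆ Imax L p := (Jmin_spec L q).2.2 _ (Imax_spec L p).1 hq
    have h2 : bIdx L q < bIdx L p := by
      calc bIdx L q ≤ (Imax L p).card := Finset.card_le_card h1
      _ < (Jmin L p).card := Finset.card_lt_card (consec_Imax_Jmin L p).1.2.2.1
    exact absurd (hmin q) (by omega)
  obtain ⟨a, ha, hamin⟩ := exists_min_below p
  have haJ : a ∈ Jmin L p := L.isIdeal _ (Jmin_spec L p).1 p (Jmin_spec L p).2.1 a ha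
  have haB : a ∈ Jmin L p \ Imax L p := by simp [haJ, hIe]
  refine ⟨a, hext a (Or.inl hamin), ?_⟩
  have := consec_unique L (consec_Imax_Jmin L p).1 haB
  unfold bIdx; rw [← this.2]

/-- the last block contains a marked element -/
lemma exists_marked_top (hext : ∀ p : P, IsExtremalElt p → p ∈ Pstar) (p : P)
    (hmax : ∀ q : P, bIdx L q ≤ bIdx L p) : ∃ a ∈ Pstar, bIdx L a = bIdx L p := by
  have hJu : Jmin L p = Finset.univ := by
    by_contra hne
    obtain ⟨q, _, hq⟩ := Finset.exists_of_ssubset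
      (Finset.ssubset_iff_subset_ne.mpr ⟨Finset.subset_univ _, hne⟩)
    have h1 : Jmin L p ⊆ Imax L q := (Imax_spec L q).2.2 _ (Jmin_spec L p).1 hq
    exact absurd (hmax q) (by have := bIdx_lt_of_Jmin_subset_Imax L h1; omega)
  obtain ⟨a, ha, hamax⟩ := exists_max_above p
  have haI : a ∉ Imax L p := fun h =>
    (Imax_spec L p).2.1 (L.isIdeal _ (Imax_spec L p).1 a h p ha)
  have haB : a ∈ Jmin L p \ Imax L p := by simp [hJu, haI]
  refine ⟨a, hext a (Or.inr hamax), ?_⟩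
  have := consec_unique L (consec_Imax_Jmin L p).1 haB
  unfold bIdx; rw [← this.2]

/-- λ is well-defined on blocks -/
lemma lam_eq_of_sameBlock (hAd : Admissible Pstar lam L) {a b : P} (ha : a ∈ Pstar)
    (hb : b ∈ Pstar) (h : bIdx L a = bIdx L b) : lam a = lam b := by
  exact hAd.1 _ _ (consec_Imax_Jmin L a).1 a
    (Finset.mem_inter.mpr ⟨(consec_Imax_Jmin L a).2, ha⟩) b
    (Finset.mem_inter.mpr ⟨sameBlock_of_bIdx_eq L h, hb⟩)

lemma lam_lt_of_blockLt (hAd : Admissible Pstar lam L) {a b : P} (ha : a ∈ Pstar)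
    (hb : b ∈ Pstar) (h : bIdx L a < bIdx L b) : lam a < lam b := by
  exact hAd.2 _ _ _ _ (consec_Imax_Jmin L a).1 (consec_Imax_Jmin L b).1
    (Jmin_subset_Imax_of_lt L h) a
    (Finset.mem_inter.mpr ⟨(consec_Imax_Jmin L a).2, ha⟩) b
    (Finset.mem_inter.mpr ⟨(consec_Imax_Jmin L b).2, hb⟩)

section Core
variable {Q : Type} [Fintype Q]
set_option linter.unusedSectionVars false

/-- affine map from weights -/
noncomputable def affW {k : ℕ} (d : Fin k → ℕ) (A : Q → ℝ)
    (W : Q → (i : Fin k) → Fin (d i + 1) → ℝ) :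
    ((i : Fin k) → (Fin (d i + 1) → ℝ)) →ᵃ[ℝ] (Q → ℝ) where
  toFun := fun s p => A p + ∑ i, ∑ j, W p i j * s i j
  linear :=
    { toFun := fun s p => ∑ i, ∑ j, W p i j * s i j
      map_add' := by
        intro s t; funext p
        simp [mul_add, Finset.sum_add_distrib]
      map_smul' := by
        intro c s; funext p
        simp only [Pi.smul_apply, smul_eq_mul, RingHom.id_apply, Finset.mul_sum]
        congr 1; funext i; congr 1; funext j; ring }
  map_vadd' := by
    intro p v; funext q
    show A q + ∑ i, ∑ j, W q i j * (v i j + p i j) =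
      (∑ i, ∑ j, W q i j * v i j) + (A q + ∑ i, ∑ j, W q i j * p i j)
    simp [mul_add, Finset.sum_add_distrib]; ring

variable (β : Q → ℕ) (T : Finset ℕ) {r : ℕ} (hr : T.card = r + 1)

noncomputable def tauF : Fin (r + 1) ≃o {x // x ∈ T} := T.orderIsoOfFin hr

noncomputable def Bb : Finset ℕ := Finset.image β Finset.univ

noncomputable def dd (i : Fin r) : ℕ :=
  ((Bb β).filter (fun c => (tauF T hr i.castSucc : ℕ) < c ∧ c < (tauF T hr i.succ : ℕ))).card

noncomputable def gcl (i : Fin r) : Finset ℕ :=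
  (Bb β).filter (fun c => (tauF T hr i.castSucc : ℕ) ≤ c ∧ c ≤ (tauF T hr i.succ : ℕ))

lemma tauF_strictMono : ∀ a b : Fin (r + 1), a < b → (tauF T hr a : ℕ) < (tauF T hr b : ℕ) := by
  intro a b h
  exact Subtype.coe_lt_coe.mpr ((tauF T hr).strictMono h)

lemma tauF_le_iff : ∀ a b : Fin (r + 1), (tauF T hr a : ℕ) ≤ (tauF T hr b : ℕ) ↔ a ≤ b := by
  intro a b
  exact ⟨fun h => (tauF T hr).le_iff_le.mp (Subtype.coe_le_coe.mp h),
    fun h => Subtype.coe_le_coe.mpr ((tauF T hr).monotone h)⟩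

lemma tauF_zero_le {t : ℕ} (ht : t ∈ T) : (tauF T hr 0 : ℕ) ≤ t := by
  have h1 : t = ((tauF T hr) ((tauF T hr).symm ⟨t, ht⟩) : ℕ) := by simp
  rw [h1]
  exact Subtype.coe_le_coe.mpr ((tauF T hr).monotone (Fin.zero_le _))

lemma tauF_le_last {t : ℕ} (ht : t ∈ T) : t ≤ (tauF T hr (Fin.last r) : ℕ) := by
  have h1 : t = ((tauF T hr) ((tauF T hr).symm ⟨t, ht⟩) : ℕ) := by simp
  rw [h1]
  exact Subtype.coe_le_coe.mpr ((tauF T hr).monotone (Fin.le_last _))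

lemma gcl_card (hTB : T ⊆ Bb β) (i : Fin r) : (gcl β T hr i).card = dd β T hr i + 2 := by
  classical
  set lo := (tauF T hr i.castSucc : ℕ)
  set hi := (tauF T hr i.succ : ℕ)
  have hlh : lo < hi := tauF_strictMono T hr _ _ (Fin.castSucc_lt_succ (i := i))
  have hloB : lo ∈ Bb β := hTB (tauF T hr i.castSucc).2
  have hhiB : hi ∈ Bb β := hTB (tauF T hr i.succ).2
  have hset : gcl β T hr i =
      insert lo (insert hi ((Bb β).filter (fun c => lo < c ∧ c < hi))) := by
    ext c
    simp only [gcl, Finset.mem_insert, Finset.mem_filter]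
    constructor
    · rintro ⟨hB, h1, h2⟩
      rcases eq_or_lt_of_le h1 with h | h
      · exact Or.inl h.symm
      rcases eq_or_lt_of_le h2 with h' | h'
      · exact Or.inr (Or.inl h')
      · exact Or.inr (Or.inr ⟨hB, h, h'⟩)
    · rintro (h | h | ⟨hB, h1, h2⟩)
      · exact ⟨h ▸ hloB, le_of_eq h.symm, h ▸ le_of_lt hlh⟩
      · exact ⟨h ▸ hhiB, h ▸ le_of_lt hlh, le_of_eq h⟩
      · exact ⟨hB, le_of_lt h1, le_of_lt h2⟩
  rw [hset, Finset.card_insert_of_notMem, Finset.card_insert_of_notMem]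
  · rfl
  · simp only [Finset.mem_filter]; omega
  · simp only [Finset.mem_insert, Finset.mem_filter]; omega

noncomputable def rhoF (hTB : T ⊆ Bb β) (i : Fin r) :
    Fin (dd β T hr i + 2) ≃o {x // x ∈ gcl β T hr i} :=
  (gcl β T hr i).orderIsoOfFin (gcl_card β T hr hTB i)

lemma rhoF_zero (hTB : T ⊆ Bb β) (i : Fin r) :
    (rhoF β T hr hTB i 0 : ℕ) = (tauF T hr i.castSucc : ℕ) := by
  have hmem : ((rhoF β T hr hTB i 0 : ℕ)) ∈ gcl β T hr i := (rhoF β T hr hTB i 0).2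
  have hlo : (tauF T hr i.castSucc : ℕ) ∈ gcl β T hr i := by
    simp only [gcl, Finset.mem_filter]
    exact ⟨hTB (tauF T hr i.castSucc).2, le_refl _,
      le_of_lt (tauF_strictMono T hr _ _ (Fin.castSucc_lt_succ (i := i)))⟩
  have h1 : (tauF T hr i.castSucc : ℕ) ≤ (rhoF β T hr hTB i 0 : ℕ) := by
    simp only [gcl, Finset.mem_filter] at hmem; exact hmem.2.1
  have h2 : (rhoF β T hr hTB i 0 : ℕ) ≤ (tauF T hr i.castSucc : ℕ) := by
    have h3 : (rhoF β T hr hTB i 0) ≤ (rhoF β T hr hTB i ((rhoF β T hr hTB i).symm ⟨_, hlo⟩)) :=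
      (rhoF β T hr hTB i).monotone (Fin.zero_le _)
    simpa using Subtype.coe_le_coe.mpr h3
  omega

lemma rhoF_last (hTB : T ⊆ Bb β) (i : Fin r) :
    (rhoF β T hr hTB i (Fin.last (dd β T hr i + 1)) : ℕ) = (tauF T hr i.succ : ℕ) := by
  have hmem := (rhoF β T hr hTB i (Fin.last _)).2
  have hhi : (tauF T hr i.succ : ℕ) ∈ gcl β T hr i := by
    simp only [gcl, Finset.mem_filter]
    exact ⟨hTB (tauF T hr i.succ).2,
      le_of_lt (tauF_strictMono T hr _ _ (Fin.castSucc_lt_succ (i := i))), le_refl _⟩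
  have h1 : (rhoF β T hr hTB i (Fin.last _) : ℕ) ≤ (tauF T hr i.succ : ℕ) := by
    simp only [gcl, Finset.mem_filter] at hmem; exact hmem.2.2
  have h2 : (tauF T hr i.succ : ℕ) ≤ (rhoF β T hr hTB i (Fin.last _) : ℕ) := by
    have h3 : (rhoF β T hr hTB i ((rhoF β T hr hTB i).symm ⟨_, hhi⟩)) ≤
        rhoF β T hr hTB i (Fin.last _) := (rhoF β T hr hTB i).monotone (Fin.le_last _)
    simpa using Subtype.coe_le_coe.mpr h3
  omega

end Core

section Core2
variable {Q : Type} [Fintype Q]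
set_option linter.unusedSectionVars false
variable (β : Q → ℕ) (T : Finset ℕ) (μ : ℕ → ℝ) {r : ℕ} (hr : T.card = r + 1)

/-- no element of T lies strictly inside a gap -/
lemma no_T_in_gap (i : Fin r) {t : ℕ} (ht : t ∈ T)
    (h1 : (tauF T hr i.castSucc : ℕ) < t) (h2 : t < (tauF T hr i.succ : ℕ)) : False := by
  set m := (tauF T hr).symm ⟨t, ht⟩
  have hmt : (tauF T hr m : ℕ) = t := by simp [m]
  have hgt : i.castSucc < m := by
    by_contra h
    push_neg at h
    have := (tauF_le_iff T hr m i.castSucc).mpr h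
    omega
  have hlt : m < i.succ := by
    by_contra h
    push_neg at h
    have := (tauF_le_iff T hr i.succ m).mpr h
    omega
  have hgt' : (i : ℕ) < (m : ℕ) := by simpa [Fin.lt_def] using hgt
  have hlt' : (m : ℕ) < (i : ℕ) + 1 := by simpa [Fin.lt_def] using hlt
  omega

lemma gap_exists {c : ℕ} (hcT : c ∉ T)
    (hlow : ∃ t ∈ T, t ≤ c) (hhigh : ∃ t ∈ T, c ≤ t) :
    ∃ i : Fin r, (tauF T hr i.castSucc : ℕ) < c ∧ c < (tauF T hr i.succ : ℕ) := by
  classical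
  obtain ⟨tl, htl, htlc⟩ := hlow
  obtain ⟨th, hth, hcth⟩ := hhigh
  -- the largest index with τ ≤ c
  set Sf : Finset (Fin (r+1)) := Finset.univ.filter (fun m : Fin (r+1) => (tauF T hr m : ℕ) ≤ c) with hSf
  have hne : Sf.Nonempty := by
    refine ⟨(tauF T hr).symm ⟨tl, htl⟩, ?_⟩
    simp only [hSf, Finset.mem_filter, Finset.mem_univ, true_and]
    simp [htlc]
  obtain ⟨m, hm, hmax⟩ := Finset.exists_max_image Sf (fun m => (m : ℕ)) hne
  rw [hSf] at hm
  simp only [Finset.mem_filter, Finset.mem_univ, true_and] at hm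
  have hmlt : (tauF T hr m : ℕ) < c := lt_of_le_of_ne hm (fun e => hcT (e ▸ (tauF T hr m).2))
  have hmne : m ≠ Fin.last r := by
    intro h
    have := tauF_le_last T hr hth
    rw [← h] at this
    omega
  obtain ⟨i, hi⟩ : ∃ i : Fin r, m = i.castSucc := ⟨⟨m, Fin.val_lt_last hmne⟩, by ext; simp⟩
  refine ⟨i, hi ▸ hmlt, ?_⟩
  by_contra h
  push_neg at h
  have := hmax i.succ (by simp only [hSf, Finset.mem_filter, Finset.mem_univ, true_and]; exact h)
  rw [hi] at this
  simp only [Fin.coe_castSucc, Fin.val_succ] at this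
  omega

lemma gap_unique {c : ℕ} {i i' : Fin r}
    (h1 : (tauF T hr i.castSucc : ℕ) < c) (h2 : c < (tauF T hr i.succ : ℕ))
    (h1' : (tauF T hr i'.castSucc : ℕ) < c) (h2' : c < (tauF T hr i'.succ : ℕ)) : i = i' := by
  by_contra hne
  rcases lt_or_gt_of_ne hne with h | h
  · have : (tauF T hr i.succ : ℕ) ≤ (tauF T hr i'.castSucc : ℕ) :=
      (tauF_le_iff T hr _ _).mpr (by
        simp only [Fin.succ_le_castSucc_iff]
        exact h)
    omega
  · have : (tauF T hr i'.succ : ℕ) ≤ (tauF T hr i.castSucc : ℕ) :=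
      (tauF_le_iff T hr _ _).mpr (by
        simp only [Fin.succ_le_castSucc_iff]
        exact h)
    omega

noncomputable def tlow (c : ℕ) : ℕ :=
  if h : (T.filter (fun t => t ≤ c)).Nonempty then (T.filter (fun t => t ≤ c)).max' h else 0

lemma tlow_of_mem {c : ℕ} (hc : c ∈ T) : tlow T c = c := by
  have hne : (T.filter (fun t => t ≤ c)).Nonempty := ⟨c, Finset.mem_filter.mpr ⟨hc, le_refl c⟩⟩
  rw [tlow, dif_pos hne]
  have h1 := Finset.max'_mem _ hne
  simp only [Finset.mem_filter] at h1
  have h2 := Finset.le_max' (T.filter (fun t => t ≤ c)) c (Finset.mem_filter.mpr ⟨hc, le_refl c⟩)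
  omega

lemma tlow_of_gap {c : ℕ} {i : Fin r}
    (h1 : (tauF T hr i.castSucc : ℕ) < c) (h2 : c < (tauF T hr i.succ : ℕ)) :
    tlow T c = (tauF T hr i.castSucc : ℕ) := by
  have hne : (T.filter (fun t => t ≤ c)).Nonempty :=
    ⟨(tauF T hr i.castSucc : ℕ), Finset.mem_filter.mpr ⟨(tauF T hr i.castSucc).2, by omega⟩⟩
  rw [tlow, dif_pos hne]
  have h3 := Finset.max'_mem _ hne
  simp only [Finset.mem_filter] at h3
  have h4 := Finset.le_max' (T.filter (fun t => t ≤ c)) ((tauF T hr i.castSucc : ℕ))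
    (Finset.mem_filter.mpr ⟨(tauF T hr i.castSucc).2, by omega⟩)
  -- max' ∈ T, ≤ c < τ i.succ, so ≤ τ i.castSucc
  have h5 : (Finset.max' _ hne) ≤ (tauF T hr i.castSucc : ℕ) := by
    by_contra h
    push_neg at h
    exact no_T_in_gap T hr i h3.1 h (by omega)
  omega

noncomputable def Cc (i : Fin r) : ℝ := μ (tauF T hr i.succ) - μ (tauF T hr i.castSucc)

variable (hTB : T ⊆ Bb β)

noncomputable def Wt (p : Q) (i : Fin r) (j : Fin (dd β T hr i + 1)) : ℝ :=
  if (tauF T hr i.castSucc : ℕ) < β p ∧ β p < (tauF T hr i.succ : ℕ) ∧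
      ((rhoF β T hr hTB i j.castSucc : ℕ) < β p) then Cc T μ hr i else 0

noncomputable def eC : ((i : Fin r) → (Fin (dd β T hr i + 1) → ℝ)) →ᵃ[ℝ] (Q → ℝ) :=
  affW (dd β T hr) (fun p => μ (tlow T (β p))) (Wt β T μ hr hTB)

lemma eC_apply (s : (i : Fin r) → (Fin (dd β T hr i + 1) → ℝ)) (p : Q) :
    eC β T μ hr hTB s p = μ (tlow T (β p)) + ∑ i, ∑ j, Wt β T μ hr hTB p i j * s i j := rfl

lemma eC_apply_T (s : (i : Fin r) → (Fin (dd β T hr i + 1) → ℝ)) (p : Q) (hp : β p ∈ T) :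
    eC β T μ hr hTB s p = μ (β p) := by
  rw [eC_apply, tlow_of_mem T hp]
  have hz : ∀ i : Fin r, ∀ j, Wt β T μ hr hTB p i j * s i j = 0 := by
    intro i j
    rw [Wt, if_neg, zero_mul]
    rintro ⟨ha, hb, -⟩
    exact no_T_in_gap T hr i hp ha hb
  simp [hz]

lemma eC_apply_gap (s : (i : Fin r) → (Fin (dd β T hr i + 1) → ℝ)) (p : Q) {i : Fin r}
    (h1 : (tauF T hr i.castSucc : ℕ) < β p) (h2 : β p < (tauF T hr i.succ : ℕ)) :
    eC β T μ hr hTB s p = μ (tauF T hr i.castSucc) +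
      Cc T μ hr i * ∑ j, (if (rhoF β T hr hTB i j.castSucc : ℕ) < β p then s i j else 0) := by
  rw [eC_apply, tlow_of_gap T hr h1 h2]
  congr 1
  rw [Finset.mul_sum]
  rw [Finset.sum_eq_single i]
  · congr 1; funext j
    rw [Wt]
    by_cases hj : (rhoF β T hr hTB i j.castSucc : ℕ) < β p
    · rw [if_pos ⟨h1, h2, hj⟩, if_pos hj]
    · rw [if_neg (fun h => hj h.2.2), if_neg hj, zero_mul, mul_zero]
  · intro i' _ hne
    apply Finset.sum_eq_zero
    intro j _
    rw [Wt, if_neg, zero_mul]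
    rintro ⟨ha, hb, -⟩
    exact hne (gap_unique T hr ha hb h1 h2)
  · simp

end Core2

lemma fin_telescope_partial (n : ℕ) (g : Fin (n + 2) → ℝ) (m : Fin (n + 2)) :
    ∑ j : Fin (n + 1), (if (j : ℕ) < (m : ℕ) then g j.succ - g j.castSucc else 0) =
      g m - g 0 := by
  classical
  set g' : ℕ → ℝ := fun t => g ⟨min t (n + 1), by omega⟩ with hg'
  have hconv : ∀ j : Fin (n + 1),
      (if (j : ℕ) < (m : ℕ) then g j.succ - g j.castSucc else 0) =
      (fun t : ℕ => if t < (m : ℕ) then g' (t + 1) - g' t else 0) (j : ℕ) := by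
    intro j
    by_cases h : (j : ℕ) < (m : ℕ)
    · simp only [h, if_pos]
      have e1 : g' ((j : ℕ) + 1) = g j.succ :=
        congrArg g (Fin.ext (by simp [Nat.min_eq_left (by omega : (j : ℕ) + 1 ≤ n + 1)]))
      have e2 : g' (j : ℕ) = g j.castSucc :=
        congrArg g (Fin.ext (by simp [Nat.min_eq_left (by omega : (j : ℕ) ≤ n + 1)]))
      rw [e1, e2]
    · simp [h]
  calc ∑ j : Fin (n + 1), (if (j : ℕ) < (m : ℕ) then g j.succ - g j.castSucc else 0)
      = ∑ t ∈ Finset.range (n + 1), (if t < (m : ℕ) then g' (t + 1) - g' t else 0) := by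
        rw [← Fin.sum_univ_eq_sum_range]
        exact Finset.sum_congr rfl (fun j _ => hconv j)
    _ = ∑ t ∈ (Finset.range (n + 1)).filter (fun t => t < (m : ℕ)), (g' (t + 1) - g' t) := by
        rw [Finset.sum_filter]
    _ = ∑ t ∈ Finset.range (m : ℕ), (g' (t + 1) - g' t) := by
        congr 1
        ext t
        simp only [Finset.mem_filter, Finset.mem_range]
        have := m.isLt
        omega
    _ = g' (m : ℕ) - g' 0 := Finset.sum_range_sub g' (m : ℕ)
    _ = g m - g 0 := by
        have e1 : g' (m : ℕ) = g m :=
          congrArg g (Fin.ext (by simp [Nat.min_eq_left (by omega : (m : ℕ) ≤ n + 1)]))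
        have e2 : g' 0 = g 0 := congrArg g (Fin.ext (by simp))
        rw [e1, e2]

lemma fin_telescope (n : ℕ) (g : Fin (n + 2) → ℝ) :
    ∑ j : Fin (n + 1), (g j.succ - g j.castSucc) = g (Fin.last (n + 1)) - g 0 := by
  have := fin_telescope_partial n g (Fin.last (n + 1))
  rw [← this]
  exact Finset.sum_congr rfl (fun j _ => by
    rw [if_pos]
    simp only [Fin.val_last]
    omega)

section Core3
variable {Q : Type} [Fintype Q]
set_option linter.unusedSectionVars false
variable (β : Q → ℕ) (T : Finset ℕ) {r : ℕ} (hr : T.card = r + 1) (hTB : T ⊆ Bb β)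

lemma rhoF_lt_iff (i : Fin r) (a b : Fin (dd β T hr i + 2)) :
    (rhoF β T hr hTB i a : ℕ) < (rhoF β T hr hTB i b : ℕ) ↔ a < b := by
  constructor
  · intro h
    by_contra hc
    push_neg at hc
    have := Subtype.coe_le_coe.mpr ((rhoF β T hr hTB i).monotone hc)
    omega
  · intro h
    exact Subtype.coe_lt_coe.mpr ((rhoF β T hr hTB i).strictMono h)

end Core3

lemma core_prod {Q : Type} [Fintype Q] (β : Q → ℕ) (T : Finset ℕ) (μ : ℕ → ℝ)
    (hQ : Nonempty Q)
    (hTB : ∀ t ∈ T, ∃ p : Q, β p = t)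
    (hlow : ∀ p : Q, ∃ t ∈ T, t ≤ β p)
    (hhigh : ∀ p : Q, ∃ t ∈ T, β p ≤ t)
    (hmono : ∀ s ∈ T, ∀ t ∈ T, s < t → μ s < μ t) :
    IsProdOfSimplices {x : Q → ℝ | (∀ p q, β p = β q → x p = x q) ∧
      (∀ p q, β p < β q → x p ≤ x q) ∧ (∀ p, β p ∈ T → x p = μ (β p))} := by
  classical
  obtain ⟨p₀⟩ := hQ
  obtain ⟨t₀, ht₀, -⟩ := hlow p₀
  obtain ⟨r, hr⟩ : ∃ r, T.card = r + 1 :=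
    ⟨T.card - 1, by have := Finset.card_pos.mpr ⟨t₀, ht₀⟩; omega⟩
  have hTB' : T ⊆ Bb β := by
    intro t ht
    obtain ⟨p, hp⟩ := hTB t ht
    exact Finset.mem_image.mpr ⟨p, Finset.mem_univ p, hp⟩
  have hBmem : ∀ p : Q, β p ∈ Bb β := fun p => Finset.mem_image.mpr ⟨p, Finset.mem_univ p, rfl⟩
  have hCpos : ∀ i : Fin r, 0 < Cc T μ hr i := by
    intro i
    have h := tauF_strictMono T hr _ _ (Fin.castSucc_lt_succ (i := i))
    exact sub_pos.mpr (hmono _ (tauF T hr i.castSucc).2 _ (tauF T hr i.succ).2 h)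
  have hmumono : ∀ s ∈ T, ∀ t ∈ T, s ≤ t → μ s ≤ μ t := by
    intro s hs t ht hst
    rcases eq_or_lt_of_le hst with h | h
    · exact le_of_eq (congrArg μ h)
    · exact le_of_lt (hmono s hs t ht h)
  have hgap : ∀ p : Q, β p ∉ T →
      ∃ i : Fin r, (tauF T hr i.castSucc : ℕ) < β p ∧ β p < (tauF T hr i.succ : ℕ) :=
    fun p hp => gap_exists T hr hp (hlow p) (hhigh p)
  set Simp := {s : (i : Fin r) → (Fin (dd β T hr i + 1) → ℝ) |
    ∀ i, s i ∈ stdSimplex ℝ (Fin (dd β T hr i + 1))} with hSimp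
  -- partial sums are between 0 and 1
  have hsum0 : ∀ s ∈ Simp, ∀ i : Fin r, ∀ c : ℕ,
      0 ≤ ∑ j, (if (rhoF β T hr hTB' i j.castSucc : ℕ) < c then s i j else 0) := by
    intro s hs i c
    apply Finset.sum_nonneg
    intro j _
    by_cases h : (rhoF β T hr hTB' i j.castSucc : ℕ) < c
    · rw [if_pos h]; exact (hs i).1 j
    · rw [if_neg h]
  have hsum1 : ∀ s ∈ Simp, ∀ i : Fin r, ∀ c : ℕ,
      ∑ j, (if (rhoF β T hr hTB' i j.castSucc : ℕ) < c then s i j else 0) ≤ 1 := by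
    intro s hs i c
    calc ∑ j, (if (rhoF β T hr hTB' i j.castSucc : ℕ) < c then s i j else 0)
        ≤ ∑ j, s i j := by
          apply Finset.sum_le_sum
          intro j _
          by_cases h : (rhoF β T hr hTB' i j.castSucc : ℕ) < c
          · rw [if_pos h]
          · rw [if_neg h]; exact (hs i).1 j
      _ = 1 := (hs i).2
  -- value bounds in a gap
  have hlb : ∀ s ∈ Simp, ∀ p : Q, ∀ i : Fin r,
      (tauF T hr i.castSucc : ℕ) < β p → β p < (tauF T hr i.succ : ℕ) →
      μ (tauF T hr i.castSucc : ℕ) ≤ eC β T μ hr hTB' s p := by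
    intro s hs p i h1 h2
    rw [eC_apply_gap β T μ hr hTB' s p h1 h2]
    nlinarith [hsum0 s hs i (β p), hCpos i]
  have hub : ∀ s ∈ Simp, ∀ p : Q, ∀ i : Fin r,
      (tauF T hr i.castSucc : ℕ) < β p → β p < (tauF T hr i.succ : ℕ) →
      eC β T μ hr hTB' s p ≤ μ (tauF T hr i.succ : ℕ) := by
    intro s hs p i h1 h2
    rw [eC_apply_gap β T μ hr hTB' s p h1 h2]
    have := hsum1 s hs i (β p)
    have hC := hCpos i
    have : Cc T μ hr i * ∑ j, (if (rhoF β T hr hTB' i j.castSucc : ℕ) < β p then s i j else 0)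
        ≤ Cc T μ hr i * 1 := by
      apply mul_le_mul_of_nonneg_left this (le_of_lt hC)
    rw [Cc] at *
    linarith
  -- congruence in β
  have hcongr : ∀ s : (i : Fin r) → (Fin (dd β T hr i + 1) → ℝ), ∀ p q : Q, β p = β q →
      eC β T μ hr hTB' s p = eC β T μ hr hTB' s q := by
    intro s p q h
    simp only [eC_apply, Wt, h]
  -- main monotonicity
  have hVO : ∀ s ∈ Simp, ∀ p q : Q, β p ≤ β q →
      eC β T μ hr hTB' s p ≤ eC β T μ hr hTB' s q := by
    intro s hs p q hpq
    by_cases hpT : β p ∈ T <;> by_cases hqT : β q ∈ T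
    · rw [eC_apply_T β T μ hr hTB' s p hpT, eC_apply_T β T μ hr hTB' s q hqT]
      exact hmumono _ hpT _ hqT hpq
    · obtain ⟨i, h1, h2⟩ := hgap q hqT
      have hple : β p ≤ (tauF T hr i.castSucc : ℕ) := by
        by_contra h
        push_neg at h
        exact no_T_in_gap T hr i hpT h (by omega)
      rw [eC_apply_T β T μ hr hTB' s p hpT]
      calc μ (β p) ≤ μ (tauF T hr i.castSucc : ℕ) :=
            hmumono _ hpT _ (tauF T hr i.castSucc).2 hple
        _ ≤ _ := hlb s hs q i h1 h2
    · obtain ⟨i, h1, h2⟩ := hgap p hpT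
      have hqge : (tauF T hr i.succ : ℕ) ≤ β q := by
        by_contra h
        push_neg at h
        exact no_T_in_gap T hr i hqT (by omega) h
      rw [eC_apply_T β T μ hr hTB' s q hqT]
      calc eC β T μ hr hTB' s p ≤ μ (tauF T hr i.succ : ℕ) := hub s hs p i h1 h2
        _ ≤ μ (β q) := hmumono _ (tauF T hr i.succ).2 _ hqT hqge
    · obtain ⟨i, h1, h2⟩ := hgap p hpT
      obtain ⟨i', h1', h2'⟩ := hgap q hqT
      rcases lt_trichotomy i i' with h | h | h
      · have hle : (tauF T hr i.succ : ℕ) ≤ (tauF T hr i'.castSucc : ℕ) :=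
          (tauF_le_iff T hr _ _).mpr (by simp only [Fin.succ_le_castSucc_iff]; exact h)
        calc eC β T μ hr hTB' s p ≤ μ (tauF T hr i.succ : ℕ) := hub s hs p i h1 h2
          _ ≤ μ (tauF T hr i'.castSucc : ℕ) :=
              hmumono _ (tauF T hr i.succ).2 _ (tauF T hr i'.castSucc).2 hle
          _ ≤ _ := hlb s hs q i' h1' h2'
      · subst h
        rw [eC_apply_gap β T μ hr hTB' s p h1 h2, eC_apply_gap β T μ hr hTB' s q h1' h2']
        apply add_le_add_right
        apply mul_le_mul_of_nonneg_left _ (le_of_lt (hCpos i))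
        apply Finset.sum_le_sum
        intro j _
        by_cases hj : (rhoF β T hr hTB' i j.castSucc : ℕ) < β p
        · rw [if_pos hj, if_pos (by omega)]
        · rw [if_neg hj]
          by_cases hj' : (rhoF β T hr hTB' i j.castSucc : ℕ) < β q
          · rw [if_pos hj']; exact (hs i).1 j
          · rw [if_neg hj']
      · exfalso
        have hle : (tauF T hr i'.succ : ℕ) ≤ (tauF T hr i.castSucc : ℕ) :=
          (tauF_le_iff T hr _ _).mpr (by simp only [Fin.succ_le_castSucc_iff]; exact h)
        omega
  refine ⟨r, dd β T hr, eC β T μ hr hTB', ?_, ?_⟩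
  · -- injectivity
    intro s hs s' hs' heq
    have hPS : ∀ (i : Fin r) (m : Fin (dd β T hr i + 2)),
        ∑ j : Fin (dd β T hr i + 1), (if (j : ℕ) < (m : ℕ) then s i j else 0) =
        ∑ j : Fin (dd β T hr i + 1), (if (j : ℕ) < (m : ℕ) then s' i j else 0) := by
      intro i m
      by_cases hm0 : (m : ℕ) = 0
      · simp [hm0]
      by_cases hml : (m : ℕ) = dd β T hr i + 1
      · have hall : ∀ t : (i : Fin r) → Fin (dd β T hr i + 1) → ℝ, t ∈ Simp →
            ∑ j : Fin (dd β T hr i + 1), (if (j : ℕ) < (m : ℕ) then t i j else 0) = 1 := by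
          intro t ht
          have hpt : ∀ j : Fin (dd β T hr i + 1),
              (if (j : ℕ) < (m : ℕ) then t i j else 0) = t i j := by
            intro j
            apply if_pos
            omega
          exact (Finset.sum_congr rfl (fun j _ => hpt j)).trans (ht i).2
        rw [hall s hs, hall s' hs']
      · -- interior point
        have hmlt : m < Fin.last (dd β T hr i + 1) := by
          rw [Fin.lt_def]
          simp only [Fin.val_last]
          omega
        have hm0' : (0 : Fin (dd β T hr i + 2)) < m := by
          rw [Fin.lt_def, Fin.val_zero]
          omega
        set c := (rhoF β T hr hTB' i m : ℕ) with hcdef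
        have hc1 : (tauF T hr i.castSucc : ℕ) < c := by
          rw [← rhoF_zero β T hr hTB' i]
          exact (rhoF_lt_iff β T hr hTB' i _ _).mpr hm0'
        have hc2 : c < (tauF T hr i.succ : ℕ) := by
          rw [← rhoF_last β T hr hTB' i]
          exact (rhoF_lt_iff β T hr hTB' i _ _).mpr hmlt
        have hcB : c ∈ Bb β := (Finset.mem_filter.mp (rhoF β T hr hTB' i m).2).1
        obtain ⟨p, -, hp⟩ := Finset.mem_image.mp hcB
        have hcond : ∀ j : Fin (dd β T hr i + 1),
            ((rhoF β T hr hTB' i j.castSucc : ℕ) < β p) ↔ (j : ℕ) < (m : ℕ) := by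
          intro j
          rw [hp, hcdef, rhoF_lt_iff]
          simp [Fin.lt_def]
        have hkey := congrFun heq p
        rw [eC_apply_gap β T μ hr hTB' s p
            (show (tauF T hr i.castSucc : ℕ) < β p by omega)
            (show β p < (tauF T hr i.succ : ℕ) by omega),
          eC_apply_gap β T μ hr hTB' s' p
            (show (tauF T hr i.castSucc : ℕ) < β p by omega)
            (show β p < (tauF T hr i.succ : ℕ) by omega)] at hkey
        have hkey2 := mul_left_cancel₀ (ne_of_gt (hCpos i)) (add_left_cancel hkey)
        rw [Finset.sum_congr rfl (fun j _ => if_congr (hcond j) rfl rfl),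
          Finset.sum_congr rfl (fun j _ => if_congr (hcond j) rfl rfl)] at hkey2
        exact hkey2
    have hstep : ∀ (t : (i : Fin r) → Fin (dd β T hr i + 1) → ℝ) (i : Fin r)
        (j : Fin (dd β T hr i + 1)),
        (∑ j' : Fin (dd β T hr i + 1), (if (j' : ℕ) < (j : ℕ) + 1 then t i j' else 0)) -
        (∑ j' : Fin (dd β T hr i + 1), (if (j' : ℕ) < (j : ℕ) then t i j' else 0)) = t i j := by
      intro t i j
      rw [← Finset.sum_sub_distrib]
      have hpt : ∀ j' : Fin (dd β T hr i + 1),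
          (if (j' : ℕ) < (j : ℕ) + 1 then t i j' else 0) -
          (if (j' : ℕ) < (j : ℕ) then t i j' else 0) =
          if j' = j then t i j' else 0 := by
        intro j'
        by_cases he : j' = j
        · subst he
          rw [if_pos (by omega), if_neg (by omega), if_pos rfl, sub_zero]
        · have hne : (j' : ℕ) ≠ (j : ℕ) := fun h => he (Fin.ext h)
          rw [if_neg he]
          by_cases hlt : (j' : ℕ) < (j : ℕ)
          · rw [if_pos (by omega), if_pos hlt, sub_self]
          · rw [if_neg (by omega), if_neg hlt, sub_self]
      rw [Finset.sum_congr rfl (fun j' _ => hpt j')]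
      simp
    funext i j
    have hA := hPS i ⟨(j : ℕ) + 1, by omega⟩
    have hB := hPS i ⟨(j : ℕ), by omega⟩
    have := hstep s i j
    have := hstep s' i j
    calc s i j = (∑ j' : Fin (dd β T hr i + 1), (if (j' : ℕ) < (j : ℕ) + 1 then s i j' else 0)) -
          (∑ j' : Fin (dd β T hr i + 1), (if (j' : ℕ) < (j : ℕ) then s i j' else 0)) := (hstep s i j).symm
      _ = (∑ j' : Fin (dd β T hr i + 1), (if (j' : ℕ) < (j : ℕ) + 1 then s' i j' else 0)) -
          (∑ j' : Fin (dd β T hr i + 1), (if (j' : ℕ) < (j : ℕ) then s' i j' else 0)) := by rw [hA, hB]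
      _ = s' i j := hstep s' i j
  · -- image equality
    apply Set.eq_of_subset_of_subset
    · rintro x ⟨s, hs, rfl⟩
      refine ⟨fun p q h => hcongr s p q h, fun p q h => hVO s hs p q (le_of_lt h),
        fun p hp => eC_apply_T β T μ hr hTB' s p hp⟩
    · intro x hx
      obtain ⟨h1, h2, h3⟩ := hx
      set v : ℕ → ℝ := fun c => if h : ∃ p : Q, β p = c then x h.choose else 0 with hvdef
      have hv : ∀ p : Q, v (β p) = x p := by
        intro p
        have he : ∃ q : Q, β q = β p := ⟨p, rfl⟩
        rw [hvdef]
        simp only [dif_pos he]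
        exact h1 _ _ he.choose_spec
      have hvmono : ∀ c ∈ Bb β, ∀ c' ∈ Bb β, c ≤ c' → v c ≤ v c' := by
        intro c hc c' hc' hcc
        obtain ⟨p, -, hp⟩ := Finset.mem_image.mp hc
        obtain ⟨p', -, hp'⟩ := Finset.mem_image.mp hc'
        rw [← hp, ← hp', hv, hv]
        rcases eq_or_lt_of_le hcc with h | h
        · exact le_of_eq (h1 p p' (by omega))
        · exact h2 p p' (by omega)
      have hvT : ∀ t ∈ T, v t = μ t := by
        intro t ht
        obtain ⟨p, hp⟩ := hTB t ht
        rw [← hp, hv]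
        exact h3 p (hp ▸ ht)
      have hgclB : ∀ (i : Fin r) (a : Fin (dd β T hr i + 2)),
          ((rhoF β T hr hTB' i a : ℕ)) ∈ Bb β :=
        fun i a => (Finset.mem_filter.mp (rhoF β T hr hTB' i a).2).1
      have hrmono : ∀ (i : Fin r) (a b : Fin (dd β T hr i + 2)), a ≤ b →
          (rhoF β T hr hTB' i a : ℕ) ≤ (rhoF β T hr hTB' i b : ℕ) :=
        fun i a b h => Subtype.coe_le_coe.mpr ((rhoF β T hr hTB' i).monotone h)
      set sfun : (i : Fin r) → Fin (dd β T hr i + 1) → ℝ := fun i j =>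
        (v (rhoF β T hr hTB' i j.succ : ℕ) - v (rhoF β T hr hTB' i j.castSucc : ℕ)) /
          Cc T μ hr i with hsfun
      have hCne : ∀ i : Fin r, Cc T μ hr i ≠ 0 := fun i => ne_of_gt (hCpos i)
      have htel : ∀ i : Fin r,
          ∑ j : Fin (dd β T hr i + 1), (v (rhoF β T hr hTB' i j.succ : ℕ) -
            v (rhoF β T hr hTB' i j.castSucc : ℕ)) = Cc T μ hr i := by
        intro i
        rw [fin_telescope (dd β T hr i) (fun t => v (rhoF β T hr hTB' i t : ℕ))]
        rw [rhoF_last β T hr hTB' i, rhoF_zero β T hr hTB' i,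
          hvT _ (tauF T hr i.succ).2, hvT _ (tauF T hr i.castSucc).2]
        rfl
      have hsS : sfun ∈ Simp := by
        intro i
        constructor
        · intro j
          apply div_nonneg _ (le_of_lt (hCpos i))
          exact sub_nonneg.mpr (hvmono _ (hgclB i j.castSucc) _ (hgclB i j.succ)
            (hrmono i _ _ (le_of_lt (Fin.castSucc_lt_succ (i := j)))))
        · rw [hsfun]
          simp only
          rw [← Finset.sum_div, htel i, div_self (hCne i)]
      refine ⟨sfun, hsS, ?_⟩
      funext p
      by_cases hpT : β p ∈ T
      · rw [eC_apply_T β T μ hr hTB' sfun p hpT]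
        exact (h3 p hpT).symm
      · obtain ⟨i, hg1, hg2⟩ := hgap p hpT
        rw [eC_apply_gap β T μ hr hTB' sfun p hg1 hg2]
        have hcgcl : β p ∈ gcl β T hr i :=
          Finset.mem_filter.mpr ⟨hBmem p, le_of_lt hg1, le_of_lt hg2⟩
        set m := (rhoF β T hr hTB' i).symm ⟨β p, hcgcl⟩ with hmdef
        have hm : (rhoF β T hr hTB' i m : ℕ) = β p := by rw [hmdef]; simp
        have hcond : ∀ j : Fin (dd β T hr i + 1),
            ((rhoF β T hr hTB' i j.castSucc : ℕ) < β p) ↔ (j : ℕ) < (m : ℕ) := by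
          intro j
          rw [← hm, rhoF_lt_iff]
          simp [Fin.lt_def]
        have hsum : Cc T μ hr i * ∑ j, (if (rhoF β T hr hTB' i j.castSucc : ℕ) < β p
            then sfun i j else 0) = v (β p) - μ (tauF T hr i.castSucc : ℕ) := by
          rw [Finset.mul_sum]
          have : ∀ j : Fin (dd β T hr i + 1),
              Cc T μ hr i * (if (rhoF β T hr hTB' i j.castSucc : ℕ) < β p
                then sfun i j else 0) =
              (if (j : ℕ) < (m : ℕ) then (v (rhoF β T hr hTB' i j.succ : ℕ) -
                v (rhoF β T hr hTB' i j.castSucc : ℕ)) else 0) := by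
            intro j
            by_cases h : (rhoF β T hr hTB' i j.castSucc : ℕ) < β p
            · rw [if_pos h, if_pos ((hcond j).mp h), hsfun]
              simp only
              rw [mul_div_cancel₀ _ (hCne i)]
            · rw [if_neg h, if_neg (fun hh => h ((hcond j).mpr hh)), mul_zero]
          rw [Finset.sum_congr rfl (fun j _ => this j)]
          rw [fin_telescope_partial (dd β T hr i) (fun t => v (rhoF β T hr hTB' i t : ℕ)) m]
          rw [hm, rhoF_zero β T hr hTB' i, hvT _ (tauF T hr i.castSucc).2]
        rw [hsum, hv p]
        ring


lemma FL_prod {P : Type} [Fintype P] [DecidableEq P] [PartialOrder P]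
    (Pstar : Finset P) (lam : P → ℝ) (L : IdealChain P)
    (hext : ∀ p : P, IsExtremalElt p → p ∈ Pstar)
    (hAd : Admissible Pstar lam L) : IsProdOfSimplices (FL Pstar lam L) := by
  classical
  by_cases hP : Nonempty P
  · set T : Finset ℕ := Finset.image (bIdx L) Pstar with hT
    set μ : ℕ → ℝ := fun c => if h : ∃ a, a ∈ Pstar ∧ bIdx L a = c then lam h.choose else 0
      with hμdef
    have hμ : ∀ a ∈ Pstar, μ (bIdx L a) = lam a := by
      intro a ha
      have he : ∃ b, b ∈ Pstar ∧ bIdx L b = bIdx L a := ⟨a, ha, rfl⟩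
      rw [hμdef]
      simp only [dif_pos he]
      exact lam_eq_of_sameBlock hAd he.choose_spec.1 ha he.choose_spec.2
    have hset : FL Pstar lam L = {x : P → ℝ | (∀ p q, bIdx L p = bIdx L q → x p = x q) ∧
        (∀ p q, bIdx L p < bIdx L q → x p ≤ x q) ∧
        (∀ p, bIdx L p ∈ T → x p = μ (bIdx L p))} := by
      ext x
      rw [Set.mem_setOf_eq, mem_FL_iff]
      constructor
      · rintro ⟨h1, h2, h3⟩
        refine ⟨h2, h3, fun p hp => ?_⟩
        obtain ⟨a, ha, hba⟩ := Finset.mem_image.mp hp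
        rw [h2 p a (by omega), h1 a ha, ← hμ a ha, hba]
      · rintro ⟨h2, h3, hTc⟩
        refine ⟨fun a ha => ?_, h2, h3⟩
        rw [hTc a (Finset.mem_image.mpr ⟨a, ha, rfl⟩), hμ a ha]
    rw [hset]
    obtain ⟨pmin, -, hpmin⟩ := Finset.exists_min_image Finset.univ (bIdx L)
      ⟨hP.some, Finset.mem_univ _⟩
    obtain ⟨pmax, -, hpmax⟩ := Finset.exists_max_image Finset.univ (bIdx L)
      ⟨hP.some, Finset.mem_univ _⟩
    obtain ⟨amin, haminS, hamin⟩ := exists_marked_bot hext pmin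
      (fun q => hpmin q (Finset.mem_univ q))
    obtain ⟨amax, hamaxS, hamax⟩ := exists_marked_top hext pmax
      (fun q => hpmax q (Finset.mem_univ q))
    apply core_prod (bIdx L) T μ hP
    · intro t ht
      obtain ⟨a, -, hba⟩ := Finset.mem_image.mp ht
      exact ⟨a, hba⟩
    · intro p
      refine ⟨bIdx L amin, Finset.mem_image.mpr ⟨amin, haminS, rfl⟩, ?_⟩
      rw [hamin]
      exact hpmin p (Finset.mem_univ p)
    · intro p
      refine ⟨bIdx L amax, Finset.mem_image.mpr ⟨amax, hamaxS, rfl⟩, ?_⟩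
      rw [hamax]
      exact hpmax p (Finset.mem_univ p)
    · intro s hs t ht hst
      obtain ⟨a, ha, hba⟩ := Finset.mem_image.mp hs
      obtain ⟨b, hb, hbb⟩ := Finset.mem_image.mp ht
      rw [← hba, ← hbb, hμ a ha, hμ b hb]
      exact lam_lt_of_blockLt hAd ha hb (by omega)
  · -- P is empty
    refine ⟨0, Fin.elim0, AffineMap.const ℝ _ (fun p => (hP ⟨p⟩).elim), ?_, ?_⟩
    · intro a _ b _ _
      funext i
      exact i.elim0
    · ext x
      constructor
      · intro _
        exact ⟨fun a ha => (hP ⟨a⟩).elim, fun I J _ p hp => (hP ⟨p⟩).elim,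
          fun I J I' J' _ _ _ p hp => (hP ⟨p⟩).elim⟩
      · intro _
        exact ⟨fun i => i.elim0, fun i => i.elim0, funext fun p => (hP ⟨p⟩).elim⟩

lemma FL_subset_MOP {P : Type} [Fintype P] [DecidableEq P] [PartialOrder P]
    {Pstar : Finset P} {lam : P → ℝ} {L : IdealChain P}
    {x : P → ℝ} (hx : x ∈ FL Pstar lam L) : x ∈ MOP Pstar lam := by
  refine ⟨?_, hx.1⟩
  intro p q hpq
  rw [mem_FL_iff] at hx
  have hpJq : p ∈ Jmin L q := L.isIdeal _ (Jmin_spec L q).1 q (Jmin_spec L q).2.1 p hpq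
  have hsub : Jmin L p ⊆ Jmin L q := (Jmin_spec L p).2.2 _ (Jmin_spec L q).1 hpJq
  have hle : bIdx L p ≤ bIdx L q := Finset.card_le_card hsub
  rcases eq_or_lt_of_le hle with h | h
  · exact le_of_eq (hx.2.1 p q h)
  · exact hx.2.2 p q h

lemma MOP_subset_union {P : Type} [Fintype P] [DecidableEq P] [PartialOrder P]
    {Pstar : Finset P} {lam : P → ℝ}
    {x : P → ℝ} (hx : x ∈ MOP Pstar lam) :
    ∃ L : IdealChain P, Admissible Pstar lam L ∧ x ∈ FL Pstar lam L := by
  classical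
  obtain ⟨hmono, hmark⟩ := hx
  set idl : Finset (Finset P) := insert ∅
    ((Finset.image x Finset.univ).image (fun v => Finset.univ.filter (fun p => x p ≤ v)))
    with hidl
  have hthr : ∀ I ∈ idl, ∀ p q : P, p ∈ I → x q ≤ x p → q ∈ I := by
    intro I hI p q hp hqp
    rw [hidl] at hI
    rcases Finset.mem_insert.mp hI with h | h
    · subst h; exact absurd hp (Finset.notMem_empty p)
    · obtain ⟨v, -, rfl⟩ := Finset.mem_image.mp h
      rw [Finset.mem_filter] at hp ⊢
      exact ⟨Finset.mem_univ q, le_trans hqp hp.2⟩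
  have hIchar : ∀ I ∈ idl, ∀ p : P, p ∉ I → ∀ q ∈ I, x q < x p := by
    intro I hI p hp q hq
    rw [hidl] at hI
    rcases Finset.mem_insert.mp hI with h | h
    · subst h; exact absurd hq (Finset.notMem_empty q)
    · obtain ⟨v, -, rfl⟩ := Finset.mem_image.mp h
      rw [Finset.mem_filter] at hq hp
      push_neg at hp
      exact lt_of_le_of_lt hq.2 (hp (Finset.mem_univ p))
  set Lx : IdealChain P :=
    { ideals := idl
      isIdeal := by
        intro I hI p hp q hqp
        exact hthr I hI p q hp (hmono q p hqp)
      chain := by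
        intro I hI J hJ
        rw [hidl] at hI hJ
        rcases Finset.mem_insert.mp hI with h | h
        · subst h; exact Or.inl (Finset.empty_subset J)
        rcases Finset.mem_insert.mp hJ with h' | h'
        · subst h'; exact Or.inr (Finset.empty_subset I)
        obtain ⟨v, -, rfl⟩ := Finset.mem_image.mp h
        obtain ⟨w, -, rfl⟩ := Finset.mem_image.mp h'
        rcases le_total v w with hvw | hvw
        · exact Or.inl (fun p hp => by
            rw [Finset.mem_filter] at hp ⊢
            exact ⟨hp.1, le_trans hp.2 hvw⟩)
        · exact Or.inr (fun p hp => by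
            rw [Finset.mem_filter] at hp ⊢
            exact ⟨hp.1, le_trans hp.2 hvw⟩)
      empty_mem := Finset.mem_insert_self _ _
      univ_mem := by
        by_cases hP : Nonempty P
        · obtain ⟨p₀⟩ := hP
          have hne : (Finset.image x Finset.univ).Nonempty := ⟨x p₀, by simp⟩
          have hmax := Finset.max'_mem _ hne
          rw [hidl]
          apply Finset.mem_insert_of_mem
          apply Finset.mem_image.mpr
          refine ⟨(Finset.image x Finset.univ).max' hne, hmax, ?_⟩
          ext p
          simp only [Finset.mem_filter, Finset.mem_univ, true_and, iff_true]
          exact Finset.le_max' _ (x p) (by simp)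
        · have : IsEmpty P := not_nonempty_iff.mp hP
          have : (Finset.univ : Finset P) = ∅ := Finset.univ_eq_empty
          rw [this]
          exact Finset.mem_insert_self _ _ } with hLx
  have hconst : ∀ I J, Consec Lx I J → ∀ p ∈ J \ I, ∀ q ∈ J \ I, x p = x q := by
    have key : ∀ I J, Consec Lx I J → ∀ p ∈ J \ I, ∀ q ∈ J \ I, ¬ x p < x q := by
      rintro I J ⟨hI, hJ, hIJ, hbet⟩ p hp q hq hlt
      rw [Finset.mem_sdiff] at hp hq
      have hxpm : x p ∈ Finset.image x Finset.univ := by simp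
      set K : Finset P := Finset.univ.filter (fun r => x r ≤ x p) with hK
      have hKm : K ∈ idl := by
        rw [hidl]
        exact Finset.mem_insert_of_mem (Finset.mem_image.mpr ⟨x p, hxpm, rfl⟩)
      have hIK : I ⊂ K := by
        constructor
        · intro r hr
          rw [hK, Finset.mem_filter]
          exact ⟨Finset.mem_univ r, le_of_lt (hIchar I hI p hp.2 r hr)⟩
        · intro hKI
          exact hp.2 (hKI (by rw [hK, Finset.mem_filter]; exact ⟨Finset.mem_univ p, le_refl _⟩))
      have hKJ : K ⊂ J := by
        constructor
        · intro r hr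
          rw [hK, Finset.mem_filter] at hr
          exact hthr J hJ p r hp.1 hr.2
        · intro hJK
          have := hJK hq.1
          rw [hK, Finset.mem_filter] at this
          exact absurd this.2 (not_le.mpr hlt)
      exact hbet K hKm ⟨hIK, hKJ⟩
    intro I J hC p hp q hq
    exact le_antisymm (le_of_not_gt (key I J hC q hq p hp)) (le_of_not_gt (key I J hC p hp q hq))
  have hcross : ∀ I J I' J', Consec Lx I J → Consec Lx I' J' → J ⊆ I' →
      ∀ p ∈ J \ I, ∀ q ∈ J' \ I', x p < x q := by
    rintro I J I' J' ⟨hI, hJ, -, -⟩ ⟨hI', hJ', -, -⟩ hsub p hp q hq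
    rw [Finset.mem_sdiff] at hp hq
    exact hIchar I' hI' q hq.2 p (hsub hp.1)
  refine ⟨Lx, ⟨?_, ?_⟩, ⟨hmark, ?_, ?_⟩⟩
  · intro I J hC a ha b hb
    rw [Finset.mem_inter] at ha hb
    rw [← hmark a ha.2, ← hmark b hb.2]
    exact hconst I J hC a ha.1 b hb.1
  · intro I J I' J' hC hC' hsub a ha b hb
    rw [Finset.mem_inter] at ha hb
    rw [← hmark a ha.2, ← hmark b hb.2]
    exact hcross I J I' J' hC hC' hsub a ha.1 b hb.1
  · exact hconst
  · intro I J I' J' hC hC' hsub p hp q hq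
    exact le_of_lt (hcross I J I' J' hC hC' hsub p hp q hq)

lemma part1 {P : Type} [Fintype P] [DecidableEq P] [PartialOrder P]
    (Pstar : Finset P) (lam : P → ℝ)
    (hext : ∀ p : P, IsExtremalElt p → p ∈ Pstar)
    (σ : P ≃ Fin (Fintype.card P)) (hlin : LinExt σ) (hcompat : LamCompat Pstar lam σ) :
    ∃ Lt : IdealChain P, Admissible Pstar lam Lt ∧ Lt.ideals ⊆ maxChainIdeals σ ∧
      FL Pstar lam Lt = MOPsigma Pstar lam σ ∧
      IsProdOfSimplices (MOPsigma Pstar lam σ) := by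
  classical
  have hn : ∀ p : P, (σ p : ℕ) < Fintype.card P := fun p => (σ p).isLt
  set Ifun : ℕ → Finset P := fun i => Finset.univ.filter (fun p => ((σ p : ℕ) < i)) with hIfun
  set keep : ℕ → Prop :=
    fun k => ∀ a ∈ Pstar, ∀ b ∈ Pstar, (σ a : ℕ) < k → k ≤ (σ b : ℕ) → lam a < lam b with hkeep
  set K : Finset ℕ := (Finset.range (Fintype.card P + 1)).filter keep with hKdef
  have hmemI : ∀ (i : ℕ) (p : P), p ∈ Ifun i ↔ (σ p : ℕ) < i := by
    intro i p; rw [hIfun]; simp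
  have hmono : ∀ i j : ℕ, i ≤ j → Ifun i ⊆ Ifun j := by
    intro i j hij p hp
    rw [hmemI] at *
    omega
  have hstrict : ∀ i j : ℕ, i < j → j ≤ Fintype.card P → ∃ p, p ∈ Ifun j ∧ p ∉ Ifun i := by
    intro i j hij hjn
    have hv : (σ (σ.symm ⟨i, by omega⟩) : ℕ) = i := by simp
    refine ⟨σ.symm ⟨i, by omega⟩, ?_, ?_⟩
    · rw [hmemI, hv]; omega
    · rw [hmemI, hv]; omega
  have hsub_le : ∀ i j : ℕ, j ≤ Fintype.card P → Ifun i ⊆ Ifun j → i ≤ Fintype.card P → i ≤ j := by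
    intro i j hjn hsub hin
    by_contra h
    push_neg at h
    obtain ⟨p, hpj, hpi⟩ := hstrict j i h hin
    exact hpi (hsub hpj)
  have hI0 : Ifun 0 = ∅ := by
    ext p; rw [hmemI]; simp
  have hIn : Ifun (Fintype.card P) = Finset.univ := by
    ext p; rw [hmemI]; simp [hn p]
  have hK0 : (0 : ℕ) ∈ K := by
    rw [hKdef, Finset.mem_filter]
    exact ⟨by simp, fun a _ b _ h _ => absurd h (by omega)⟩
  have hKn : Fintype.card P ∈ K := by
    rw [hKdef, Finset.mem_filter]
    refine ⟨by simp, fun a _ b _ _ h => absurd h ?_⟩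
    push_neg
    exact (σ b).isLt
  have hKle : ∀ k ∈ K, k ≤ Fintype.card P := by
    intro k hk
    rw [hKdef, Finset.mem_filter, Finset.mem_range] at hk
    omega
  have hKkeep : ∀ k ∈ K, keep k := by
    intro k hk
    rw [hKdef, Finset.mem_filter] at hk
    exact hk.2
  have hnotkeep : ∀ k : ℕ, ¬ keep k →
      ∃ a ∈ Pstar, ∃ b ∈ Pstar, (σ a : ℕ) < k ∧ k ≤ (σ b : ℕ) ∧ lam a = lam b := by
    intro k hk
    simp only [hkeep] at hk
    push_neg at hk
    obtain ⟨a, ha, b, hb, h1, h2, h3⟩ := hk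
    refine ⟨a, ha, b, hb, h1, h2, le_antisymm (hcompat a ha b hb ?_) h3⟩
    rw [Fin.le_def]
    omega
  set Lt : IdealChain P :=
    { ideals := K.image Ifun
      isIdeal := by
        intro I hI
        obtain ⟨i, -, rfl⟩ := Finset.mem_image.mp hI
        intro p hp q hqp
        rw [hmemI] at *
        have := hlin q p hqp
        rw [Fin.le_def] at this
        omega
      chain := by
        intro I hI J hJ
        obtain ⟨i, -, rfl⟩ := Finset.mem_image.mp hI
        obtain ⟨j, -, rfl⟩ := Finset.mem_image.mp hJ
        rcases le_total i j with h | h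
        · exact Or.inl (hmono i j h)
        · exact Or.inr (hmono j i h)
      empty_mem := by
        rw [← hI0]
        exact Finset.mem_image.mpr ⟨0, hK0, rfl⟩
      univ_mem := by
        rw [← hIn]
        exact Finset.mem_image.mpr ⟨Fintype.card P, hKn, rfl⟩ } with hLt
  have hdec : ∀ I J, Consec Lt I J → ∃ i j, i ∈ K ∧ j ∈ K ∧ I = Ifun i ∧ J = Ifun j ∧
      i < j ∧ j ≤ Fintype.card P ∧ (∀ k, i < k → k < j → ¬ keep k) := by
    rintro I J ⟨hI, hJ, hIJ, hbet⟩
    rw [hLt] at hI hJ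
    obtain ⟨i, hiK, rfl⟩ := Finset.mem_image.mp hI
    obtain ⟨j, hjK, rfl⟩ := Finset.mem_image.mp hJ
    have hjn : j ≤ Fintype.card P := hKle j hjK
    have hin : i ≤ Fintype.card P := hKle i hiK
    have hij : i < j := by
      by_contra h
      push_neg at h
      exact (not_subset_of_ssubset hIJ) (hmono j i h)
    refine ⟨i, j, hiK, hjK, rfl, rfl, hij, hjn, ?_⟩
    intro k hik hkj hkeepk
    have hkK : k ∈ K := by
      rw [hKdef, Finset.mem_filter, Finset.mem_range]
      exact ⟨by omega, hkeepk⟩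
    have hIk : Ifun i ⊂ Ifun k := by
      obtain ⟨p, hp1, hp2⟩ := hstrict i k hik (by omega)
      exact Finset.ssubset_iff_of_subset (hmono i k (by omega)) |>.mpr ⟨p, hp1, hp2⟩
    have hkJ : Ifun k ⊂ Ifun j := by
      obtain ⟨p, hp1, hp2⟩ := hstrict k j hkj (by omega)
      exact Finset.ssubset_iff_of_subset (hmono k j (by omega)) |>.mpr ⟨p, hp1, hp2⟩
    exact hbet (Ifun k) (Finset.mem_image.mpr ⟨k, hkK, rfl⟩) ⟨hIk, hkJ⟩
  have hwalk : ∀ d : ℕ, ∀ a b : P, a ∈ Pstar → b ∈ Pstar → (σ a : ℕ) ≤ (σ b : ℕ) →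
      (σ b : ℕ) - (σ a : ℕ) = d → (∀ k, (σ a : ℕ) < k → k ≤ (σ b : ℕ) → ¬ keep k) →
      lam a = lam b := by
    intro d
    induction d using Nat.strong_induction_on with
    | _ d IH =>
      intro a b ha hb hab hd hdel
      rcases Nat.eq_or_lt_of_le hab with heq | hlt
      · rw [σ.injective (Fin.ext heq)]
      · have hk := hdel ((σ a : ℕ) + 1) (by omega) (by omega)
        obtain ⟨a', ha', b', hb', h1, h2, h3⟩ := hnotkeep _ hk
        have haa' : lam a' ≤ lam a := hcompat a' ha' a ha (by rw [Fin.le_def]; omega)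
        have hab' : lam a ≤ lam b' := hcompat a ha b' hb' (by rw [Fin.le_def]; omega)
        have hlamab' : lam a = lam b' := by linarith
        by_cases hbb' : (σ b : ℕ) ≤ (σ b' : ℕ)
        · have h4 : lam b ≤ lam b' := hcompat b hb b' hb' (by rw [Fin.le_def]; omega)
          have h5 : lam a ≤ lam b := hcompat a ha b hb (by rw [Fin.le_def]; omega)
          linarith
        · push_neg at hbb'
          have hdel' : ∀ k, (σ b' : ℕ) < k → k ≤ (σ b : ℕ) → ¬ keep k :=
            fun k hk1 hk2 => hdel k (by omega) hk2
          have hIH := IH ((σ b : ℕ) - (σ b' : ℕ)) (by omega) b' b hb' hb (by omega) rfl hdel'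
          linarith
  have hAd : Admissible Pstar lam Lt := by
    constructor
    · rintro I J hC a haI b hbI
      obtain ⟨i, j, hiK, hjK, hIe, hJe, hij, hjn, hdel⟩ := hdec I J hC
      subst hIe; subst hJe
      rw [Finset.mem_inter] at haI hbI
      have haP := haI.2
      have hbP := hbI.2
      have haB := haI.1
      have hbB := hbI.1
      simp only [Finset.mem_sdiff, hmemI] at haB hbB
      rcases le_total (σ a : ℕ) (σ b : ℕ) with h | h
      · exact hwalk _ a b haP hbP h rfl (fun k hk1 hk2 => hdel k (by omega) (by omega))
      · exact (hwalk _ b a hbP haP h rfl (fun k hk1 hk2 => hdel k (by omega) (by omega))).symm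
    · rintro I J I' J' hC hC' hJI' a haI b hbI
      obtain ⟨i, j, hiK, hjK, hIe, hJe, hij, hjn, hdel⟩ := hdec I J hC
      obtain ⟨i', j', hiK', hjK', hIe', hJe', hij', hjn', hdel'⟩ := hdec I' J' hC'
      subst hIe; subst hJe; subst hIe'; subst hJe'
      rw [Finset.mem_inter] at haI hbI
      have haP := haI.2
      have hbP := hbI.2
      have haB := haI.1
      have hbB := hbI.1
      simp only [Finset.mem_sdiff, hmemI] at haB hbB
      have hji' : j ≤ i' := hsub_le j i' (by omega) hJI' (by omega)
      exact hKkeep j hjK a haP b hbP (by omega) (by omega)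
  have hclosed : ∀ I ∈ Lt.ideals, ∀ p q : P, q ∈ I → (σ p : ℕ) ≤ (σ q : ℕ) → p ∈ I := by
    intro I hI p q hq hpq
    rw [hLt] at hI
    obtain ⟨i, -, rfl⟩ := Finset.mem_image.mp hI
    rw [hmemI] at *
    omega
  have hFLM : FL Pstar lam Lt = MOPsigma Pstar lam σ := by
    ext x
    constructor
    · intro hx
      refine ⟨?_, hx.1⟩
      intro p q hpq
      rw [Fin.le_def] at hpq
      rw [mem_FL_iff] at hx
      have hpJq : p ∈ Jmin Lt q := hclosed _ (Jmin_spec Lt q).1 p q (Jmin_spec Lt q).2.1 hpq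
      have hsub : Jmin Lt p ⊆ Jmin Lt q := (Jmin_spec Lt p).2.2 _ (Jmin_spec Lt q).1 hpJq
      have hle : bIdx Lt p ≤ bIdx Lt q := Finset.card_le_card hsub
      rcases eq_or_lt_of_le hle with h | h
      · exact le_of_eq (hx.2.1 p q h)
      · exact hx.2.2 p q h
    · rintro ⟨hxm, hxmark⟩
      refine ⟨hxmark, ?_, ?_⟩
      · intro I J hC p hp q hq
        obtain ⟨i, j, hiK, hjK, hIe, hJe, hij, hjn, hdel⟩ := hdec I J hC
        subst hIe; subst hJe
        simp only [Finset.mem_sdiff, hmemI] at hp hq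
        have hxwalk : ∀ d : ℕ, ∀ p q : P, i ≤ (σ p : ℕ) → (σ p : ℕ) ≤ (σ q : ℕ) →
            (σ q : ℕ) < j → (σ q : ℕ) - (σ p : ℕ) = d → x p = x q := by
          intro d
          induction d using Nat.strong_induction_on with
          | _ d IH =>
            intro p q hip hpq hqj hd
            rcases Nat.eq_or_lt_of_le hpq with heq | hlt2
            · rw [σ.injective (Fin.ext heq)]
            · have hkdel : ¬ keep ((σ p : ℕ) + 1) := hdel _ (by omega) (by omega)
              obtain ⟨a, ha, b, hb, h1, h2, h3⟩ := hnotkeep _ hkdel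
              have hcard : (σ p : ℕ) + 1 < Fintype.card P := by
                have := hn q
                omega
              have hvp' : (σ (σ.symm ⟨(σ p : ℕ) + 1, hcard⟩) : ℕ) = (σ p : ℕ) + 1 := by simp
              have hxa : x a ≤ x p := hxm a p (Fin.le_def.mpr (by omega))
              have hxb : x (σ.symm ⟨(σ p : ℕ) + 1, hcard⟩) ≤ x b :=
                hxm _ b (Fin.le_def.mpr (by omega))
              have hxpp' : x p ≤ x (σ.symm ⟨(σ p : ℕ) + 1, hcard⟩) :=
                hxm p _ (Fin.le_def.mpr (by omega))
              have hxab : x a = x b := by rw [hxmark a ha, hxmark b hb, h3]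
              have hx1 : x p = x (σ.symm ⟨(σ p : ℕ) + 1, hcard⟩) :=
                le_antisymm hxpp' (by linarith)
              rw [hx1]
              exact IH ((σ q : ℕ) - ((σ p : ℕ) + 1)) (by omega) _ q (by omega) (by omega)
                hqj (by omega)
        rcases le_total (σ p : ℕ) (σ q : ℕ) with h | h
        · exact hxwalk _ p q (by omega) h (by omega) rfl
        · exact (hxwalk _ q p (by omega) h (by omega) rfl).symm
      · intro I J I' J' hC hC' hJI' p hp q hq
        obtain ⟨i, j, hiK, hjK, hIe, hJe, hij, hjn, hdel⟩ := hdec I J hC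
        obtain ⟨i', j', hiK', hjK', hIe', hJe', hij', hjn', hdel'⟩ := hdec I' J' hC'
        subst hIe; subst hJe; subst hIe'; subst hJe'
        simp only [Finset.mem_sdiff, hmemI] at hp hq
        have hji' : j ≤ i' := hsub_le j i' (by omega) hJI' (by omega)
        exact hxm p q (Fin.le_def.mpr (by omega))
  refine ⟨Lt, hAd, ?_, hFLM, ?_⟩
  · rw [hLt]
    show Finset.image Ifun K ⊆ maxChainIdeals σ
    rw [hIfun, maxChainIdeals, hKdef]
    exact Finset.image_subset_image (Finset.filter_subset _ _)
  · rw [← hFLM]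
    exact FL_prod Pstar lam Lt hext hAd

/-- Each maximal-dimension cell of `K_{P,λ}` is a marked order polytope: for every
λ-compatible linear extension `σ` the pruned chain `L̃_σ` (a λ-admissible subchain of
the maximal chain of `σ`) satisfies `F_{L̃_σ} = O(P_σ, λ)`, which is a product of
simplices; moreover every cell of `K_{P,λ}` is a product of simplices and
`K_{P,λ}` subdivides `O(P,λ)`. -/
theorem maximal_cells_are_MOPs (Pstar : Finset P) (lam : P → ℝ)
    (hext : ∀ p : P, IsExtremalElt p → p ∈ Pstar) (hlam : LamMono Pstar lam) :
    (∀ σ : P ≃ Fin (Fintype.card P), LinExt σ → LamCompat Pstar lam σ →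
      ∃ Lt : IdealChain P, Admissible Pstar lam Lt ∧ Lt.ideals ⊆ maxChainIdeals σ ∧
        FL Pstar lam Lt = MOPsigma Pstar lam σ ∧
        IsProdOfSimplices (MOPsigma Pstar lam σ)) ∧
    (∀ L : IdealChain P, Admissible Pstar lam L → IsProdOfSimplices (FL Pstar lam L)) ∧
    (⋃ L ∈ {L : IdealChain P | Admissible Pstar lam L}, FL Pstar lam L) = MOP Pstar lam := by
  refine ⟨?_, ?_, ?_⟩
  · intro σ hlin hcompat
    exact part1 Pstar lam hext σ hlin hcompat
  · intro L hAd
    exact FL_prod Pstar lam L hext hAd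
  · ext x
    simp only [Set.mem_iUnion, Set.mem_setOf_eq]
    constructor
    · rintro ⟨L, hAd, hx⟩
      exact FL_subset_MOP hx
    · intro hx
      obtain ⟨L, hAd, hm⟩ := MOP_subset_union hx
      exact ⟨L, hAd, hm⟩
end ChainFacts
end

section
/- The dimension of the polytope F_L equals the dimension of the λ-admissible chain L, i.e., the number of consecutive differences I_i \ I_{i-1} that contain no marked elements. -/
open Classical

variable {P : Type} [Fintype P] [DecidableEq P] [PartialOrder P]

/-- The dimension of a chain: the number of consecutive differences disjoint
from the marked set. -/
noncomputable def chainDim (Pstar : Finset P) (L : IdealChain P) : ℕ :=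
  ((L.ideals ×ˢ L.ideals).filter
    (fun IJ => Consec L IJ.1 IJ.2 ∧ (IJ.2 \ IJ.1) ∩ Pstar = ∅)).card


section GapAux

variable {P : Type} [Fintype P] [DecidableEq P] [PartialOrder P]

lemma exists_gap (L : IdealChain P) (p : P) :
    ∃ I J, Consec L I J ∧ p ∈ J ∧ p ∉ I := by
  obtain ⟨J, hJm, hJmin⟩ := Finset.exists_min_image
    (L.ideals.filter (fun K => p ∈ K)) Finset.card
    ⟨Finset.univ, by simp [L.univ_mem]⟩
  obtain ⟨I, hIm, hImax⟩ := Finset.exists_max_image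
    (L.ideals.filter (fun K => p ∉ K)) Finset.card
    ⟨∅, by simp [L.empty_mem]⟩
  rw [Finset.mem_filter] at hJm hIm
  have hJle : ∀ K ∈ L.ideals, p ∈ K → J ⊆ K := by
    intro K hK hpK
    rcases L.chain J hJm.1 K hK with h | h
    · exact h
    · have hc := hJmin K (Finset.mem_filter.mpr ⟨hK, hpK⟩)
      have he : K = J := Finset.eq_of_subset_of_card_le h hc
      exact he ▸ Finset.Subset.refl _
  have hIge : ∀ K ∈ L.ideals, p ∉ K → K ⊆ I := by
    intro K hK hpK
    rcases L.chain K hK I hIm.1 with h | h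
    · exact h
    · have hc := hImax K (Finset.mem_filter.mpr ⟨hK, hpK⟩)
      have he : I = K := Finset.eq_of_subset_of_card_le h hc
      exact he ▸ Finset.Subset.refl _
  have hsub : I ⊂ J := by
    rcases L.chain I hIm.1 J hJm.1 with h | h
    · exact Finset.ssubset_iff_subset_ne.mpr ⟨h, fun he => hIm.2 (he ▸ hJm.2)⟩
    · exact absurd (h hJm.2) hIm.2
  refine ⟨I, J, ⟨hIm.1, hJm.1, hsub, ?_⟩, hJm.2, hIm.2⟩
  rintro K hK ⟨h1, h2⟩
  by_cases hpK : p ∈ K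
  · exact h2.ne (Finset.Subset.antisymm h2.subset (hJle K hK hpK))
  · exact h1.ne (Finset.Subset.antisymm h1.subset (hIge K hK hpK))

noncomputable def gapI (L : IdealChain P) (p : P) : Finset P := (exists_gap L p).choose

noncomputable def gapJ (L : IdealChain P) (p : P) : Finset P :=
  (exists_gap L p).choose_spec.choose

lemma gap_spec (L : IdealChain P) (p : P) :
    Consec L (gapI L p) (gapJ L p) ∧ p ∈ gapJ L p ∧ p ∉ gapI L p :=
  (exists_gap L p).choose_spec.choose_spec

lemma gap_consec (L : IdealChain P) (p : P) : Consec L (gapI L p) (gapJ L p) :=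
  (gap_spec L p).1

lemma mem_gapJ (L : IdealChain P) (p : P) : p ∈ gapJ L p := (gap_spec L p).2.1

lemma not_mem_gapI (L : IdealChain P) (p : P) : p ∉ gapI L p := (gap_spec L p).2.2

lemma gapI_mem (L : IdealChain P) (p : P) : gapI L p ∈ L.ideals := (gap_consec L p).1

lemma gapJ_mem (L : IdealChain P) (p : P) : gapJ L p ∈ L.ideals := (gap_consec L p).2.1

lemma mem_gapJ_subset {L : IdealChain P} {K : Finset P} {a : P}
    (hK : K ∈ L.ideals) (ha : a ∈ K) : gapJ L a ⊆ K := by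
  rcases L.chain K hK (gapI L a) (gapI_mem L a) with h | h
  · exact absurd (h ha) (not_mem_gapI L a)
  · rcases L.chain (gapJ L a) (gapJ_mem L a) K hK with h2 | h2
    · exact h2
    · by_cases he : K = gapJ L a
      · exact he ▸ Finset.Subset.refl _
      · exfalso
        exact (gap_consec L a).2.2.2 K hK
          ⟨Finset.ssubset_iff_subset_ne.mpr ⟨h, fun hh => (not_mem_gapI L a) (hh ▸ ha)⟩,
           Finset.ssubset_iff_subset_ne.mpr ⟨h2, he⟩⟩

lemma not_mem_gapI_subset {L : IdealChain P} {K : Finset P} {a : P}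
    (hK : K ∈ L.ideals) (ha : a ∉ K) : K ⊆ gapI L a := by
  rcases L.chain (gapJ L a) (gapJ_mem L a) K hK with h | h
  · exact absurd (h (mem_gapJ L a)) ha
  · rcases L.chain K hK (gapI L a) (gapI_mem L a) with h2 | h2
    · exact h2
    · by_cases he : gapI L a = K
      · exact he ▸ Finset.Subset.refl _
      · exfalso
        exact (gap_consec L a).2.2.2 K hK
          ⟨Finset.ssubset_iff_subset_ne.mpr ⟨h2, he⟩,
           Finset.ssubset_iff_subset_ne.mpr ⟨h, fun hh => ha (hh ▸ mem_gapJ L a)⟩⟩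

lemma gap_eq {L : IdealChain P} {I J : Finset P} {p : P}
    (h : Consec L I J) (hp : p ∈ J) (hp' : p ∉ I) :
    gapI L p = I ∧ gapJ L p = J := by
  have h1 : gapJ L p ⊆ J := mem_gapJ_subset h.2.1 hp
  have h2 : I ⊆ gapI L p := not_mem_gapI_subset h.1 hp'
  have hII : gapI L p = I := by
    by_contra hne
    refine h.2.2.2 (gapI L p) (gapI_mem L p)
      ⟨Finset.ssubset_iff_subset_ne.mpr ⟨h2, fun hh => hne hh.symm⟩, ?_⟩
    exact lt_of_lt_of_le (gap_consec L p).2.2.1 h1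
  have hJJ : gapJ L p = J := by
    by_contra hne
    refine h.2.2.2 (gapJ L p) (gapJ_mem L p)
      ⟨?_, Finset.ssubset_iff_subset_ne.mpr ⟨h1, hne⟩⟩
    exact hII ▸ (gap_consec L p).2.2.1
  exact ⟨hII, hJJ⟩

lemma consec_le_of_lt {L : IdealChain P} {I J I' J' : Finset P}
    (h1 : Consec L I J) (h2 : Consec L I' J') (h : J ⊂ J') : J ⊆ I' := by
  rcases L.chain J h1.2.1 I' h2.1 with hh | hh
  · exact hh
  · by_cases he : I' = J
    · exact he ▸ Finset.Subset.refl _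
    · exact absurd ⟨Finset.ssubset_iff_subset_ne.mpr ⟨hh, he⟩, h⟩ (h2.2.2.2 J h1.2.1)

lemma consec_tri {L : IdealChain P} {I J I' J' : Finset P}
    (h1 : Consec L I J) (h2 : Consec L I' J') :
    (I = I' ∧ J = J') ∨ J ⊆ I' ∨ J' ⊆ I := by
  by_cases he : J = J'
  · subst he
    left
    refine ⟨?_, rfl⟩
    rcases L.chain I h1.1 I' h2.1 with hII | hII
    · by_contra hne
      exact h1.2.2.2 I' h2.1 ⟨Finset.ssubset_iff_subset_ne.mpr ⟨hII, hne⟩, h2.2.2.1⟩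
    · by_contra hne
      exact h2.2.2.2 I h1.1
        ⟨Finset.ssubset_iff_subset_ne.mpr ⟨hII, fun hh => hne hh.symm⟩, h1.2.2.1⟩
  · rcases L.chain J h1.2.1 J' h2.2.1 with h | h
    · exact Or.inr (Or.inl (consec_le_of_lt h1 h2 (Finset.ssubset_iff_subset_ne.mpr ⟨h, he⟩)))
    · exact Or.inr (Or.inr (consec_le_of_lt h2 h1
        (Finset.ssubset_iff_subset_ne.mpr ⟨h, fun hh => he hh.symm⟩)))

end GapAux
section LamAux

variable {P : Type} [Fintype P] [DecidableEq P] [PartialOrder P]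
variable {Pstar : Finset P} {lam : P → ℝ} {L : IdealChain P}

lemma lam_lt (hL : Admissible Pstar lam L) {a b : P} (ha : a ∈ Pstar) (hb : b ∈ Pstar)
    (h : gapJ L a ⊆ gapI L b) : lam a < lam b :=
  hL.2 _ _ _ _ (gap_consec L a) (gap_consec L b) h a
    (Finset.mem_inter.mpr ⟨Finset.mem_sdiff.mpr ⟨mem_gapJ L a, not_mem_gapI L a⟩, ha⟩) b
    (Finset.mem_inter.mpr ⟨Finset.mem_sdiff.mpr ⟨mem_gapJ L b, not_mem_gapI L b⟩, hb⟩)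

lemma lam_le (hL : Admissible Pstar lam L) {a b : P} (ha : a ∈ Pstar) (hb : b ∈ Pstar)
    (p : P) (h1 : gapJ L a ⊆ gapJ L p) (h2 : gapI L p ⊆ gapI L b) : lam a ≤ lam b := by
  rcases consec_tri (gap_consec L a) (gap_consec L b) with ⟨hI, hJ⟩ | h | h
  · refine le_of_eq (hL.1 _ _ (gap_consec L a) a ?_ b ?_)
    · exact Finset.mem_inter.mpr ⟨Finset.mem_sdiff.mpr ⟨mem_gapJ L a, not_mem_gapI L a⟩, ha⟩
    · refine Finset.mem_inter.mpr ⟨Finset.mem_sdiff.mpr ⟨?_, ?_⟩, hb⟩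
      · exact hJ ▸ mem_gapJ L b
      · exact hI ▸ not_mem_gapI L b
  · exact (lam_lt hL ha hb h).le
  · exfalso
    rcases L.chain (gapI L a) (gapI_mem L a) (gapI L p) (gapI_mem L p) with hh | hh
    · exact not_mem_gapI L b (h2 (hh (h (mem_gapJ L b))))
    · by_cases heq : gapI L p = gapI L a
      · exact not_mem_gapI L b (h2 (heq ▸ (h (mem_gapJ L b))))
      · exact (gap_consec L p).2.2.2 (gapI L a) (gapI_mem L a)
          ⟨Finset.ssubset_iff_subset_ne.mpr ⟨hh, heq⟩,
           lt_of_lt_of_le (gap_consec L a).2.2.1 h1⟩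

end LamAux

noncomputable def loF {P : Type} [Fintype P] [DecidableEq P] [PartialOrder P]
    (Pstar : Finset P) (lam : P → ℝ) (L : IdealChain P) (p : P) : ℝ :=
  if h : (Pstar ∩ gapJ L p).Nonempty then (Pstar ∩ gapJ L p).sup' h lam else 0

noncomputable def hiF {P : Type} [Fintype P] [DecidableEq P] [PartialOrder P]
    (Pstar : Finset P) (lam : P → ℝ) (L : IdealChain P) (p : P) : ℝ :=
  if h : (Pstar \ gapI L p).Nonempty then (Pstar \ gapI L p).inf' h lam else 0

noncomputable def wF {P : Type} [Fintype P] [DecidableEq P] [PartialOrder P]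
    (Pstar : Finset P) (lam : P → ℝ) (L : IdealChain P) (K : Finset P) (p : P) : ℝ :=
  if p ∈ K then loF Pstar lam L p else hiF Pstar lam L p

section LoHi

variable {P : Type} [Fintype P] [DecidableEq P] [PartialOrder P]
variable {Pstar : Finset P} {lam : P → ℝ} {L : IdealChain P}

lemma lo_nonempty (hext : ∀ p : P, IsExtremalElt p → p ∈ Pstar) (p : P) :
    (Pstar ∩ gapJ L p).Nonempty := by
  obtain ⟨a, haJ, hmin⟩ := (gapJ L p).exists_minimal ⟨p, mem_gapJ L p⟩
  refine ⟨a, Finset.mem_inter.mpr ⟨hext a (Or.inl ?_), haJ⟩⟩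
  intro q hq
  by_contra hne
  exact hne (le_antisymm hq (hmin (L.isIdeal _ (gapJ_mem L p) a haJ q hq) hq))

lemma hi_nonempty (hext : ∀ p : P, IsExtremalElt p → p ∈ Pstar) (p : P) :
    (Pstar \ gapI L p).Nonempty := by
  obtain ⟨a, haS, hmax⟩ := (Finset.univ \ gapI L p).exists_maximal
    ⟨p, Finset.mem_sdiff.mpr ⟨Finset.mem_univ p, not_mem_gapI L p⟩⟩
  have haI : a ∉ gapI L p := (Finset.mem_sdiff.mp haS).2
  refine ⟨a, Finset.mem_sdiff.mpr ⟨hext a (Or.inr ?_), haI⟩⟩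
  intro q hq
  by_contra hne
  exact hne (le_antisymm (hmax (Finset.mem_sdiff.mpr ⟨Finset.mem_univ q,
    fun hqI => haI (L.isIdeal _ (gapI_mem L p) q hqI a hq)⟩) hq) hq)

lemma loF_eq (hext : ∀ p : P, IsExtremalElt p → p ∈ Pstar) (p : P) :
    loF Pstar lam L p = (Pstar ∩ gapJ L p).sup' (lo_nonempty hext p) lam :=
  dif_pos _

lemma hiF_eq (hext : ∀ p : P, IsExtremalElt p → p ∈ Pstar) (p : P) :
    hiF Pstar lam L p = (Pstar \ gapI L p).inf' (hi_nonempty hext p) lam :=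
  dif_pos _

lemma loF_congr {p q : P} (h : gapJ L p = gapJ L q) :
    loF Pstar lam L p = loF Pstar lam L q := by
  unfold loF; rw [h]

lemma hiF_congr {p q : P} (h : gapI L p = gapI L q) :
    hiF Pstar lam L p = hiF Pstar lam L q := by
  unfold hiF; rw [h]

lemma loF_le_of (hext : ∀ p : P, IsExtremalElt p → p ∈ Pstar) {p q : P}
    (h : gapJ L p ⊆ gapJ L q) : loF Pstar lam L p ≤ loF Pstar lam L q := by
  rw [loF_eq hext, loF_eq hext]
  refine Finset.sup'_le _ _ fun b hb => Finset.le_sup' lam ?_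
  rw [Finset.mem_inter] at hb ⊢
  exact ⟨hb.1, h hb.2⟩

lemma hiF_le_of (hext : ∀ p : P, IsExtremalElt p → p ∈ Pstar) {p q : P}
    (h : gapI L p ⊆ gapI L q) : hiF Pstar lam L p ≤ hiF Pstar lam L q := by
  rw [hiF_eq hext, hiF_eq hext]
  refine Finset.le_inf' _ _ fun b hb => Finset.inf'_le lam ?_
  rw [Finset.mem_sdiff] at hb ⊢
  exact ⟨hb.1, fun c => hb.2 (h c)⟩

lemma loF_eq_lam (hext : ∀ p : P, IsExtremalElt p → p ∈ Pstar)
    (hL : Admissible Pstar lam L) {a : P} (ha : a ∈ Pstar) :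
    loF Pstar lam L a = lam a := by
  rw [loF_eq hext]
  refine le_antisymm (Finset.sup'_le _ _ fun b hb => ?_)
    (Finset.le_sup' lam (Finset.mem_inter.mpr ⟨ha, mem_gapJ L a⟩))
  rw [Finset.mem_inter] at hb
  exact lam_le hL hb.1 ha a (mem_gapJ_subset (gapJ_mem L a) hb.2) (Finset.Subset.refl _)

lemma hiF_eq_lam (hext : ∀ p : P, IsExtremalElt p → p ∈ Pstar)
    (hL : Admissible Pstar lam L) {a : P} (ha : a ∈ Pstar) :
    hiF Pstar lam L a = lam a := by
  rw [hiF_eq hext]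
  refine le_antisymm (Finset.inf'_le lam (Finset.mem_sdiff.mpr ⟨ha, not_mem_gapI L a⟩))
    (Finset.le_inf' _ _ fun b hb => ?_)
  rw [Finset.mem_sdiff] at hb
  exact lam_le hL ha hb.1 a (Finset.Subset.refl _) (not_mem_gapI_subset (gapI_mem L a) hb.2)

lemma loF_le_hiF (hext : ∀ p : P, IsExtremalElt p → p ∈ Pstar)
    (hL : Admissible Pstar lam L) (p : P) :
    loF Pstar lam L p ≤ hiF Pstar lam L p := by
  rw [loF_eq hext, hiF_eq hext]
  obtain ⟨a, haa, hae⟩ := Finset.exists_mem_eq_sup' (lo_nonempty hext p) lam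
  obtain ⟨b, hbb, hbe⟩ := Finset.exists_mem_eq_inf' (hi_nonempty hext p) lam
  rw [hae, hbe]
  rw [Finset.mem_inter] at haa
  rw [Finset.mem_sdiff] at hbb
  exact lam_le hL haa.1 hbb.1 p (mem_gapJ_subset (gapJ_mem L p) haa.2)
    (not_mem_gapI_subset (gapI_mem L p) hbb.2)

lemma loF_le_hiF_of (hext : ∀ p : P, IsExtremalElt p → p ∈ Pstar)
    (hL : Admissible Pstar lam L) {p q : P} (h : gapJ L p ⊆ gapI L q) :
    loF Pstar lam L p ≤ hiF Pstar lam L q := by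
  rw [loF_eq hext, hiF_eq hext]
  obtain ⟨a, haa, hae⟩ := Finset.exists_mem_eq_sup' (lo_nonempty hext p) lam
  obtain ⟨b, hbb, hbe⟩ := Finset.exists_mem_eq_inf' (hi_nonempty hext q) lam
  rw [hae, hbe]
  rw [Finset.mem_inter] at haa
  rw [Finset.mem_sdiff] at hbb
  refine (lam_lt hL haa.1 hbb.1 ?_).le
  exact (mem_gapJ_subset (gapJ_mem L p) haa.2).trans
    (h.trans (not_mem_gapI_subset (gapI_mem L q) hbb.2))

lemma loF_lt_hiF (hext : ∀ p : P, IsExtremalElt p → p ∈ Pstar)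
    (hL : Admissible Pstar lam L) {p : P}
    (hunm : (gapJ L p \ gapI L p) ∩ Pstar = ∅) :
    loF Pstar lam L p < hiF Pstar lam L p := by
  rw [loF_eq hext, hiF_eq hext]
  obtain ⟨a, haa, hae⟩ := Finset.exists_mem_eq_sup' (lo_nonempty hext p) lam
  obtain ⟨b, hbb, hbe⟩ := Finset.exists_mem_eq_inf' (hi_nonempty hext p) lam
  rw [hae, hbe]
  rw [Finset.mem_inter] at haa
  rw [Finset.mem_sdiff] at hbb
  have haI : a ∈ gapI L p := by
    by_contra hc
    exact absurd hunm (Finset.nonempty_iff_ne_empty.mp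
      ⟨a, Finset.mem_inter.mpr ⟨Finset.mem_sdiff.mpr ⟨haa.2, hc⟩, haa.1⟩⟩)
  have hbJ : b ∉ gapJ L p := by
    intro hc
    exact absurd hunm (Finset.nonempty_iff_ne_empty.mp
      ⟨b, Finset.mem_inter.mpr ⟨Finset.mem_sdiff.mpr ⟨hc, hbb.2⟩, hbb.1⟩⟩)
  refine lam_lt hL haa.1 hbb.1 ?_
  exact (mem_gapJ_subset (gapI_mem L p) haI).trans
    (((gap_consec L p).2.2.1.subset).trans (not_mem_gapI_subset (gapJ_mem L p) hbJ))

lemma wF_mem (hext : ∀ p : P, IsExtremalElt p → p ∈ Pstar)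
    (hL : Admissible Pstar lam L) {K : Finset P} (hK : K ∈ L.ideals) :
    wF Pstar lam L K ∈ FL Pstar lam L := by
  refine ⟨?_, ?_, ?_⟩
  · intro a ha
    unfold wF
    split
    · exact loF_eq_lam hext hL ha
    · exact hiF_eq_lam hext hL ha
  · intro I J hIJ p hp q hq
    rw [Finset.mem_sdiff] at hp hq
    obtain ⟨hpI, hpJ⟩ := gap_eq hIJ hp.1 hp.2
    obtain ⟨hqI, hqJ⟩ := gap_eq hIJ hq.1 hq.2
    have hcase : J ⊆ K ∨ K ⊆ I := by
      rcases L.chain J hIJ.2.1 K hK with h | h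
      · exact Or.inl h
      · rcases L.chain K hK I hIJ.1 with h2 | h2
        · exact Or.inr h2
        · by_cases he1 : K = J
          · exact Or.inl (he1 ▸ Finset.Subset.refl _)
          · by_cases he2 : I = K
            · exact Or.inr (he2 ▸ Finset.Subset.refl _)
            · exact absurd ⟨Finset.ssubset_iff_subset_ne.mpr ⟨h2, he2⟩,
                Finset.ssubset_iff_subset_ne.mpr ⟨h, he1⟩⟩ (fun c => hIJ.2.2.2 K hK c)
    unfold wF
    rcases hcase with h | h
    · rw [if_pos (h hp.1), if_pos (h hq.1)]
      exact loF_congr (hpJ.trans hqJ.symm)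
    · rw [if_neg (fun c => hp.2 (h c)), if_neg (fun c => hq.2 (h c))]
      exact hiF_congr (hpI.trans hqI.symm)
  · intro I J I' J' hIJ hI'J' hsub p hp q hq
    rw [Finset.mem_sdiff] at hp hq
    obtain ⟨hpI, hpJ⟩ := gap_eq hIJ hp.1 hp.2
    obtain ⟨hqI, hqJ⟩ := gap_eq hI'J' hq.1 hq.2
    unfold wF
    by_cases hpK : p ∈ K <;> by_cases hqK : q ∈ K
    · rw [if_pos hpK, if_pos hqK]
      refine loF_le_of hext ?_
      rw [hpJ, hqJ]
      exact hsub.trans hI'J'.2.2.1.subset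
    · rw [if_pos hpK, if_neg hqK]
      refine loF_le_hiF_of hext hL ?_
      rw [hpJ, hqI]
      exact hsub
    · exfalso
      have h1 : K ⊆ I := hpI ▸ not_mem_gapI_subset hK hpK
      have h2 : J' ⊆ K := hqJ ▸ mem_gapJ_subset hK hqK
      have : J' ⊂ J' :=
        lt_of_le_of_lt ((h2.trans h1).trans hIJ.2.2.1.subset)
          (lt_of_le_of_lt hsub hI'J'.2.2.1)
      exact this.ne rfl
    · rw [if_neg hpK, if_neg hqK]
      refine hiF_le_of hext ?_
      rw [hpI, hqI]
      exact hIJ.2.2.1.subset.trans hsub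

end LoHi

/-- The dimension of the polytope `F_L` equals the dimension of the λ-admissible
chain `L`. -/
theorem dim_FL_eq_chainDim (Pstar : Finset P) (lam : P → ℝ)
    (hext : ∀ p : P, IsExtremalElt p → p ∈ Pstar) (hlam : LamMono Pstar lam)
    (L : IdealChain P) (hL : Admissible Pstar lam L) :
    Module.finrank ℝ ↥(vectorSpan ℝ (FL Pstar lam L)) = chainDim Pstar L := by
  classical
  set G := (L.ideals ×ˢ L.ideals).filter
    (fun IJ => Consec L IJ.1 IJ.2 ∧ (IJ.2 \ IJ.1) ∩ Pstar = ∅) with hGdef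
  have hGmem : ∀ g : ↥G, Consec L g.1.1 g.1.2 ∧ (g.1.2 \ g.1.1) ∩ Pstar = ∅ :=
    fun g => (Finset.mem_filter.mp g.2).2
  have hrep : ∀ g : ↥G, ∃ x, x ∈ g.1.2 ∧ x ∉ g.1.1 := by
    intro g
    obtain ⟨x, hx1, hx2⟩ := Finset.exists_of_ssubset (hGmem g).1.2.2.1
    exact ⟨x, hx1, hx2⟩
  choose rep hrep1 hrep2 using hrep
  have hgaprep : ∀ g : ↥G, gapI L (rep g) = g.1.1 ∧ gapJ L (rep g) = g.1.2 :=
    fun g => gap_eq (hGmem g).1 (hrep1 g) (hrep2 g)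
  have hgmem : ∀ p : P, (gapJ L p \ gapI L p) ∩ Pstar = ∅ →
      (gapI L p, gapJ L p) ∈ G := fun p h =>
    Finset.mem_filter.mpr ⟨Finset.mem_product.mpr ⟨gapI_mem L p, gapJ_mem L p⟩,
      gap_consec L p, h⟩
  -- every element of the vector span vanishes on marked gaps and is constant on gaps
  have hspan : ∀ v ∈ vectorSpan ℝ (FL Pstar lam L),
      (∀ p a, a ∈ (gapJ L p \ gapI L p) ∩ Pstar → v p = 0) ∧
      (∀ p q, gapI L p = gapI L q → gapJ L p = gapJ L q → v p = v q) := by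
    intro v hv
    change v ∈ Submodule.span ℝ (FL Pstar lam L -ᵥ FL Pstar lam L) at hv
    induction hv using Submodule.span_induction with
    | mem x hx =>
      obtain ⟨y, hy, z, hz, rfl⟩ := Set.mem_vsub.mp hx
      have hyz : ∀ w : P → ℝ, w ∈ FL Pstar lam L → ∀ p q : P,
          gapI L p = gapI L q → gapJ L p = gapJ L q → w p = w q := by
        intro w hw p q h1 h2
        exact hw.2.1 _ _ (gap_consec L p) p
          (Finset.mem_sdiff.mpr ⟨mem_gapJ L p, not_mem_gapI L p⟩) q
          (Finset.mem_sdiff.mpr ⟨h2 ▸ mem_gapJ L q, h1 ▸ not_mem_gapI L q⟩)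
      constructor
      · intro p a ha
        rw [Finset.mem_inter, Finset.mem_sdiff] at ha
        have hy1 : y p = y a := hy.2.1 _ _ (gap_consec L p) p
          (Finset.mem_sdiff.mpr ⟨mem_gapJ L p, not_mem_gapI L p⟩) a
          (Finset.mem_sdiff.mpr ha.1)
        have hz1 : z p = z a := hz.2.1 _ _ (gap_consec L p) p
          (Finset.mem_sdiff.mpr ⟨mem_gapJ L p, not_mem_gapI L p⟩) a
          (Finset.mem_sdiff.mpr ha.1)
        show (y - z) p = 0
        rw [Pi.sub_apply, hy1, hz1, hy.1 a ha.2, hz.1 a ha.2, sub_self]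
      · intro p q h1 h2
        show (y - z) p = (y - z) q
        rw [Pi.sub_apply, Pi.sub_apply, hyz y hy p q h1 h2, hyz z hz p q h1 h2]
    | zero => exact ⟨fun _ _ _ => rfl, fun _ _ _ _ => rfl⟩
    | add x y hx hy ihx ihy =>
      refine ⟨fun p a ha => ?_, fun p q h1 h2 => ?_⟩
      · show x p + y p = 0
        rw [ihx.1 p a ha, ihy.1 p a ha, add_zero]
      · show x p + y p = x q + y q
        rw [ihx.2 p q h1 h2, ihy.2 p q h1 h2]
    | smul c x hx ihx =>
      refine ⟨fun p a ha => ?_, fun p q h1 h2 => ?_⟩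
      · show c * x p = 0
        rw [ihx.1 p a ha, mul_zero]
      · show c * x p = c * x q
        rw [ihx.2 p q h1 h2]
  -- the comparison of coordinates linear map
  set Φ : (P → ℝ) →ₗ[ℝ] (↥G → ℝ) := LinearMap.funLeft ℝ ℝ rep with hΦdef
  set d : ↥G → (P → ℝ) :=
    fun g => wF Pstar lam L g.1.1 - wF Pstar lam L g.1.2 with hddef
  have hdspan : ∀ g : ↥G, d g ∈ vectorSpan ℝ (FL Pstar lam L) := by
    intro g
    refine Submodule.subset_span (Set.mem_vsub.mpr
      ⟨wF Pstar lam L g.1.1, wF_mem hext hL (hGmem g).1.1,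
       wF Pstar lam L g.1.2, wF_mem hext hL (hGmem g).1.2.1, rfl⟩)
  have hdval : ∀ g : ↥G, ∀ p : P,
      d g p = if p ∈ g.1.2 ∧ p ∉ g.1.1 then
        hiF Pstar lam L p - loF Pstar lam L p else 0 := by
    intro g p
    have hIJ : g.1.1 ⊆ g.1.2 := (hGmem g).1.2.2.1.subset
    simp only [hddef, Pi.sub_apply, wF]
    by_cases h1 : p ∈ g.1.1
    · rw [if_pos h1, if_pos (hIJ h1), if_neg (by simp [h1]), sub_self]
    · by_cases h2 : p ∈ g.1.2
      · rw [if_neg h1, if_pos h2, if_pos ⟨h2, h1⟩]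
      · rw [if_neg h1, if_neg h2, if_neg (by simp [h2]), sub_self]
  have hdrep : ∀ g : ↥G, 0 < d g (rep g) := by
    intro g
    rw [hdval g (rep g), if_pos ⟨hrep1 g, hrep2 g⟩]
    have hlt := loF_lt_hiF (lam := lam) hext hL (p := rep g)
      (by rw [(hgaprep g).1, (hgaprep g).2]; exact (hGmem g).2)
    linarith
  have hdother : ∀ g g' : ↥G, g ≠ g' → d g (rep g') = 0 := by
    intro g g' hne
    rw [hdval, if_neg]
    rintro ⟨h1, h2⟩
    obtain ⟨e1, e2⟩ := gap_eq (hGmem g).1 h1 h2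
    refine hne (Subtype.ext (Prod.ext ?_ ?_))
    · rw [← e1, (hgaprep g').1]
    · rw [← e2, (hgaprep g').2]
  set Ψ := Φ.comp (vectorSpan ℝ (FL Pstar lam L)).subtype with hΨdef
  have hΨapp : ∀ (v : ↥(vectorSpan ℝ (FL Pstar lam L))) (g : ↥G),
      Ψ v g = (v : P → ℝ) (rep g) := fun v g => rfl
  have hinj : Function.Injective Ψ := by
    rw [injective_iff_map_eq_zero]
    intro v hv0
    apply Subtype.ext
    funext p
    obtain ⟨hzero, hconst⟩ := hspan v.1 v.2
    by_cases hm : (gapJ L p \ gapI L p) ∩ Pstar = ∅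
    · have hg : (gapI L p, gapJ L p) ∈ G := hgmem p hm
      have hpr : v.1 p = v.1 (rep ⟨_, hg⟩) :=
        hconst p (rep ⟨_, hg⟩) (hgaprep ⟨_, hg⟩).1.symm (hgaprep ⟨_, hg⟩).2.symm
      have := congrFun hv0 ⟨_, hg⟩
      rw [hΨapp] at this
      rw [hpr, this]
      rfl
    · obtain ⟨a, ha⟩ := Finset.nonempty_iff_ne_empty.mpr hm
      exact hzero p a ha
  have hsurj : Function.Surjective Ψ := by
    intro u
    have hv : (∑ g : ↥G, (u g / d g (rep g)) • d g) ∈ vectorSpan ℝ (FL Pstar lam L) :=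
      Submodule.sum_mem _ fun g _ => Submodule.smul_mem _ _ (hdspan g)
    refine ⟨⟨_, hv⟩, ?_⟩
    funext g'
    rw [hΨapp]
    show (∑ g : ↥G, (u g / d g (rep g)) • d g) (rep g') = u g'
    rw [Finset.sum_apply]
    rw [Finset.sum_eq_single g']
    · rw [Pi.smul_apply, smul_eq_mul]
      exact div_mul_cancel₀ _ (hdrep g').ne'
    · intro g _ hne
      rw [Pi.smul_apply, smul_eq_mul, hdother g g' hne, mul_zero]
    · intro h
      exact absurd (Finset.mem_univ g') h
  have hfin : Module.finrank ℝ ↥(vectorSpan ℝ (FL Pstar lam L)) =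
      Module.finrank ℝ (↥G → ℝ) :=
    LinearEquiv.finrank_eq (LinearEquiv.ofBijective Ψ ⟨hinj, hsurj⟩)
  rw [hfin, Module.finrank_fintype_fun_eq_card, Fintype.card_coe]
  simp [chainDim, hGdef]
end
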